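/- arXiv:2012.13800 — 6 statements merged into one kernel-verified Lean document; each statement's English description precedes it below -/
import Mathlib

section
/- Let X be an infinite topological space and let τ be an ordinal whose cofinality is strictly greater than the density d(X) of X. Then for every continuous real-valued function f on the product space X × [0,τ) (or on X × [0,τ]), there exists an ordinal λ < τ such that for every x ∈ X the function f is constant on the set {x} × [λ, τ). -/
open Cardinal Set

universe u

/-- `Cp X` : the space of continuous real-valued functions on `X` with the topology of
pointwise convergence (subspace topology inherited from the product `ℝ^X`). -/
abbrev Cp (X : Type*) [TopologicalSpace X] := {f : X → ℝ // Continuous f}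

/-!
Since `cf τ > ℵ₀`, every countable subset of `[0, τ)` has its supremum below `τ`. Hence if a
continuous `g : [0, τ) → ℝ` oscillated by more than `ε` on every tail, an increasing
`ω`-sequence of witnessing pairs would converge to a single point `β < τ`, contradicting
continuity at `β`; intersecting the tails for `ε = 1/(n+1)` shows that `g` is eventually
constant. For `f` on `X × [0, τ)`, take the supremum of these tails over a dense set `D`:
it is below `τ` because `|D| < cf τ`, and the fibres over the closure of `D` inherit the
constancy because `{x | f (x, a) = f (x, b)}` is closed.
-/

open Filter Topology

namespace Ordinal

variable {τ : Ordinal.{u}}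

lemma iSup_nat_lt_of_aleph0_lt_cof (hτ : ℵ₀ < τ.cof) {f : ℕ → Ordinal.{u}}
    (hf : ∀ n, f n < τ) : ⨆ n, f n < τ :=
  lift_iSup_lt_of_lt_cof (by simpa using hτ) hf

lemma exists_seq_tendsto_of_forall_le (hτ : ℵ₀ < τ.cof) (A B : Iio τ → Iio τ)
    (hA : ∀ y, y ≤ A y) (hB : ∀ y, y ≤ B y) :
    ∃ (c : ℕ → Iio τ) (β : Iio τ),
      Tendsto (A ∘ c) atTop (𝓝 β) ∧ Tendsto (B ∘ c) atTop (𝓝 β) := by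
  have hlim : Order.IsSuccLimit τ := one_lt_cof_iff.1 (one_lt_aleph0.trans hτ)
  let next : Iio τ → Iio τ := fun y =>
    ⟨Order.succ ((A y).1 ⊔ (B y).1), hlim.succ_lt (max_lt (A y).2 (B y).2)⟩
  let c : ℕ → Iio τ := fun n => next^[n] ⟨0, hlim.pos⟩
  have hA_lt : ∀ n, (A (c n)).1 < (c (n + 1)).1 := fun n => by
    simpa only [c, Function.iterate_succ_apply'] using
      (le_max_left _ _).trans_lt (Order.lt_succ _)
  have hB_lt : ∀ n, (B (c n)).1 < (c (n + 1)).1 := fun n => by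
    simpa only [c, Function.iterate_succ_apply'] using
      (le_max_right _ _).trans_lt (Order.lt_succ _)
  have hmono : Monotone fun n => (c n).1 :=
    monotone_nat_of_le_succ fun n => (Subtype.coe_le_coe.2 (hA (c n))).trans (hA_lt n).le
  let β : Iio τ := ⟨⨆ n, (c n).1, iSup_nat_lt_of_aleph0_lt_cof hτ fun n => (c n).2⟩
  have hc : Tendsto (fun n => (c n).1) atTop (𝓝 β.1) :=
    tendsto_atTop_ciSup hmono bddAbove_of_small
  have hc_succ : Tendsto (fun n => (c (n + 1)).1) atTop (𝓝 β.1) :=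
    hc.comp (tendsto_add_atTop_nat 1)
  refine ⟨c, β, ?_, ?_⟩ <;> rw [tendsto_subtype_rng]
  · exact tendsto_of_tendsto_of_tendsto_of_le_of_le hc hc_succ (fun n => hA _)
      fun n => (hA_lt n).le
  · exact tendsto_of_tendsto_of_tendsto_of_le_of_le hc hc_succ (fun n => hB _)
      fun n => (hB_lt n).le

lemma exists_dist_le_of_continuous {α : Type*} [PseudoMetricSpace α] (hτ : ℵ₀ < τ.cof)
    {g : Iio τ → α} (hg : Continuous g) {ε : ℝ} (hε : 0 < ε) :
    ∃ lam < τ, ∀ a b : Iio τ, lam ≤ a.1 → lam ≤ b.1 → dist (g a) (g b) ≤ ε := by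
  by_contra! hbad
  choose A B hA hB hAB using fun y : Iio τ => hbad y.1 y.2
  obtain ⟨c, β, hAc, hBc⟩ := exists_seq_tendsto_of_forall_le hτ A B hA hB
  have hdist : Tendsto (fun n => dist (g (A (c n))) (g (B (c n)))) atTop (𝓝 0) := by
    simpa using ((hg.tendsto β).comp hAc).dist ((hg.tendsto β).comp hBc)
  obtain ⟨n, hn⟩ := (hdist.eventually (eventually_lt_nhds hε)).exists
  exact (hAB (c n)).not_gt hn

lemma exists_eq_of_continuous {α : Type*} [MetricSpace α] (hτ : ℵ₀ < τ.cof)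
    {g : Iio τ → α} (hg : Continuous g) :
    ∃ lam < τ, ∀ a b : Iio τ, lam ≤ a.1 → lam ≤ b.1 → g a = g b := by
  choose lam hlam hdist using fun n : ℕ =>
    exists_dist_le_of_continuous hτ hg (Nat.one_div_pos_of_nat (n := n))
  refine ⟨⨆ n, lam n, iSup_nat_lt_of_aleph0_lt_cof hτ hlam, fun a b ha hb => ?_⟩
  refine eq_of_forall_dist_le fun ε hε => ?_
  obtain ⟨n, hn⟩ := exists_nat_one_div_lt hε
  have hle : lam n ≤ ⨆ m, lam m := Ordinal.le_iSup lam n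
  exact (hdist n a b (hle.trans ha) (hle.trans hb)).trans hn.le

lemma exists_eq_of_continuous_prod {X : Type u} {α : Type*} [TopologicalSpace X] [MetricSpace α]
    {D : Set X} (hD : Dense D) (hDτ : #D < τ.cof) (hτ : ℵ₀ < τ.cof)
    {f : X × Iio τ → α} (hf : Continuous f) :
    ∃ lam < τ, ∀ (x : X) (a b : Iio τ), lam ≤ a.1 → lam ≤ b.1 → f (x, a) = f (x, b) := by
  choose lam hlam hconst using fun d : D =>
    exists_eq_of_continuous hτ (g := fun a => f (d.1, a)) (by fun_prop)
  refine ⟨⨆ d, lam d, iSup_lt_of_lt_cof hDτ hlam, fun x a b ha hb => ?_⟩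
  have hclosed : IsClosed {x : X | f (x, a) = f (x, b)} := isClosed_eq (by fun_prop) (by fun_prop)
  have hD_sub : D ⊆ {x : X | f (x, a) = f (x, b)} := fun d hd =>
    have hle : lam ⟨d, hd⟩ ≤ ⨆ e, lam e := Ordinal.le_iSup lam ⟨d, hd⟩
    hconst ⟨d, hd⟩ a b (hle.trans ha) (hle.trans hb)
  exact hclosed.closure_subset_iff.2 hD_sub (hD.closure_eq ▸ mem_univ x)

end Ordinal

theorem statement0_general {X : Type u} [TopologicalSpace X] (τ : Ordinal.{u})
    (hden : ∃ D : Set X, Dense D ∧ max (#D) ℵ₀ < Ordinal.cof τ) :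
    (∀ f : X × (Set.Iio τ) → ℝ, Continuous f →
      ∃ lam < τ, ∀ (x : X) (a b : Set.Iio τ), lam ≤ a.1 → lam ≤ b.1 →
        f (x, a) = f (x, b)) ∧
    (∀ f : X × (Set.Iic τ) → ℝ, Continuous f →
      ∃ lam < τ, ∀ (x : X) (a b : Set.Iic τ), lam ≤ a.1 → a.1 < τ → lam ≤ b.1 → b.1 < τ →
        f (x, a) = f (x, b)) := by
  obtain ⟨D, hD, hDτ⟩ := hden
  have hIio : ∀ f : X × Iio τ → ℝ, Continuous f →
      ∃ lam < τ, ∀ (x : X) (a b : Iio τ), lam ≤ a.1 → lam ≤ b.1 → f (x, a) = f (x, b) :=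
    fun f hf => Ordinal.exists_eq_of_continuous_prod hD
      ((le_max_left _ _).trans_lt hDτ) ((le_max_right _ _).trans_lt hDτ) hf
  refine ⟨hIio, fun f hf => ?_⟩
  obtain ⟨lam, hlam, hconst⟩ :=
    hIio (fun p => f (p.1, inclusion Iio_subset_Iic_self p.2)) (by fun_prop)
  exact ⟨lam, hlam, fun x a b ha haτ hb hbτ => hconst x ⟨a, haτ⟩ ⟨b, hbτ⟩ ha hb⟩

/-- If `X` is an infinite space and `τ` is an ordinal whose cofinality is
strictly greater than the density of `X` (i.e. there is a dense set `D` with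
`max |D| ℵ₀ < cf τ`), then every continuous real-valued function on `X × [0,τ)`
(or on `X × [0,τ]`) is eventually constant on each vertical fiber: there is `λ < τ`
such that for every `x ∈ X`, `f` is constant on `{x} × [λ, τ)`. -/
theorem statement0 {X : Type u} [TopologicalSpace X] [Infinite X] (τ : Ordinal.{u})
    (hden : ∃ D : Set X, Dense D ∧ max (#D) ℵ₀ < Ordinal.cof τ) :
    (∀ f : X × (Set.Iio τ) → ℝ, Continuous f →
      ∃ lam < τ, ∀ (x : X) (a b : Set.Iio τ), lam ≤ a.1 → lam ≤ b.1 →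
        f (x, a) = f (x, b)) ∧
    (∀ f : X × (Set.Iic τ) → ℝ, Continuous f →
      ∃ lam < τ, ∀ (x : X) (a b : Set.Iic τ), lam ≤ a.1 → a.1 < τ → lam ≤ b.1 → b.1 < τ →
        f (x, a) = f (x, b)) :=
  statement0_general τ hden
end

section
/- Let τ be a regular uncountable cardinal and let X and Y be Tychonoff spaces each admitting a network of cardinality less than τ. If C_p(X × [0,τ)) is homeomorphic to C_p(Y × [0,τ)), then there exists a non-zero ordinal λ < τ such that C_p(X × [0,λ)) is homeomorphic to C_p(Y × [0,λ)). -/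
open Cardinal Set

universe u

/-- A network for a space: a family of (not necessarily open) sets such that every open
neighbourhood of every point contains a member of the family containing that point. -/
def IsNetwork {X : Type*} [TopologicalSpace X] (N : Set (Set X)) : Prop :=
  ∀ x : X, ∀ U : Set X, IsOpen U → x ∈ U → ∃ s ∈ N, x ∈ s ∧ s ⊆ U

namespace CpAux

noncomputable section

lemma continuous_eval {W : Type*} [TopologicalSpace W] (z : W) :
    Continuous fun f : Cp W => f.1 z :=
  (continuous_apply z).comp continuous_subtype_val

lemma continuous_compCp {W V : Type*} [TopologicalSpace W] [TopologicalSpace V]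
    (g : V → W) (hg : Continuous g) :
    Continuous (fun f : Cp W => (⟨f.1 ∘ g, f.2.comp hg⟩ : Cp V)) :=
  Continuous.subtype_mk (continuous_pi fun v => continuous_eval (g v)) _

/-- The truncation-by-`ν` map on `Iio T`. -/
def inI {T : Ordinal.{u}} (ν : Ordinal.{u}) (β : ↥(Set.Iio T)) : ↥(Set.Iio T) :=
  ⟨min β.1 ν, Set.mem_Iio.2 (lt_of_le_of_lt (min_le_left _ _) (Set.mem_Iio.1 β.2))⟩

def Fix (Z : Type u) [TopologicalSpace Z] (T ν : Ordinal.{u}) :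
    Set (Cp (Z × ↥(Set.Iio T))) :=
  {f | ∀ z β, f.1 (z, β) = f.1 (z, inI ν β)}

variable {Z : Type u} [TopologicalSpace Z] {T : Ordinal.{u}}

lemma isClosed_Fix (ν : Ordinal.{u}) : IsClosed (Fix Z T ν) := by
  have : Fix Z T ν = ⋂ (z : Z), ⋂ (β : ↥(Set.Iio T)),
      {f : Cp (Z × ↥(Set.Iio T)) | f.1 (z, β) = f.1 (z, inI ν β)} := by
    ext f; simp [Fix]
  rw [this]
  exact isClosed_iInter fun z => isClosed_iInter fun β =>
    isClosed_eq (continuous_eval _) (continuous_eval _)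

lemma Fix_mono {ν ν' : Ordinal.{u}} (hh : ν ≤ ν') : Fix Z T ν ⊆ Fix Z T ν' := by
  intro f hf z β
  have h1 := hf z β
  have h2 := hf z (inI ν' β)
  have he : inI ν (inI ν' β) = inI ν β := by
    apply Subtype.ext
    show min (min β.1 ν') ν = min β.1 ν
    rw [min_assoc, min_eq_right hh]

  rw [he] at h2
  rw [h1, ← h2]


lemma continuous_inI (ν : Ordinal.{u}) : Continuous (inI ν : ↥(Set.Iio T) → ↥(Set.Iio T)) :=
  Continuous.subtype_mk (continuous_subtype_val.min continuous_const) _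

/-- Truncation operator on `Cp (Z × Iio T)`. -/
def projFix (ν : Ordinal.{u}) (f : Cp (Z × ↥(Set.Iio T))) : Cp (Z × ↥(Set.Iio T)) :=
  ⟨fun p => f.1 (p.1, inI ν p.2),
    f.2.comp (continuous_fst.prodMk ((continuous_inI ν).comp continuous_snd))⟩

lemma projFix_mem (ν : Ordinal.{u}) (f : Cp (Z × ↥(Set.Iio T))) :
    projFix ν f ∈ Fix Z T ν := by
  intro z β
  show f.1 (z, inI ν β) = f.1 (z, inI ν (inI ν β))
  refine congrArg f.1 (congrArg (Prod.mk z) (Subtype.ext ?_))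
  show min β.1 ν = min (min β.1 ν) ν
  rw [min_assoc, min_self]

lemma lt_succ_ord (ν : Ordinal.{u}) : ν < ν + 1 := by
  rw [Ordinal.add_one_eq_succ]; exact Order.lt_succ ν

lemma le_of_mem_succ {ν : Ordinal.{u}} (β : ↥(Set.Iio (ν + 1))) : β.1 ≤ ν := by
  have h2 : β.1 < Order.succ ν := by
    rw [← Ordinal.add_one_eq_succ]; exact Set.mem_Iio.1 β.2
  exact Order.lt_succ_iff.1 h2

/-- Truncation map `Z × Iio T → Z × Iio (ν+1)`. -/
def pmap (ν : Ordinal.{u}) (p : Z × ↥(Set.Iio T)) : Z × ↥(Set.Iio (ν + 1)) :=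
  (p.1, ⟨min p.2.1 ν, Set.mem_Iio.2 (lt_of_le_of_lt (min_le_right _ _) (lt_succ_ord ν))⟩)

lemma continuous_pmap (ν : Ordinal.{u}) : Continuous (pmap ν : Z × ↥(Set.Iio T) → _) :=
  continuous_fst.prodMk
    (Continuous.subtype_mk ((continuous_subtype_val.comp continuous_snd).min continuous_const) _)

/-- Inclusion map `Z × Iio (ν+1) → Z × Iio T` (for `ν < T`). -/
def jmap (hν : ν < T) (p : Z × ↥(Set.Iio (ν + 1))) : Z × ↥(Set.Iio T) :=
  (p.1, ⟨p.2.1, Set.mem_Iio.2 (lt_of_le_of_lt (le_of_mem_succ p.2) hν)⟩)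

lemma continuous_jmap (hν : ν < T) : Continuous (jmap hν : Z × ↥(Set.Iio (ν + 1)) → _) :=
  continuous_fst.prodMk
    (Continuous.subtype_mk (continuous_subtype_val.comp continuous_snd) _)

/-- `Fix Z T ν` is canonically homeomorphic to `Cp (Z × Iio (ν+1))`. -/
def homeoFix (hν : ν < T) : Cp (Z × ↥(Set.Iio (ν + 1))) ≃ₜ ↥(Fix Z T ν) where
  toFun g := ⟨⟨g.1 ∘ pmap ν, g.2.comp (continuous_pmap ν)⟩, by
    intro z β
    show g.1 (pmap ν (z, β)) = g.1 (pmap ν (z, inI ν β))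
    refine congrArg g.1 (congrArg (Prod.mk z) (Subtype.ext ?_))
    show min β.1 ν = min (min β.1 ν) ν
    rw [min_assoc, min_self]⟩
  invFun F := ⟨F.1.1 ∘ jmap hν, F.1.2.comp (continuous_jmap hν)⟩
  left_inv g := by
    apply Subtype.ext
    funext p
    show g.1 (pmap ν (jmap hν p)) = g.1 p
    refine congrArg g.1 (Prod.ext rfl (Subtype.ext ?_))
    show min p.2.1 ν = p.2.1
    exact min_eq_left (le_of_mem_succ p.2)
  right_inv F := by
    apply Subtype.ext
    apply Subtype.ext
    funext p
    show F.1.1 (jmap hν (pmap ν p)) = F.1.1 p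
    have h1 := (F.2 p.1 p.2).symm
    have h2 : jmap hν (pmap ν p) = (p.1, inI ν p.2) := rfl
    rw [h2]
    have h3 : (p.1, p.2) = p := rfl
    rw [← h3]
    exact h1
  continuous_toFun := by
    apply Continuous.subtype_mk
    exact Continuous.subtype_mk (continuous_pi fun p => continuous_eval (pmap ν p)) _
  continuous_invFun := by
    apply Continuous.subtype_mk
    exact continuous_pi fun p =>
      ((continuous_eval (jmap hν p)).comp continuous_subtype_val)

/-- A strictly increasing ℕ-sequence of ordinals tends to its supremum. -/
lemma tendsto_iSup_nat {g : ℕ → Ordinal.{u}} (hmono : Monotone g) :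
    Filter.Tendsto g Filter.atTop (nhds (⨆ n, g n)) := by
  refine tendsto_order.2 ⟨?_, ?_⟩
  · intro a ha
    obtain ⟨N, hN⟩ := (Ordinal.lt_iSup_iff).1 ha
    exact Filter.eventually_atTop.2 ⟨N, fun n hn => lt_of_lt_of_le hN (hmono hn)⟩
  · intro b hb
    exact Filter.Eventually.of_forall fun n =>
      lt_of_le_of_lt (Ordinal.le_iSup g n) hb

lemma tendsto_subtype_iSup_nat {T : Ordinal.{u}} {g : ℕ → Ordinal.{u}} (hmono : Monotone g)
    (hg : ∀ n, g n < T) (hsup : (⨆ n, g n) < T) :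
    Filter.Tendsto (fun n => (⟨g n, Set.mem_Iio.2 (hg n)⟩ : ↥(Set.Iio T)))
      Filter.atTop (nhds ⟨⨆ n, g n, Set.mem_Iio.2 hsup⟩) := by
  rw [Topology.IsInducing.subtypeVal.tendsto_nhds_iff]
  exact tendsto_iSup_nat hmono

variable {Z : Type u} [TopologicalSpace Z] {T : Ordinal.{u}}

lemma tendsto_projFix {μ : ℕ → Ordinal.{u}} (hmono : ∀ n, μ n < μ (n + 1))
    (hlt : ∀ n, μ n < T) {f : Cp (Z × ↥(Set.Iio T))}
    (hsup : (⨆ n, μ n) < T) (hf : f ∈ Fix Z T (⨆ n, μ n)) :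
    Filter.Tendsto (fun n => projFix (μ n) f) Filter.atTop (nhds f) := by
  have hmon : Monotone μ := (strictMono_nat_of_lt_succ hmono).monotone
  set μs := ⨆ n, μ n with hμs
  rw [Topology.IsEmbedding.subtypeVal.isInducing.tendsto_nhds_iff]
  rw [tendsto_pi_nhds]
  intro p
  obtain ⟨z, β⟩ := p
  show Filter.Tendsto (fun n => f.1 (z, inI (μ n) β)) Filter.atTop (nhds (f.1 (z, β)))
  rcases lt_or_ge β.1 μs with hβ | hβ
  · obtain ⟨N, hN⟩ := (Ordinal.lt_iSup_iff).1 hβ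
    refine Filter.Tendsto.congr' ?_ (tendsto_const_nhds : Filter.Tendsto (fun _ : ℕ => f.1 (z, β)) _ _)
    refine Filter.eventually_atTop.2 ⟨N, fun n hn => ?_⟩
    have : inI (μ n) β = β := by
      apply Subtype.ext
      exact min_eq_left (le_of_lt (lt_of_lt_of_le hN (hmon hn)))
    show f.1 (z, β) = f.1 (z, inI (μ n) β)
    rw [this]
  · have hβs : f.1 (z, β) = f.1 (z, ⟨μs, Set.mem_Iio.2 hsup⟩) := by
      have := hf z β
      rw [this]
      refine congrArg f.1 (congrArg (Prod.mk z) (Subtype.ext ?_))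
      show min β.1 μs = μs
      exact min_eq_right hβ
    rw [hβs]
    have hmin : ∀ n, inI (μ n) β = ⟨μ n, Set.mem_Iio.2 (hlt n)⟩ := fun n => by
      apply Subtype.ext
      exact min_eq_right (le_trans (Ordinal.le_iSup μ n) hβ)
    have hc : Continuous fun γ : ↥(Set.Iio T) => f.1 (z, γ) :=
      f.2.comp (continuous_const.prodMk continuous_id)
    have := (hc.tendsto _).comp (tendsto_subtype_iSup_nat hmon hlt hsup)
    refine this.congr fun n => ?_
    rw [hmin n]
    rfl

/-- A continuous real function on `[0,T)` is eventually constant when `cf(T) > ω`. -/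
lemma eventually_const {T : Ordinal.{u}} (hcof : ℵ₀ < T.cof) (hT : 0 < T)
    (u : Cp (↥(Set.Iio T))) :
    ∃ ν : ↥(Set.Iio T), ∀ β : ↥(Set.Iio T), ν.1 ≤ β.1 → u.1 β = u.1 ν := by
  have haux : ∀ ι : Type, ∀ g : ι → ↥(Set.Iio T), Countable ι → (⨆ i, (g i).1) < T := by
    intro ι g hι
    refine Ordinal.iSup_lt_ord_lift ?_ fun i => Set.mem_Iio.1 (g i).2
    calc Cardinal.lift.{u} #ι ≤ Cardinal.lift.{u} ℵ₀ := Cardinal.lift_le.2 Cardinal.mk_le_aleph0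
    _ = ℵ₀ := Cardinal.lift_aleph0
    _ < T.cof := hcof
  -- Step 1 : approximate stabilization
  have step1 : ∀ ε : ℝ, 0 < ε → ∃ ν : ↥(Set.Iio T), ∀ β : ↥(Set.Iio T),
      ν.1 ≤ β.1 → |u.1 β - u.1 ν| ≤ ε := by
    intro ε hε
    by_contra hcon
    push_neg at hcon
    choose F hF1 hF2 using hcon
    set b : ℕ → ↥(Set.Iio T) := fun n => F^[n] ⟨0, Set.mem_Iio.2 hT⟩ with hb
    have hbsucc : ∀ n, b (n + 1) = F (b n) := fun n => Function.iterate_succ_apply' F n _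
    have hble : ∀ n, (b n).1 ≤ (b (n + 1)).1 := fun n => by rw [hbsucc n]; exact hF1 (b n)
    have hbne : ∀ n, ε < |u.1 (b (n + 1)) - u.1 (b n)| := fun n => by
      rw [hbsucc n]; exact hF2 (b n)
    have hmono : Monotone fun n => (b n).1 := monotone_nat_of_le_succ hble
    have hsup : (⨆ n, (b n).1) < T := haux ℕ b inferInstance
    have htt := tendsto_subtype_iSup_nat hmono (fun n => Set.mem_Iio.1 (b n).2) hsup
    have htt2 : Filter.Tendsto (fun n => u.1 (b n)) Filter.atTop
        (nhds (u.1 ⟨⨆ n, (b n).1, Set.mem_Iio.2 hsup⟩)) := by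
      have : Filter.Tendsto b Filter.atTop (nhds ⟨⨆ n, (b n).1, Set.mem_Iio.2 hsup⟩) := by
        refine htt.congr fun n => ?_
        exact Subtype.ext rfl
      exact ((u.2.tendsto _).comp this)
    rw [Metric.tendsto_atTop] at htt2
    obtain ⟨N, hN⟩ := htt2 (ε / 2) (by linarith)
    have h1 := hN N (le_refl N)
    have h2 := hN (N + 1) (Nat.le_succ N)
    have h3 := hbne N
    rw [Real.dist_eq] at h1 h2
    have := abs_sub_le (u.1 (b (N + 1))) (u.1 ⟨⨆ n, (b n).1, Set.mem_Iio.2 hsup⟩) (u.1 (b N))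
    rw [abs_sub_comm (u.1 ⟨⨆ n, (b n).1, Set.mem_Iio.2 hsup⟩) (u.1 (b N))] at this
    linarith
  -- Step 2 : combine over ε = 1/(n+1)
  have hpos : ∀ n : ℕ, (0 : ℝ) < 1 / (n + 1) := fun n => by positivity
  choose φ hφ using fun n : ℕ => step1 (1 / (n + 1)) (hpos n)
  have hsup : (⨆ n, (φ n).1) < T := haux ℕ φ inferInstance
  refine ⟨⟨⨆ n, (φ n).1, Set.mem_Iio.2 hsup⟩, fun β hβ => ?_⟩
  set ν : ↥(Set.Iio T) := ⟨⨆ n, (φ n).1, Set.mem_Iio.2 hsup⟩ with hν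
  have hbound : ∀ n : ℕ, |u.1 β - u.1 ν| ≤ 2 / (n + 1) := by
    intro n
    have hφν : (φ n).1 ≤ ν.1 := Ordinal.le_iSup (fun n => (φ n).1) n
    have h1 := hφ n β (le_trans hφν hβ)
    have h2 := hφ n ν hφν
    have := abs_sub_le (u.1 β) (u.1 (φ n)) (u.1 ν)
    rw [abs_sub_comm (u.1 (φ n)) (u.1 ν)] at this
    have e1 : (2 : ℝ) / (n + 1) = 1 / (n + 1) + 1 / (n + 1) := by ring
    rw [e1]
    linarith
  by_contra hne
  have habs : 0 < |u.1 β - u.1 ν| := by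
    rcases eq_or_ne (u.1 β) (u.1 ν) with he | he
    · exact absurd he hne
    · exact abs_pos.2 (sub_ne_zero.2 he)
  obtain ⟨n, hn⟩ := exists_nat_gt (2 / |u.1 β - u.1 ν|)
  have hn1 : (0:ℝ) < n + 1 := by positivity
  have := hbound n
  have h4 : 2 / ((n:ℝ) + 1) < |u.1 β - u.1 ν| := by
    rw [div_lt_iff₀ hn1]
    have h5 : 2 / |u.1 β - u.1 ν| < n + 1 := lt_of_lt_of_le hn (by linarith)
    calc (2:ℝ) = (2 / |u.1 β - u.1 ν|) * |u.1 β - u.1 ν| := by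
          field_simp
    _ < (n + 1) * |u.1 β - u.1 ν| := by
          exact mul_lt_mul_of_pos_right h5 habs
    _ = |u.1 β - u.1 ν| * (n + 1) := by ring
  linarith

/-- The stabilization lemma: on `Z × [0,τ)` with `nw(Z) < τ` regular uncountable, every
continuous real function stabilizes below `τ`. -/
lemma mem_Fix_total {τ : Cardinal.{u}} (hreg : τ.IsRegular) (hunc : ℵ₀ < τ)
    {Z : Type u} [TopologicalSpace Z] {N : Set (Set Z)} (hN : IsNetwork N) (hNc : #N < τ)
    (f : Cp (Z × ↥(Set.Iio τ.ord))) : ∃ ν, ν < τ.ord ∧ f ∈ Fix Z τ.ord ν := by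
  have hcof : τ.ord.cof = τ := hreg.cof_eq
  have hT : 0 < τ.ord := by
    rw [Cardinal.lt_ord]
    simpa using hreg.pos
  by_contra hcon
  push_neg at hcon
  -- for every α < T we get a witness of non-stabilization above α
  have key : ∀ α : ↥(Set.Iio τ.ord), ∃ (M : ↥N) (q q' : ℚ) (s t : ↥(Set.Iio τ.ord)),
      M.1.Nonempty ∧ α.1 ≤ s.1 ∧ α.1 ≤ t.1 ∧ (q : ℝ) < q' ∧
      (∀ w ∈ M.1, f.1 (w, s) < q) ∧ (∀ w ∈ M.1, (q' : ℝ) < f.1 (w, t)) := by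
    intro α
    have hnfix := hcon α.1 (Set.mem_Iio.1 α.2)
    rw [Fix] at hnfix
    simp only [Set.mem_setOf_eq, not_forall] at hnfix
    obtain ⟨z, β, hne⟩ := hnfix
    have hαβ : α.1 ≤ β.1 := by
      by_contra hlt
      push_neg at hlt
      have hmin : β = inI α.1 β := Subtype.ext (min_eq_left hlt.le).symm
      exact hne (congrArg f.1 (congrArg (Prod.mk z) hmin))
    have hinI : inI α.1 β = α := Subtype.ext (min_eq_right hαβ)
    rw [hinI] at hne
    -- choose orientation
    rcases lt_or_gt_of_ne hne with hlt | hlt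
    · -- f(z,β) < f(z,α) : s := β, t := α
      obtain ⟨q, hq1, hq2⟩ := exists_rat_btwn hlt
      obtain ⟨q', hq'1, hq'2⟩ := exists_rat_btwn hq2
      have hO : IsOpen {w : Z | f.1 (w, β) < (q : ℝ) ∧ (q' : ℝ) < f.1 (w, α)} := by
        refine IsOpen.inter ?_ ?_
        · exact isOpen_lt (f.2.comp (continuous_id.prodMk continuous_const)) continuous_const
        · exact isOpen_lt continuous_const (f.2.comp (continuous_id.prodMk continuous_const))
      obtain ⟨M, hMN, hzM, hMsub⟩ := hN z _ hO ⟨hq1, hq'2⟩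
      exact ⟨⟨M, hMN⟩, q, q', β, α, ⟨z, hzM⟩, hαβ, le_refl _, hq'1, fun w hw => (hMsub hw).1,
        fun w hw => (hMsub hw).2⟩
    · -- f(z,α) < f(z,β) : s := α, t := β
      obtain ⟨q, hq1, hq2⟩ := exists_rat_btwn hlt
      obtain ⟨q', hq'1, hq'2⟩ := exists_rat_btwn hq2
      have hO : IsOpen {w : Z | f.1 (w, α) < (q : ℝ) ∧ (q' : ℝ) < f.1 (w, β)} := by
        refine IsOpen.inter ?_ ?_
        · exact isOpen_lt (f.2.comp (continuous_id.prodMk continuous_const)) continuous_const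
        · exact isOpen_lt continuous_const (f.2.comp (continuous_id.prodMk continuous_const))
      obtain ⟨M, hMN, hzM, hMsub⟩ := hN z _ hO ⟨hq1, hq'2⟩
      exact ⟨⟨M, hMN⟩, q, q', α, β, ⟨z, hzM⟩, le_refl _, hαβ, hq'1, fun w hw => (hMsub hw).1,
        fun w hw => (hMsub hw).2⟩
  choose M q q' s t hMne hs ht hqq h1 h2 using key
  -- some network element is used unboundedly often
  have hub : ∃ k : ↥N, ∀ δ : ↥(Set.Iio τ.ord), ∃ α : ↥(Set.Iio τ.ord), δ.1 ≤ α.1 ∧ M α = k := by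
    by_contra hc
    push_neg at hc
    choose d hd using hc
    have hdlt : ∀ k : ↥N, (d k).1 < τ.ord := fun k => Set.mem_Iio.1 (d k).2
    have hsup : (⨆ k, (d k).1) < τ.ord := by
      refine Ordinal.iSup_lt_ord ?_ hdlt
      rw [hcof]
      exact hNc
    set α₀ : ↥(Set.Iio τ.ord) := ⟨⨆ k, (d k).1, Set.mem_Iio.2 hsup⟩ with hα₀
    exact hd (M α₀) α₀ (Ordinal.le_iSup (fun k => (d k).1) (M α₀)) rfl
  obtain ⟨k, hk⟩ := hub
  -- pick a point of the network element k
  obtain ⟨α₁, _, hα₁⟩ := hk ⟨0, Set.mem_Iio.2 hT⟩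
  -- z_{α₁} ∈ M α₁ = k : get some point of k
  have hkne : k.1.Nonempty := by rw [← hα₁]; exact hMne α₁
  obtain ⟨y, hy⟩ := hkne
  -- apply eventual constancy to the section at y
  have hcsec : Continuous fun γ : ↥(Set.Iio τ.ord) => f.1 (y, γ) :=
    f.2.comp (continuous_const.prodMk continuous_id)
  obtain ⟨ν, hν⟩ := eventually_const (by rw [hcof]; exact hunc) hT ⟨_, hcsec⟩
  obtain ⟨α, hνα, hMα⟩ := hk ν
  have hys : f.1 (y, s α) < (q α : ℝ) := h1 α y (by rw [hMα]; exact hy)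
  have hyt : (q' α : ℝ) < f.1 (y, t α) := h2 α y (by rw [hMα]; exact hy)
  have hes : f.1 (y, s α) = f.1 (y, ν) := hν (s α) (le_trans hνα (hs α))
  have het : f.1 (y, t α) = f.1 (y, ν) := hν (t α) (le_trans hνα (ht α))
  have := hqq α
  rw [hes] at hys
  rw [het] at hyt
  linarith

/-- A space with a network has a dense set of continuous functions of controlled size. -/
lemma exists_dense_small {W : Type v} [TopologicalSpace W] {P : Set (Set W)}
    (hP : IsNetwork P) :
    ∃ D : Set (Cp W), Dense D ∧ #D ≤ max #P ℵ₀ := by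
  classical
  set K := ↥P × ℚ × ℚ with hK
  let Good : Finset K → Cp W → Prop := fun s f =>
    ∀ t ∈ s, ∀ w ∈ (t.1.1 : Set W), |f.1 w - (t.2.1 : ℝ)| < (t.2.2 : ℝ)
  let sel : Finset K → Cp W := fun s =>
    if hgood : ∃ f, Good s f then hgood.choose else ⟨fun _ => 0, continuous_const⟩
  refine ⟨Set.range sel, ?_, ?_⟩
  · -- density
    rw [dense_iff_inter_open]
    rintro U hU ⟨f, hfU⟩
    obtain ⟨V, hV, rfl⟩ := isOpen_induced_iff.1 hU
    obtain ⟨I, w, hIw, hsub⟩ := isOpen_pi_iff.1 hV f.1 hfU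
    -- radius
    have hball : ∀ z ∈ I, ∃ ε : ℝ, 0 < ε ∧ Metric.ball (f.1 z) ε ⊆ w z := by
      intro z hz
      exact Metric.isOpen_iff.1 (hIw z hz).1 (f.1 z) (hIw z hz).2
    choose! εf hεf hballf using hball
    set ε₀ : ℝ := if hne : I.Nonempty then I.inf' hne εf else 1 with hε₀
    have hε₀pos : 0 < ε₀ := by
      rw [hε₀]
      split_ifs with hne
      · exact (Finset.lt_inf'_iff hne).2 fun z hz => hεf z hz
      · exact one_pos
    have hε₀le : ∀ z ∈ I, ε₀ ≤ εf z := by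
      intro z hz
      rw [hε₀]
      rw [dif_pos ⟨z, hz⟩]
      exact Finset.inf'_le _ hz
    obtain ⟨e, he0, he1⟩ := exists_rat_btwn (by linarith : (0:ℝ) < ε₀ / 2)
    have hepos : (0:ℝ) < e := he0
    -- for each z ∈ I pick a network element and a rational value
    have hnet : ∀ z ∈ I, ∃ M : Set W, M ∈ P ∧ z ∈ M ∧ ∀ x ∈ M, |f.1 x - f.1 z| < (e : ℝ) / 2 := by
      intro z _
      have hO : IsOpen {x : W | |f.1 x - f.1 z| < (e : ℝ) / 2} := by
        have : Continuous fun x : W => |f.1 x - f.1 z| :=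
          (f.2.sub continuous_const).abs
        exact isOpen_lt this continuous_const
      obtain ⟨M, hMP, hzM, hMsub⟩ := hP z _ hO (by simp [hepos])
      exact ⟨M, hMP, hzM, fun x hx => hMsub hx⟩
    choose! Mf hMfP hMf1 hMf2 using hnet
    have hrat : ∀ z ∈ I, ∃ q : ℚ, |f.1 z - (q : ℝ)| < (e : ℝ) / 2 := by
      intro z _
      obtain ⟨q, hq1, hq2⟩ := exists_rat_btwn
        (by linarith : f.1 z - (e : ℝ) / 2 < f.1 z)
      exact ⟨q, by rw [abs_sub_lt_iff]; constructor <;> linarith⟩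
    choose! qf hqf using hrat
    set s : Finset K := I.attach.image (fun z => (⟨Mf z.1, hMfP z.1 z.2⟩, qf z.1, e)) with hs
    have hGoodf : Good s f := by
      intro t ht x hx
      obtain ⟨z, hz, rfl⟩ := Finset.mem_image.1 ht
      have h1 := hMf2 z.1 z.2 x hx
      have h2 := hqf z.1 z.2
      calc |f.1 x - (qf z.1 : ℝ)| ≤ |f.1 x - f.1 z.1| + |f.1 z.1 - (qf z.1 : ℝ)| := abs_sub_le _ _ _
      _ < (e : ℝ) / 2 + (e : ℝ) / 2 := by exact add_lt_add h1 h2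
      _ = e := by ring
    have hex : ∃ g, Good s g := ⟨f, hGoodf⟩
    have hGoodg : Good s (sel s) := by
      show Good s _
      rw [show sel s = hex.choose from dif_pos hex]
      exact hex.choose_spec
    refine ⟨sel s, ?_, Set.mem_range_self s⟩
    show (sel s).1 ∈ V
    apply hsub
    intro z hz
    have hmem : ((⟨Mf z, hMfP z hz⟩ : ↥P), qf z, (e:ℚ)) ∈ s :=
      Finset.mem_image_of_mem _ (Finset.mem_attach I ⟨z, hz⟩)
    have h3 := hGoodg _ hmem z (hMf1 z hz)
    have h4 := hqf z hz
    have h5 : |(sel s).1 z - f.1 z| < ε₀ := by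
      calc |(sel s).1 z - f.1 z| ≤ |(sel s).1 z - (qf z : ℝ)| + |(qf z : ℝ) - f.1 z| :=
            abs_sub_le _ _ _
      _ < (e : ℝ) + (e : ℝ) / 2 := add_lt_add h3 (by rwa [abs_sub_comm])
      _ < ε₀ / 2 + ε₀ / 2 := by linarith
      _ = ε₀ := by ring
    have : (sel s).1 z ∈ Metric.ball (f.1 z) (εf z) := by
      rw [Metric.mem_ball, Real.dist_eq]
      exact lt_of_lt_of_le h5 (hε₀le z hz)
    exact hballf z hz this
  · -- cardinality
    have h1 : #(Set.range sel) ≤ #(Finset K) := Cardinal.mk_range_le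
    refine h1.trans ?_
    rcases finite_or_infinite K with hfin | hinf
    · refine le_trans ?_ (le_max_right _ _)
      exact Cardinal.mk_le_aleph0
    · rw [Cardinal.mk_finset_of_infinite]
      have h2 : #K = #(↥P) * ℵ₀ := by
        rw [hK, Cardinal.mk_prod, Cardinal.mk_prod]
        simp [Cardinal.mk_denumerable, Cardinal.lift_aleph0,
          Cardinal.aleph0_mul_aleph0]
      rw [h2]
      calc #(↥P) * ℵ₀ ≤ max #(↥P) ℵ₀ * max #(↥P) ℵ₀ :=
            mul_le_mul' (le_max_left _ _) (le_max_right _ _)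
      _ = max #(↥P) ℵ₀ := Cardinal.mul_eq_self (le_max_right _ _)

/-- A network for a product `Z × A` where `A` is a set of ordinals. -/
lemma prod_network {τ : Cardinal.{u}} (hunc : ℵ₀ < τ) {Z : Type u} [TopologicalSpace Z]
    {N : Set (Set Z)} (hN : IsNetwork N) (hNc : #N < τ) {A : Set Ordinal.{u}}
    (hA : #(↥A) < Cardinal.lift.{u + 1} τ) :
    ∃ P : Set (Set (Z × ↥A)), IsNetwork P ∧ #P < Cardinal.lift.{u + 1} τ := by
  refine ⟨Set.range (fun p : ↥N × ↥A => (p.1.1 ×ˢ ({p.2} : Set ↥A))), ?_, ?_⟩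
  · rintro ⟨z, β⟩ U hU hzU
    obtain ⟨u₁, v₁, hu, hv, hzu, hβv, huv⟩ := isOpen_prod_iff.1 hU z β hzU
    obtain ⟨M, hMN, hzM, hMu⟩ := hN z u₁ hu hzu
    refine ⟨M ×ˢ ({β} : Set ↥A), ⟨(⟨M, hMN⟩, β), rfl⟩, ⟨hzM, rfl⟩, ?_⟩
    refine subset_trans (Set.prod_mono hMu ?_) huv
    simp [hβv]
  · refine lt_of_le_of_lt Cardinal.mk_range_le ?_
    rw [Cardinal.mk_prod]
    have h1 : Cardinal.lift.{u + 1} #(↥N) < Cardinal.lift.{u + 1} τ :=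
      Cardinal.lift_lt.2 hNc
    have h2 : Cardinal.lift.{u} #(↥A) < Cardinal.lift.{u} (Cardinal.lift.{u + 1} τ) :=
      Cardinal.lift_lt.2 hA
    rw [Cardinal.lift_lift] at h2
    have h2' : Cardinal.lift.{u} #(↥A) < Cardinal.lift.{u + 1} τ := by
      convert h2 using 2
    refine Cardinal.mul_lt_of_lt ?_ h1 h2'
    have : ℵ₀ ≤ τ := hunc.le
    calc (ℵ₀ : Cardinal.{u + 1}) = Cardinal.lift.{u + 1} (ℵ₀ : Cardinal.{u}) :=
          Cardinal.lift_aleph0.symm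
    _ ≤ Cardinal.lift.{u + 1} τ := Cardinal.lift_le.2 this

/-- A small set of ordinals below `τ.ord` is bounded below `τ.ord`, `τ` regular. -/
lemma bound_small {τ : Cardinal.{u}} (hreg : τ.IsRegular) {S : Set Ordinal.{u}}
    (hS : S ⊆ Set.Iio τ.ord) (hcard : #(↥S) < Cardinal.lift.{u + 1} τ) :
    ∃ b, b < τ.ord ∧ ∀ x ∈ S, x ≤ b := by
  classical
  set e := Ordinal.ToType.mk (o := τ.ord) with he
  set S₁ : Set (↥(Set.Iio τ.ord)) := {x | x.1 ∈ S} with hS₁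
  set S' : Set (τ.ord.ToType) := (fun x : ↥(Set.Iio τ.ord) => e x) '' S₁ with hS'
  have hcard1 : #(↥S₁) = #(↥S) :=
    Cardinal.mk_congr ⟨fun x => ⟨x.1.1, x.2⟩, fun y => ⟨⟨y.1, hS y.2⟩, y.2⟩,
      fun x => rfl, fun y => rfl⟩
  have hcard2 : Cardinal.lift.{u + 1} #(↥S') = Cardinal.lift.{u} #(↥S₁) :=
    Cardinal.mk_image_eq_of_injOn_lift _ _ (e.injective.injOn)
  have hcard3 : #(↥S') < τ := by
    rw [← Cardinal.lift_lt.{_, u + 1}]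
    rw [hcard2]
    rw [Cardinal.lift_id'.{u, u + 1} #(↥S₁)]
    rw [hcard1]
    exact hcard
  set g : ↥S' → Ordinal.{u} := fun x => (e.symm x.1).1 with hg
  have hglt : ∀ x, g x < τ.ord := fun x => Set.mem_Iio.1 (e.symm x.1).2
  have hb : (⨆ x, g x) < τ.ord := by
    refine Ordinal.iSup_lt_ord ?_ hglt
    rw [hreg.cof_eq]
    exact hcard3
  refine ⟨⨆ x, g x, hb, fun x hx => ?_⟩
  have hx1 : (⟨x, hS hx⟩ : ↥(Set.Iio τ.ord)) ∈ S₁ := hx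
  have hmem : e ⟨x, hS hx⟩ ∈ S' := Set.mem_image_of_mem _ hx1
  have hval : g ⟨e ⟨x, hS hx⟩, hmem⟩ = x := by
    rw [hg]
    simp
  calc x = g ⟨e ⟨x, hS hx⟩, hmem⟩ := hval.symm
  _ ≤ ⨆ x, g x := Ordinal.le_iSup g _


lemma push_small {τ : Cardinal.{u}} (hreg : τ.IsRegular) (hunc : ℵ₀ < τ)
    {X Y : Type u} [TopologicalSpace X] [TopologicalSpace Y]
    {NX : Set (Set X)} (hNX : IsNetwork NX) (hNXc : #NX < τ)
    {NY : Set (Set Y)} (hNY : IsNetwork NY) (hNYc : #NY < τ)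
    (h : Cp (X × ↥(Set.Iio τ.ord)) ≃ₜ Cp (Y × ↥(Set.Iio τ.ord)))
    {ν : Ordinal.{u}} (hν : ν < τ.ord) :
    ∃ ρ, ρ < τ.ord ∧ h '' Fix X τ.ord ν ⊆ Fix Y τ.ord ρ := by
  classical
  have hlim : Order.IsSuccLimit τ.ord := Cardinal.isSuccLimit_ord hreg.aleph0_le
  have hν1 : ν + 1 < τ.ord := by
    rw [Ordinal.add_one_eq_succ]
    exact hlim.succ_lt hν
  have haleph : (ℵ₀ : Cardinal.{u + 1}) < Cardinal.lift.{u + 1} τ := by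
    calc (ℵ₀ : Cardinal.{u + 1}) = Cardinal.lift.{u + 1} (ℵ₀ : Cardinal.{u}) :=
          Cardinal.lift_aleph0.symm
    _ < Cardinal.lift.{u + 1} τ := Cardinal.lift_lt.2 hunc
  have hA : #(↥(Set.Iio (ν + 1))) < Cardinal.lift.{u + 1} τ := by
    rw [Ordinal.mk_Iio_ordinal]
    exact Cardinal.lift_lt.2 (Cardinal.lt_ord.1 hν1)
  obtain ⟨P, hPnet, hPc⟩ := prod_network hunc hNX hNXc hA
  obtain ⟨D, hDdense, hDc⟩ := exists_dense_small hPnet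
  have hDc' : #(↥D) < Cardinal.lift.{u + 1} τ := lt_of_le_of_lt hDc (max_lt hPc haleph)
  set eX := homeoFix (Z := X) hν with heX
  set D₁ : Set (Cp (X × ↥(Set.Iio τ.ord))) := Subtype.val '' ((fun g => eX g) '' D) with hD₁
  have hD₁c : #(↥D₁) < Cardinal.lift.{u + 1} τ :=
    lt_of_le_of_lt (le_trans Cardinal.mk_image_le Cardinal.mk_image_le) hDc'
  have hD₁fix : D₁ ⊆ Fix X τ.ord ν := by
    rintro _ ⟨F, _, rfl⟩
    exact F.2
  have hDense' : Dense ((fun g => eX g) '' D) := by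
    rw [dense_iff_closure_eq]
    rw [← Homeomorph.image_closure]
    rw [dense_iff_closure_eq.1 hDdense]
    rw [Set.image_univ]
    exact eX.surjective.range_eq
  have hclos : Fix X τ.ord ν ⊆ closure D₁ := by
    intro x hx
    have h1 : (⟨x, hx⟩ : ↥(Fix X τ.ord ν)) ∈ closure ((fun g => eX g) '' D) := hDense' _
    exact closure_subtype.1 h1
  have hfor : ∀ d : ↥D₁, ∃ ρ, ρ < τ.ord ∧ h d.1 ∈ Fix Y τ.ord ρ := fun d =>
    mem_Fix_total hreg hunc hNY hNYc (h d.1)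
  choose g hg1 hg2 using hfor
  have hrange : Set.range g ⊆ Set.Iio τ.ord := by
    rintro _ ⟨d, rfl⟩
    exact Set.mem_Iio.2 (hg1 d)
  have hrc : #(↥(Set.range g)) < Cardinal.lift.{u + 1} τ :=
    lt_of_le_of_lt Cardinal.mk_range_le hD₁c
  obtain ⟨b, hb, hbS⟩ := bound_small hreg hrange hrc
  refine ⟨b, hb, ?_⟩
  calc h '' Fix X τ.ord ν ⊆ h '' closure D₁ := Set.image_mono hclos
  _ = closure (h '' D₁) := h.image_closure D₁
  _ ⊆ closure (Fix Y τ.ord b) := by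
      refine closure_mono ?_
      rintro _ ⟨d, hd, rfl⟩
      refine Fix_mono (hbS _ (Set.mem_range_self (⟨d, hd⟩ : ↥D₁))) (hg2 ⟨d, hd⟩)
  _ = Fix Y τ.ord b := (isClosed_Fix b).closure_eq

end

end CpAux

/-- Let `τ` be a regular uncountable cardinal and let `X`, `Y` be Tychonoff
spaces each admitting a network of cardinality `< τ`. If `Cp (X × [0,τ))` is homeomorphic
to `Cp (Y × [0,τ))`, then there is a non-zero ordinal `λ < τ` with `Cp (X × [0,λ))`
homeomorphic to `Cp (Y × [0,λ))`. -/
theorem statement1 (τ : Cardinal.{u}) (hreg : τ.IsRegular) (hunc : ℵ₀ < τ)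
    (X Y : Type u) [TopologicalSpace X] [TopologicalSpace Y] [T35Space X] [T35Space Y]
    (hX : ∃ N : Set (Set X), IsNetwork N ∧ #N < τ)
    (hY : ∃ N : Set (Set Y), IsNetwork N ∧ #N < τ)
    (h : Nonempty (Cp (X × Set.Iio τ.ord) ≃ₜ Cp (Y × Set.Iio τ.ord))) :
    ∃ lam : Ordinal.{u}, 0 < lam ∧ lam < τ.ord ∧
      Nonempty (Cp (X × Set.Iio lam) ≃ₜ Cp (Y × Set.Iio lam)) := by
  classical
  obtain ⟨NX, hNX, hNXc⟩ := hX
  obtain ⟨NY, hNY, hNYc⟩ := hY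
  obtain ⟨h⟩ := h
  have hlim : Order.IsSuccLimit τ.ord := Cardinal.isSuccLimit_ord hreg.aleph0_le
  have step : ∀ ν : Ordinal.{u}, ν < τ.ord → ∃ ρ, ν < ρ ∧ ρ < τ.ord ∧
      (⇑h '' CpAux.Fix X τ.ord ν ⊆ CpAux.Fix Y τ.ord ρ) ∧
      (⇑h.symm '' CpAux.Fix Y τ.ord ν ⊆ CpAux.Fix X τ.ord ρ) := by
    intro ν hν
    obtain ⟨ρ₁, hρ₁, hsub1⟩ := CpAux.push_small hreg hunc hNX hNXc hNY hNYc h hν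
    obtain ⟨ρ₂, hρ₂, hsub2⟩ := CpAux.push_small hreg hunc hNY hNYc hNX hNXc h.symm hν
    refine ⟨max (max ρ₁ ρ₂) (ν + 1), ?_, ?_, ?_, ?_⟩
    · exact lt_of_lt_of_le (CpAux.lt_succ_ord ν) (le_max_right _ _)
    · refine max_lt (max_lt hρ₁ hρ₂) ?_
      rw [Ordinal.add_one_eq_succ]
      exact hlim.succ_lt hν
    · exact hsub1.trans (CpAux.Fix_mono (le_trans (le_max_left _ _) (le_max_left _ _)))
    · exact hsub2.trans (CpAux.Fix_mono (le_trans (le_max_right _ _) (le_max_left _ _)))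
  choose! next hn1 hn2 hn3 hn4 using step
  set μ : ℕ → Ordinal.{u} := fun n => next^[n] 0 with hμ
  have hμsucc : ∀ n, μ (n + 1) = next (μ n) := fun n => Function.iterate_succ_apply' next n 0
  have hμ0 : μ 0 = 0 := rfl
  have hμlt : ∀ n, μ n < τ.ord ∧ μ n < μ (n + 1) := by
    intro n
    induction n with
    | zero =>
      refine ⟨by rw [hμ0]; exact hlim.pos, ?_⟩
      rw [hμsucc 0]
      exact hn1 (μ 0) (by rw [hμ0]; exact hlim.pos)
    | succ n ih =>
      have h1 : μ (n + 1) < τ.ord := by rw [hμsucc n]; exact hn2 (μ n) ih.1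
      exact ⟨h1, by rw [hμsucc (n + 1)]; exact hn1 _ h1⟩
  set μs := ⨆ n, μ n with hμs
  have hμsup : μs < τ.ord := by
    refine Ordinal.iSup_lt_ord_lift ?_ (fun n => (hμlt n).1)
    rw [hreg.cof_eq]
    have : Cardinal.lift.{u} #ℕ = ℵ₀ := by
      rw [Cardinal.mk_denumerable]
      exact Cardinal.lift_aleph0
    rw [this]
    exact hunc
  have hμle : ∀ n, μ n ≤ μs := fun n => Ordinal.le_iSup μ n
  have hkey : ⇑h '' CpAux.Fix X τ.ord μs = CpAux.Fix Y τ.ord μs := by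
    apply Set.Subset.antisymm
    · rintro _ ⟨f, hf, rfl⟩
      have htd := CpAux.tendsto_projFix (fun n => (hμlt n).2) (fun n => (hμlt n).1) hμsup hf
      have htd2 := (h.continuous.tendsto f).comp htd
      refine (CpAux.isClosed_Fix μs).mem_of_tendsto htd2 ?_
      refine Filter.Eventually.of_forall fun n => ?_
      have hmem2 : h (CpAux.projFix (μ n) f) ∈ CpAux.Fix Y τ.ord (next (μ n)) :=
        hn3 (μ n) (hμlt n).1 (Set.mem_image_of_mem _ (CpAux.projFix_mem _ f))
      refine CpAux.Fix_mono ?_ hmem2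
      rw [← hμsucc n]
      exact hμle (n + 1)
    · intro gel hg
      have hsymm : h.symm gel ∈ CpAux.Fix X τ.ord μs := by
        have htd := CpAux.tendsto_projFix (Z := Y) (fun n => (hμlt n).2)
          (fun n => (hμlt n).1) hμsup hg
        have htd2 := (h.symm.continuous.tendsto gel).comp htd
        refine (CpAux.isClosed_Fix μs).mem_of_tendsto htd2 ?_
        refine Filter.Eventually.of_forall fun n => ?_
        have hmem2 : h.symm (CpAux.projFix (μ n) gel) ∈ CpAux.Fix X τ.ord (next (μ n)) :=
          hn4 (μ n) (hμlt n).1 (Set.mem_image_of_mem _ (CpAux.projFix_mem _ gel))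
        refine CpAux.Fix_mono ?_ hmem2
        rw [← hμsucc n]
        exact hμle (n + 1)
      exact ⟨h.symm gel, hsymm, h.apply_symm_apply gel⟩
  refine ⟨μs + 1, ?_, ?_, ?_⟩
  · exact lt_of_le_of_lt (zero_le (a := μs)) (CpAux.lt_succ_ord μs)
  · rw [Ordinal.add_one_eq_succ]
    exact hlim.succ_lt hμsup
  · exact ⟨(CpAux.homeoFix hμsup).trans ((h.image _).trans ((Homeomorph.setCongr hkey).trans
      (CpAux.homeoFix (Z := Y) hμsup).symm))⟩
end

section
/- Let τ be a regular uncountable cardinal and let X and Y be Tychonoff spaces each admitting a network of cardinality less than τ. If C_p(X × [0,τ]) is homeomorphic to C_p(Y × [0,τ]), then there exists a non-zero ordinal λ < τ such that C_p(X × [0,λ)) is homeomorphic to C_p(Y × [0,λ)). -/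
open Cardinal Set

universe u

namespace CpPf
noncomputable section
open scoped Classical

variable {Z : Type*} [TopologicalSpace Z]

lemma cont_eval (p : Z) : Continuous fun f : Cp Z => f.1 p :=
  (continuous_apply p).comp continuous_subtype_val

lemma cont_into {A : Type*} [TopologicalSpace A] {θ : A → Cp Z}
    (h : ∀ p, Continuous fun a => (θ a).1 p) : Continuous θ := by
  rw [continuous_induced_rng]
  exact continuous_pi h

lemma exists_box {ψ : Cp Z → ℝ} (hψ : Continuous ψ) (d : Cp Z) {ε : ℝ} (hε : 0 < ε) :
    ∃ (F : Finset Z) (δ : ℝ), 0 < δ ∧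
      ∀ u : Cp Z, (∀ p ∈ F, |u.1 p - d.1 p| < δ) → |ψ u - ψ d| < ε := by
  have hV : IsOpen (ψ ⁻¹' Metric.ball (ψ d) ε) := hψ.isOpen_preimage _ Metric.isOpen_ball
  rw [isOpen_induced_iff] at hV
  obtain ⟨O, hO, hOpre⟩ := hV
  have hdO : d.1 ∈ O := by
    have : d ∈ Subtype.val ⁻¹' O := by
      rw [hOpre]; exact Metric.mem_ball_self hε
    exact this
  obtain ⟨I, v, hv, hsub⟩ := isOpen_pi_iff.1 hO d.1 hdO
  have hδ : ∀ p ∈ I, ∃ δ > 0, Metric.ball (d.1 p) δ ⊆ v p := by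
    intro p hp
    obtain ⟨δ, hδ0, hb⟩ := Metric.isOpen_iff.1 (hv p hp).1 (d.1 p) (hv p hp).2
    exact ⟨δ, hδ0, hb⟩
  choose! δf hδ0 hball using hδ
  rcases I.eq_empty_or_nonempty with hI | hI
  · refine ⟨∅, 1, one_pos, fun u _ => ?_⟩
    have : u.1 ∈ O := hsub (by simp [hI])
    have : u ∈ ψ ⁻¹' Metric.ball (ψ d) ε := hOpre ▸ this
    simpa [Real.dist_eq] using this
  · refine ⟨I, I.inf' hI δf, ?_, fun u hu => ?_⟩
    · exact (Finset.lt_inf'_iff hI).2 fun p hp => hδ0 p hp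
    · have : u.1 ∈ O := by
        apply hsub
        intro p hp
        apply hball p hp
        rw [Metric.mem_ball, Real.dist_eq]
        exact lt_of_lt_of_le (hu p hp) (Finset.inf'_le δf hp)
      have : u ∈ ψ ⁻¹' Metric.ball (ψ d) ε := hOpre ▸ this
      simpa [Real.dist_eq] using this


variable (o : Ordinal.{u})

abbrev T := ↥(Set.Iic o)

def topp : T o := ⟨o, Set.self_mem_Iic⟩

def cap (β : Ordinal.{u}) (t : T o) : T o :=
  ⟨if t.1 ≤ β then t.1 else o, by split <;> exact Set.mem_Iic.2 (by first | exact t.2 | exact le_rfl)⟩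

variable {o}

lemma isClopen_le (c : Ordinal.{u}) : IsClopen {t : T o | t.1 ≤ c} := by
  constructor
  · exact (isClosed_Iic (a := c)).preimage continuous_subtype_val
  · have : {t : T o | t.1 ≤ c} = Subtype.val ⁻¹' (Iio (c + 1)) := by
      ext t
      simp [Order.lt_add_one_iff]
    rw [this]
    exact (isOpen_Iio (a := c + 1)).preimage continuous_subtype_val

lemma continuous_cap (β : Ordinal.{u}) : Continuous (cap o β) := by
  apply Continuous.subtype_mk
  exact Continuous.if (by simp [(isClopen_le β).frontier_eq])
    continuous_subtype_val continuous_const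

@[simp] lemma cap_val_of_le {β : Ordinal.{u}} {t : T o} (h : t.1 ≤ β) : cap o β t = t := by
  apply Subtype.ext
  simp [cap, h]

@[simp] lemma cap_val_of_gt {β : Ordinal.{u}} {t : T o} (h : ¬ t.1 ≤ β) : cap o β t = topp o := by
  apply Subtype.ext
  simp [cap, topp, h]

lemma cap_cap {β β' : Ordinal.{u}} (h : β ≤ β') (h' : β' < o) (t : T o) :
    cap o β' (cap o β t) = cap o β t := by
  by_cases ht : t.1 ≤ β
  · rw [cap_val_of_le ht, cap_val_of_le (ht.trans h)]
  · rw [cap_val_of_gt ht, cap_val_of_gt (by simpa [topp] using h'.not_ge)]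

lemma cap_topp {β : Ordinal.{u}} (h : β < o) : cap o β (topp o) = topp o :=
  cap_val_of_gt (by simpa [topp] using h.not_ge)

variable (o) in
def mC (W : Type*) [TopologicalSpace W] (β : Ordinal.{u}) (f : Cp (W × T o)) : Cp (W × T o) :=
  ⟨fun p => f.1 (p.1, cap o β p.2),
    f.2.comp (continuous_fst.prodMk ((continuous_cap β).comp continuous_snd))⟩

variable {W : Type*} [TopologicalSpace W]

lemma mC_apply (β : Ordinal.{u}) (f : Cp (W × T o)) (p : W × T o) :
    (mC o W β f).1 p = f.1 (p.1, cap o β p.2) := rfl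

lemma mC_mC {β β' : Ordinal.{u}} (h : β ≤ β') (h' : β' < o) (f : Cp (W × T o)) :
    mC o W β (mC o W β' f) = mC o W β f := by
  apply Subtype.ext
  funext p
  simp only [mC_apply]
  rw [cap_cap h h']

lemma continuous_mC (β : Ordinal.{u}) : Continuous (mC o W β) :=
  cont_into fun p => cont_eval (p.1, cap o β p.2)

lemma mC_apply_le {β : Ordinal.{u}} {t : T o} (h : t.1 ≤ β) (f : Cp (W × T o)) (w : W) :
    (mC o W β f).1 (w, t) = f.1 (w, t) := by rw [mC_apply]; simp [cap_val_of_le h]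

lemma mC_apply_gt {β : Ordinal.{u}} {t : T o} (h : ¬ t.1 ≤ β) (f : Cp (W × T o)) (w : W) :
    (mC o W β f).1 (w, t) = f.1 (w, topp o) := by rw [mC_apply]; simp [cap_val_of_gt h]

variable (o) in
def IsSupp (ψ : Cp (W × T o) → ℝ) (β : Ordinal.{u}) : Prop :=
  ∀ f, ψ (mC o W β f) = ψ f

lemma IsSupp.mono {ψ : Cp (W × T o) → ℝ} {β β' : Ordinal.{u}} (hs : IsSupp o ψ β)
    (hle : β ≤ β') (h' : β' < o) : IsSupp o ψ β' := fun f => by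
  rw [← hs f, ← hs (mC o W β' f), mC_mC hle h']


lemma exists_denseFamily {W : Type u} [TopologicalSpace W] {N : Set (Set W)} (hN : IsNetwork N)
    {τ : Cardinal.{u}} (hNc : #N < τ) (hτ : τ.IsRegular) (hu : ℵ₀ < τ) {o : Ordinal.{u}} (ho : o = τ.ord)
    {β : Ordinal.{u}} (hβ : β < o) :
    ∃ (ι : Type u) (pick : ι → Cp (W × T o)), #ι < τ ∧ (∀ i, mC o W β (pick i) = pick i) ∧
      ∀ h : Cp (W × T o), mC o W β h = h → ∀ F : Finset (W × T o), ∀ ε : ℝ, 0 < ε →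
        ∃ i, ∀ p ∈ F, |(pick i).1 p - h.1 p| < ε := by
  classical
  have hol : Order.IsSuccLimit o := ho ▸ Cardinal.isSuccLimit_ord hτ.aleph0_le
  have hβ1 : β + 1 < o := by
    rw [Ordinal.add_one_eq_succ]; exact hol.succ_lt hβ
  set N' : Set (Set W) := insert ∅ N with hN'def
  haveI : Nonempty ↥N' := ⟨⟨∅, mem_insert _ _⟩⟩
  set A := ↥N' × Option ((β + 1).ToType) × ULift.{u} ℚ with hAdef
  set ι := List A × ULift.{u} ℚ with hιdef
  -- decoding of coordinates
  set dec : Option ((β + 1).ToType) → T o := fun e =>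
    Option.rec (topp o) (fun t => ⟨((Ordinal.ToType.mk (o := β + 1)).symm t).1,
      Set.mem_Iic.2 (le_of_lt (lt_of_lt_of_le ((Ordinal.ToType.mk (o := β + 1)).symm t).2 hβ1.le))⟩) e
    with hdec
  set enc : T o → Option ((β + 1).ToType) := fun t =>
    if h : t.1 ≤ β then some (Ordinal.ToType.mk (o := β + 1) ⟨t.1, by
      rw [mem_Iio, Ordinal.add_one_eq_succ, Order.lt_succ_iff]; exact h⟩) else none with henc
  have hdecenc : ∀ t : T o, dec (enc t) = cap o β t := by
    intro t
    by_cases h : t.1 ≤ β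
    · rw [cap_val_of_le h]
      simp only [henc, hdec, h, dif_pos]
      apply Subtype.ext
      simp
    · rw [cap_val_of_gt h]
      simp only [henc, hdec, h, dif_neg, not_false_iff]
  -- the family
  set Good : ι → Cp (W × T o) → Prop := fun tup d =>
    ∀ e ∈ tup.1, ∀ x ∈ (e.1.1 : Set W), |d.1 (x, dec e.2.1) - (e.2.2.down : ℝ)| ≤ (tup.2.down : ℝ)
    with hGood
  have hex : ∀ tup : ι, ∃ d, mC o W β d = d ∧
      ((∃ d', mC o W β d' = d' ∧ Good tup d') → Good tup d) := by
    intro tup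
    rcases Classical.em (∃ d', mC o W β d' = d' ∧ Good tup d') with hc | hc
    · exact ⟨hc.choose, hc.choose_spec.1, fun _ => hc.choose_spec.2⟩
    · exact ⟨mC o W β ⟨fun _ => 0, continuous_const⟩, mC_mC le_rfl hβ _, fun hcc => absurd hcc hc⟩
  choose pick hcapped hgood using hex
  refine ⟨ι, pick, ?_, ?_, ?_⟩
  · -- cardinality
    have hQ : #(ULift.{u} ℚ) = ℵ₀ := by simp [Cardinal.mk_denumerable]
    have hO : #(Option ((β + 1).ToType)) < τ := by
      rw [Cardinal.mk_option, Cardinal.mk_toType]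
      exact Cardinal.add_lt_of_lt hτ.aleph0_le (Cardinal.lt_ord.1 (ho ▸ hβ1))
        (Cardinal.one_lt_aleph0.trans_le hτ.aleph0_le)
    have hN'c : #↥N' < τ :=
      Cardinal.mk_insert_le.trans_lt (Cardinal.add_lt_of_lt hτ.aleph0_le hNc
        (Cardinal.one_lt_aleph0.trans_le hτ.aleph0_le))
    have hA : #A < τ := by
      rw [hAdef, Cardinal.mk_prod, Cardinal.mk_prod]
      simp only [Cardinal.lift_id]
      exact Cardinal.mul_lt_of_lt hτ.aleph0_le hN'c
        (Cardinal.mul_lt_of_lt hτ.aleph0_le hO (hQ ▸ hu))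
    have hL : #(List A) < τ := by
      rw [Cardinal.mk_list_eq_max_mk_aleph0]
      exact max_lt hA hu
    rw [hιdef, Cardinal.mk_prod]
    simp only [Cardinal.lift_id]
    exact Cardinal.mul_lt_of_lt hτ.aleph0_le hL (hQ ▸ hu)
  · -- capped
    exact hcapped
  · -- density
    intro h hcap F ε hε
    have hchoice : ∀ p : W × T o, ∃ (s : Set W) (q : ℚ), s ∈ N ∧ p.1 ∈ s ∧
        (∀ x ∈ s, |h.1 (x, cap o β p.2) - (q : ℝ)| < ε / 4) := by
      intro p
      obtain ⟨q, hq⟩ := exists_rat_near (h.1 (p.1, cap o β p.2)) (by linarith : (0:ℝ) < ε / 8)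
      have hUopen : IsOpen ((fun x => h.1 (x, cap o β p.2)) ⁻¹' Metric.ball (q : ℝ) (ε / 4)) :=
        Metric.isOpen_ball.preimage (h.2.comp (continuous_id.prodMk continuous_const))
      have hpU : p.1 ∈ (fun x => h.1 (x, cap o β p.2)) ⁻¹' Metric.ball (q : ℝ) (ε / 4) := by
        simp only [mem_preimage, Metric.mem_ball, Real.dist_eq]
        calc |h.1 (p.1, cap o β p.2) - (q : ℝ)| < ε / 8 := hq
          _ < ε / 4 := by linarith
      obtain ⟨s, hsN, hps, hsU⟩ := hN p.1 _ hUopen hpU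
      refine ⟨s, q, hsN, hps, fun x hx => ?_⟩
      have := hsU hx
      simpa only [mem_preimage, Metric.mem_ball, Real.dist_eq] using this
    choose sel selq h1 h2 h3 using hchoice
    obtain ⟨ε', hε'1, hε'2⟩ := exists_rat_btwn (show (ε/4 : ℝ) < ε/2 by linarith)
    set tup : ι := (F.attach.toList.map (fun p =>
      ((⟨sel p.1, Set.mem_insert_of_mem _ (h1 p.1)⟩ : ↥N'), enc p.1.2, ULift.up (selq p.1))),
      ULift.up ε') with htup
    have hw : ∃ d, mC o W β d = d ∧ Good tup d := by
      refine ⟨h, hcap, ?_⟩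
      intro e he x hx
      rw [htup] at he
      simp only [List.mem_map] at he
      obtain ⟨a, _, rfl⟩ := he
      simp only []
      rw [hdecenc]
      have := h3 a.1 x hx
      calc |h.1 (x, cap o β a.1.2) - ((selq a.1 : ℚ) : ℝ)| ≤ ε / 4 := le_of_lt this
        _ ≤ (ε' : ℝ) := le_of_lt hε'1
    refine ⟨tup, fun p hp => ?_⟩
    have hd1 : mC o W β (pick tup) = pick tup := hcapped tup
    have hd2 : Good tup (pick tup) := hgood tup hw
    have hdp : (pick tup).1 p = (pick tup).1 (p.1, cap o β p.2) := by
      conv_lhs => rw [← hd1]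
      rw [mC_apply]
    have hhp : h.1 p = h.1 (p.1, cap o β p.2) := by
      conv_lhs => rw [← hcap]
      rw [mC_apply]
    have hmem : ((⟨sel p, Set.mem_insert_of_mem _ (h1 p)⟩ : ↥N'), enc p.2, ULift.up (selq p))
        ∈ tup.1 := by
      rw [htup]
      simp only [List.mem_map]
      exact ⟨⟨p, hp⟩, by simp [Finset.mem_toList], rfl⟩
    have hA : |(pick tup).1 (p.1, dec (enc p.2)) - ((selq p : ℚ) : ℝ)| ≤ (ε' : ℝ) :=
      hd2 _ hmem p.1 (h2 p)
    rw [hdecenc] at hA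
    have hB : |h.1 (p.1, cap o β p.2) - ((selq p : ℚ) : ℝ)| < ε / 4 := h3 p p.1 (h2 p)
    rw [hdp, hhp]
    calc |(pick tup).1 (p.1, cap o β p.2) - h.1 (p.1, cap o β p.2)|
        ≤ |(pick tup).1 (p.1, cap o β p.2) - ((selq p : ℚ) : ℝ)| +
          |((selq p : ℚ) : ℝ) - h.1 (p.1, cap o β p.2)| := abs_sub_le _ _ _
      _ = |(pick tup).1 (p.1, cap o β p.2) - ((selq p : ℚ) : ℝ)| +
          |h.1 (p.1, cap o β p.2) - ((selq p : ℚ) : ℝ)| := by rw [abs_sub_comm ((selq p : ℚ) : ℝ)]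
      _ < (ε' : ℝ) + ε / 4 := by
          apply add_lt_add_of_le_of_lt hA hB
      _ < ε / 2 + ε / 4 := by linarith
      _ < ε := by linarith

lemma exists_supp {W : Type u} [TopologicalSpace W] {N : Set (Set W)} (hN : IsNetwork N)
    {τ : Cardinal.{u}} (hNc : #N < τ) (hτ : τ.IsRegular) (hu : ℵ₀ < τ) {o : Ordinal.{u}}
    (ho : o = τ.ord) {ψ : Cp (W × T o) → ℝ} (hψ : Continuous ψ) :
    ∃ β, β < o ∧ IsSupp o ψ β := by
  have hol : Order.IsSuccLimit o := ho ▸ Cardinal.isSuccLimit_ord hτ.aleph0_le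
  by_contra hcon
  push_neg at hcon
  -- dense families
  have hD := fun (β : Ordinal.{u}) (hβ : β < o) => exists_denseFamily hN hNc hτ hu ho hβ
  choose ιf pickf hcard hcap hdense using hD
  -- continuity boxes
  have hbox : ∀ (d : Cp (W × T o)) (j : ℕ), ∃ (F : Finset (W × T o)) (δ : ℝ), 0 < δ ∧
      ∀ u : Cp (W × T o), (∀ p ∈ F, |u.1 p - d.1 p| < δ) → |ψ u - ψ d| < 1 / (j + 1) := by
    intro d j
    exact exists_box hψ d (by positivity)
  choose Fch δch hδch hFch using hbox
  -- coordinate bound of a finite set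
  set coordB : Finset (W × T o) → Ordinal.{u} :=
    fun F => F.sup (fun p => if p.2.1 < o then p.2.1 + 1 else 0) with hcoordB
  have hcoordB_lt : ∀ F, coordB F < o := by
    intro F
    simp only [hcoordB]
    have hbot : (⊥ : Ordinal.{u}) < o := by simpa using hol.pos
    refine (Finset.sup_lt_iff hbot).2 ?_
    intro p _
    split
    · rw [Ordinal.add_one_eq_succ]
      exact hol.succ_lt (by assumption)
    · exact hol.pos
  have hcoordB_ge : ∀ F (p : W × T o), p ∈ F → p.2.1 < o → p.2.1 < coordB F := by
    intro F p hp hpo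
    have hle : (if p.2.1 < o then p.2.1 + 1 else 0) ≤ coordB F := by
      simp only [hcoordB]
      exact Finset.le_sup (f := fun q : W × T o => if q.2.1 < o then q.2.1 + 1 else 0) hp
    calc p.2.1 < p.2.1 + 1 := by rw [Ordinal.add_one_eq_succ]; exact Order.lt_succ _
      _ = (if p.2.1 < o then p.2.1 + 1 else 0) := by rw [if_pos hpo]
      _ ≤ coordB F := hle
  -- the `next` function
  set nxt : Ordinal.{u} → Ordinal.{u} := fun β =>
    if hβ : β < o then
      max (β + 1) (iSup fun z : (ιf β hβ) × ℕ => coordB (Fch (pickf β hβ z.1) z.2))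
    else 0 with hnxt
  have hnxt_lt : ∀ β (hβ : β < o), nxt β < o := by
    intro β hβ
    simp only [hnxt]
    rw [dif_pos hβ]
    apply max_lt
    · rw [Ordinal.add_one_eq_succ]; exact hol.succ_lt hβ
    · rw [ho]
      apply Cardinal.iSup_lt_ord_of_isRegular hτ
      · rw [Cardinal.mk_prod]
        simp only [Cardinal.lift_id, Cardinal.lift_uzero, Cardinal.mk_nat, Cardinal.lift_aleph0]
        exact Cardinal.mul_lt_of_lt hτ.aleph0_le (hcard β hβ) hu
      · intro z
        rw [← ho]
        exact hcoordB_lt _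
  have hnxt_gt : ∀ β (hβ : β < o), β < nxt β := by
    intro β hβ
    simp only [hnxt]
    rw [dif_pos hβ]
    calc β < β + 1 := by rw [Ordinal.add_one_eq_succ]; exact Order.lt_succ _
      _ ≤ _ := le_max_left _ _
  have hnxt_bound : ∀ β (hβ : β < o) (i : ιf β hβ) (j : ℕ) (p : W × T o),
      p ∈ Fch (pickf β hβ i) j → p.2.1 < o → p.2.1 < nxt β := by
    intro β hβ i j p hp hpo
    have h1 : p.2.1 < coordB (Fch (pickf β hβ i) j) := hcoordB_ge _ p hp hpo
    have h2 : coordB (Fch (pickf β hβ i) j) ≤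
        iSup fun z : (ιf β hβ) × ℕ => coordB (Fch (pickf β hβ z.1) z.2) :=
      Ordinal.le_iSup _ (⟨i, j⟩ : (ιf β hβ) × ℕ)
    simp only [hnxt]
    rw [dif_pos hβ]
    exact lt_of_lt_of_le h1 (h2.trans (le_max_right _ _))
  -- the sequence
  set seq : ℕ → Ordinal.{u} := fun n => nxt^[n] 1 with hseq
  have hseq_lt : ∀ n, seq n < o := by
    intro n
    induction n with
    | zero => simpa [hseq] using Ordinal.one_lt_of_isSuccLimit hol
    | succ k ih => simp only [hseq]; rw [Function.iterate_succ_apply']; exact hnxt_lt _ (by simpa [hseq] using ih)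
  have hseq_succ : ∀ n, seq (n + 1) = nxt (seq n) := by
    intro n; simp only [hseq]; rw [Function.iterate_succ_apply']
  have hseq_mono : StrictMono seq := by
    apply strictMono_nat_of_lt_succ
    intro n
    rw [hseq_succ]
    exact hnxt_gt _ (hseq_lt n)
  set bstar := iSup seq with hbstar
  have hbstar_lt : bstar < o := by
    rw [hbstar, ho]
    apply Cardinal.iSup_lt_ord_lift_of_isRegular hτ (by simpa using hu)
    intro n
    rw [← ho]; exact hseq_lt n
  have hseq_le : ∀ n, seq n ≤ bstar := fun n => Ordinal.le_iSup seq n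
  have hseq_ltb : ∀ n, seq n < bstar := fun n =>
    lt_of_lt_of_le (hseq_mono (Nat.lt_succ_self n)) (hseq_le (n + 1))
  -- the bad function
  obtain ⟨f, hf⟩ := not_forall.1 (hcon bstar hbstar_lt)
  set g := mC o W bstar f with hg
  set E := |ψ f - ψ g| with hE
  have hEpos : 0 < E := by
    rw [hE]
    rw [abs_pos, sub_ne_zero]
    exact fun hh => hf hh.symm
  set ε := E / 3 with hεdef
  have hεpos : 0 < ε := by rw [hεdef]; linarith
  obtain ⟨j, hj⟩ := exists_nat_one_div_lt (show (0:ℝ) < ε / 2 by linarith)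
  obtain ⟨Ff, δf, hδf, hFf⟩ := exists_box hψ f hεpos
  obtain ⟨Fg, δg, hδg, hFg⟩ := exists_box hψ g hεpos
  -- choose n clearing the coordinates below bstar
  have hn : ∃ n : ℕ, ∀ p ∈ Ff ∪ Fg, p.2.1 < bstar → p.2.1 < seq n := by
    have hex : ∀ p : W × T o, ∃ n : ℕ, p.2.1 < bstar → p.2.1 < seq n := by
      intro p
      by_cases hp : p.2.1 < bstar
      · obtain ⟨n, hn⟩ := Ordinal.lt_iSup_iff.1 (hbstar ▸ hp)
        exact ⟨n, fun _ => hn⟩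
      · exact ⟨0, fun hc => absurd hc hp⟩
    choose np hnp using hex
    refine ⟨(Ff ∪ Fg).sup np, fun p hp hpb => ?_⟩
    exact lt_of_lt_of_le (hnp p hpb) (hseq_mono.monotone (Finset.le_sup hp))
  obtain ⟨n, hn⟩ := hn
  set β1 := seq n with hβ1def
  set β2 := seq (n + 1) with hβ2def
  have hb1o : β1 < o := hseq_lt n
  have hb2o : β2 < o := hseq_lt (n + 1)
  have hb2star : β2 < bstar := hseq_ltb (n + 1)
  have hb1star : β1 < bstar := hseq_ltb n
  -- density approximation
  set h0 := mC o W β1 g with hh0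
  have hh0cap : mC o W β1 h0 = h0 := by rw [hh0]; exact mC_mC le_rfl hb1o g
  set S : Finset (W × T o) := (Ff ∪ Fg) ∪ (Ff ∪ Fg).image (fun p => (p.1, topp o)) with hS
  set η := min δf δg with hη
  have hηpos : 0 < η := lt_min hδf hδg
  obtain ⟨i, hi⟩ := hdense β1 hb1o h0 hh0cap S η hηpos
  set d := pickf β1 hb1o i with hd
  have hdcap : mC o W β1 d = d := hcap β1 hb1o i
  have hb2nxt : β2 = nxt β1 := by rw [hβ2def, hβ1def]; exact hseq_succ n
  -- pointwise value helpers
  have hgval_le : ∀ (w : W) (t : T o), t.1 ≤ bstar → g.1 (w, t) = f.1 (w, t) := by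
    intro w t ht; rw [hg]; exact mC_apply_le ht f w
  have hgval_gt : ∀ (w : W) (t : T o), ¬ t.1 ≤ bstar → g.1 (w, t) = f.1 (w, topp o) := by
    intro w t ht; rw [hg]; exact mC_apply_gt ht f w
  have htopns : ¬ (topp o).1 ≤ bstar := not_le.2 hbstar_lt
  have hgtop : ∀ w : W, g.1 (w, topp o) = f.1 (w, topp o) := fun w => hgval_gt w _ htopns
  have hdval_gt : ∀ (w : W) (t : T o), ¬ t.1 ≤ β1 → d.1 (w, t) = d.1 (w, topp o) := by
    intro w t ht
    conv_lhs => rw [← hdcap]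
    exact mC_apply_gt ht d w
  have hh0val_le : ∀ (w : W) (t : T o), t.1 ≤ β1 → h0.1 (w, t) = g.1 (w, t) := fun w t ht => by
    rw [hh0]; exact mC_apply_le ht g w
  have hh0val_gt : ∀ (w : W) (t : T o), ¬ t.1 ≤ β1 → h0.1 (w, t) = g.1 (w, topp o) :=
    fun w t ht => by rw [hh0]; exact mC_apply_gt ht g w
  have hSsub : ∀ p ∈ Ff ∪ Fg, p ∈ S := by
    intro p hp; rw [hS]; exact Finset.mem_union_left _ hp
  have hStop : ∀ p ∈ Ff ∪ Fg, (p.1, topp o) ∈ S := by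
    intro p hp; rw [hS]; exact Finset.mem_union_right _ (Finset.mem_image_of_mem _ hp)
  have est1 : ∀ p ∈ Ff ∪ Fg, p.2.1 ≤ β1 → |d.1 p - g.1 p| < η := by
    rintro ⟨w, t⟩ hp hple
    have h1 := hi _ (hSsub _ hp)
    rwa [hh0val_le w t hple] at h1
  have est2 : ∀ p ∈ Ff ∪ Fg, ¬ p.2.1 ≤ bstar → |d.1 p - g.1 p| < η := by
    rintro ⟨w, t⟩ hp hgt
    have hgtb1 : ¬ t.1 ≤ β1 := fun hc => hgt (hc.trans hb1star.le)
    have h1 := hi _ (hStop _ hp)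
    have h2 : h0.1 (w, topp o) = g.1 (w, topp o) := hh0val_gt w _ (not_le.2 hb1o)
    rw [h2] at h1
    rw [hdval_gt w t hgtb1, hgval_gt w t hgt, ← hgtop w]
    exact h1
  have hcases : ∀ p ∈ Ff ∪ Fg, p.2.1 ≤ β1 ∨ p.2.1 = bstar ∨ ¬ p.2.1 ≤ bstar := by
    intro p hp
    rcases lt_trichotomy p.2.1 bstar with hlt | heq | hgt
    · exact Or.inl (le_of_lt (hn p hp hlt))
    · exact Or.inr (Or.inl heq)
    · exact Or.inr (Or.inr (not_le.2 hgt))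
  -- the interpolants
  set bT : T o := ⟨bstar, Set.mem_Iic.2 hbstar_lt.le⟩ with hbT
  set corr : W → ℝ := fun w => g.1 (w, bT) - d.1 (w, bT) with hcorr
  have hcorr_cont : Continuous corr := by
    simp only [hcorr]
    exact (g.2.comp (continuous_id.prodMk continuous_const)).sub
      (d.2.comp (continuous_id.prodMk continuous_const))
  have hclopen : IsClopen {p : W × T o | β2 < p.2.1 ∧ p.2.1 ≤ bstar} := by
    have hset : {p : W × T o | β2 < p.2.1 ∧ p.2.1 ≤ bstar} =
        Prod.snd ⁻¹' ({t : T o | t.1 ≤ bstar} ∩ {t : T o | t.1 ≤ β2}ᶜ) := by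
      ext p; simp only [mem_setOf_eq, mem_preimage, mem_inter_iff, mem_compl_iff, not_le]
      tauto
    rw [hset]
    exact (((isClopen_le bstar)).inter ((isClopen_le β2)).compl).preimage continuous_snd
  set wfun : Cp (W × T o) :=
    ⟨fun p => d.1 p + (if β2 < p.2.1 ∧ p.2.1 ≤ bstar then corr p.1 else 0), by
      apply d.2.add
      apply Continuous.if ?_ (hcorr_cont.comp continuous_fst) continuous_const
      intro a ha
      rw [hclopen.frontier_eq] at ha
      exact absurd ha (Set.notMem_empty a)⟩ with hwfun
  set ufun : Cp (W × T o) :=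
    ⟨fun p => wfun.1 p + f.1 p - g.1 p, (wfun.2.add f.2).sub g.2⟩ with hufun
  have hwval : ∀ p : W × T o,
      wfun.1 p = d.1 p + (if β2 < p.2.1 ∧ p.2.1 ≤ bstar then corr p.1 else 0) := fun p => rfl
  have huval : ∀ p : W × T o, ufun.1 p = wfun.1 p + f.1 p - g.1 p := fun p => rfl
  -- estimate A
  have estA : ∀ p ∈ Ff, |ufun.1 p - f.1 p| < δf := by
    rintro ⟨w, t⟩ hp
    have hpu : (w, t) ∈ Ff ∪ Fg := Finset.mem_union_left _ hp
    rcases hcases _ hpu with hc | hc | hc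
    · have hlt2 : t.1 < β2 := lt_of_le_of_lt hc (hseq_mono (Nat.lt_succ_self n))
      have hχ : ¬ (β2 < (⟨w,t⟩ : W × T o).2.1 ∧ (⟨w,t⟩ : W × T o).2.1 ≤ bstar) :=
        fun hcc => absurd hcc.1 (not_lt.2 hlt2.le)
      have hveq : ufun.1 (w, t) - f.1 (w, t) = d.1 (w, t) - g.1 (w, t) := by
        rw [huval, hwval, if_neg hχ]; ring
      rw [hveq]
      exact lt_of_lt_of_le (est1 _ hpu hc) (min_le_left _ _)
    · have hteq : t = bT := Subtype.ext (by simpa [hbT] using hc)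
      have hveq : ufun.1 (w, bT) - f.1 (w, bT) = 0 := by
        rw [huval, hwval, if_pos ⟨hb2star, le_rfl⟩]
        simp only [hcorr]
        ring
      rw [hteq, hveq]
      simpa using hδf
    · have hχ : ¬ (β2 < (⟨w,t⟩ : W × T o).2.1 ∧ (⟨w,t⟩ : W × T o).2.1 ≤ bstar) :=
        fun hcc => hc hcc.2
      have hveq : ufun.1 (w, t) - f.1 (w, t) = d.1 (w, t) - g.1 (w, t) := by
        rw [huval, hwval, if_neg hχ]; ring
      rw [hveq]
      exact lt_of_lt_of_le (est2 _ hpu hc) (min_le_left _ _)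
  -- estimate B
  have estB : ∀ p ∈ Fg, |wfun.1 p - g.1 p| < δg := by
    rintro ⟨w, t⟩ hp
    have hpu : (w, t) ∈ Ff ∪ Fg := Finset.mem_union_right _ hp
    rcases hcases _ hpu with hc | hc | hc
    · have hlt2 : t.1 < β2 := lt_of_le_of_lt hc (hseq_mono (Nat.lt_succ_self n))
      have hχ : ¬ (β2 < (⟨w,t⟩ : W × T o).2.1 ∧ (⟨w,t⟩ : W × T o).2.1 ≤ bstar) :=
        fun hcc => absurd hcc.1 (not_lt.2 hlt2.le)
      have hveq : wfun.1 (w, t) - g.1 (w, t) = d.1 (w, t) - g.1 (w, t) := by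
        rw [hwval, if_neg hχ]; ring
      rw [hveq]
      exact lt_of_lt_of_le (est1 _ hpu hc) (min_le_right _ _)
    · have hteq : t = bT := Subtype.ext (by simpa [hbT] using hc)
      have hveq : wfun.1 (w, bT) - g.1 (w, bT) = 0 := by
        rw [hwval, if_pos ⟨hb2star, le_rfl⟩]
        simp only [hcorr]
        ring
      rw [hteq, hveq]
      simpa using hδg
    · have hχ : ¬ (β2 < (⟨w,t⟩ : W × T o).2.1 ∧ (⟨w,t⟩ : W × T o).2.1 ≤ bstar) :=
        fun hcc => hc hcc.2
      have hveq : wfun.1 (w, t) - g.1 (w, t) = d.1 (w, t) - g.1 (w, t) := by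
        rw [hwval, if_neg hχ]; ring
      rw [hveq]
      exact lt_of_lt_of_le (est2 _ hpu hc) (min_le_right _ _)
  -- estimates C and D
  have estCD : ∀ p ∈ Fch d j,
      (if β2 < p.2.1 ∧ p.2.1 ≤ bstar then corr p.1 else 0) = 0 ∧ f.1 p = g.1 p := by
    rintro ⟨w, t⟩ hp
    rcases lt_or_eq_of_le (Set.mem_Iic.1 t.2) with hto | hto
    · have hlt : t.1 < β2 := by
        rw [hb2nxt]
        exact hnxt_bound β1 hb1o i j (w, t) hp hto
      refine ⟨by rw [if_neg (fun hcc => absurd hcc.1 (not_lt.2 hlt.le))], ?_⟩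
      exact (hgval_le w t (le_of_lt (lt_of_lt_of_le hlt hb2star.le))).symm
    · have hteq : t = topp o := Subtype.ext hto
      refine ⟨by rw [if_neg (fun hcc => absurd hcc.2 (by rw [show (⟨w,t⟩ : W × T o).2.1 = o from hto]; exact not_le.2 hbstar_lt))], ?_⟩
      rw [hteq]
      exact (hgtop w).symm
  have estC : ∀ p ∈ Fch d j, |ufun.1 p - d.1 p| < δch d j := by
    intro p hp
    have hveq : ufun.1 p - d.1 p = 0 := by
      rw [huval, hwval, (estCD p hp).1, (estCD p hp).2]; ring
    rw [hveq]
    simpa using hδch d j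
  have estD : ∀ p ∈ Fch d j, |wfun.1 p - d.1 p| < δch d j := by
    intro p hp
    have hveq : wfun.1 p - d.1 p = 0 := by
      rw [hwval, (estCD p hp).1]; ring
    rw [hveq]
    simpa using hδch d j
  -- conclusion
  have hA : |ψ ufun - ψ f| < ε := hFf ufun estA
  have hB : |ψ wfun - ψ g| < ε := hFg wfun estB
  have hC : |ψ ufun - ψ d| < 1 / (j + 1) := hFch d j ufun estC
  have hD : |ψ wfun - ψ d| < 1 / (j + 1) := hFch d j wfun estD
  have hA' : |ψ f - ψ ufun| < ε := by rw [abs_sub_comm]; exact hA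
  have hD' : |ψ d - ψ wfun| < 1 / (j + 1) := by rw [abs_sub_comm]; exact hD
  have s1 : |ψ f - ψ g| ≤ |ψ f - ψ ufun| + |ψ ufun - ψ g| := abs_sub_le _ _ _
  have s2 : |ψ ufun - ψ g| ≤ |ψ ufun - ψ d| + |ψ d - ψ g| := abs_sub_le _ _ _
  have s3 : |ψ d - ψ g| ≤ |ψ d - ψ wfun| + |ψ wfun - ψ g| := abs_sub_le _ _ _
  have hEeq : E = |ψ f - ψ g| := hE
  have hεeq : ε = E / 3 := hεdef
  linarith


lemma isClopen_le_sub {S : Set Ordinal.{u}} (c : Ordinal.{u}) :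
    IsClopen {t : ↥S | t.1 ≤ c} := by
  constructor
  · exact (isClosed_Iic (a := c)).preimage continuous_subtype_val
  · have hset : {t : ↥S | t.1 ≤ c} = Subtype.val ⁻¹' (Iio (c + 1)) := by
      ext t; simp [Order.lt_add_one_iff]
    rw [hset]
    exact (isOpen_Iio (a := c + 1)).preimage continuous_subtype_val

lemma exists_denseSub {Y : Type u} [TopologicalSpace Y] {N : Set (Set Y)} (hN : IsNetwork N) :
    ∃ (ι : Type u) (e : ι → Y), #ι ≤ #N ∧ Dense (Set.range e) := by
  refine ⟨{s : ↥N // (s : Set Y).Nonempty}, fun s => s.2.choose, Cardinal.mk_subtype_le _, ?_⟩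
  rw [dense_iff_inter_open]
  rintro U hU ⟨y, hy⟩
  obtain ⟨s, hsN, hys, hsU⟩ := hN y U hU hy
  refine ⟨(⟨⟨s, hsN⟩, ⟨y, hys⟩⟩ : {s : ↥N // (s : Set Y).Nonempty}).2.choose, ?_, ?_⟩
  · exact hsU (⟨⟨s, hsN⟩, ⟨y, hys⟩⟩ : {s : ↥N // (s : Set Y).Nonempty}).2.choose_spec
  · exact mem_range_self _

lemma mem_closure_of_iSup {o lam : Ordinal.{u}} (hlam : lam ≤ o) {sq : ℕ → Ordinal.{u}}
    (hmono : StrictMono sq) (hsup : lam = iSup sq) :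
    (⟨lam, Set.mem_Iic.2 hlam⟩ : T o) ∈ closure {t : T o | t.1 < lam} := by
  rw [closure_subtype]
  have himg : (Subtype.val '' {t : T o | t.1 < lam}) = Iio lam := by
    ext γ
    constructor
    · rintro ⟨t, ht, rfl⟩; exact ht
    · intro hγ
      exact ⟨⟨γ, Set.mem_Iic.2 (le_of_lt (lt_of_lt_of_le hγ hlam))⟩, hγ, rfl⟩
  rw [himg]
  rw [Ordinal.mem_closure_iff_iSup]
  refine ⟨ULift.{u} ℕ, ⟨⟨0⟩⟩, fun n => sq n.down, fun n => ?_, ?_⟩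
  · have : sq n.down < sq (n.down + 1) := hmono (Nat.lt_succ_self _)
    have h2 : sq (n.down + 1) ≤ iSup sq := Ordinal.le_iSup sq _
    exact lt_of_lt_of_le this (hsup ▸ h2)
  · show (⨆ n : ULift.{u} ℕ, sq n.down) = lam
    apply le_antisymm
    · apply ciSup_le
      intro n
      rw [hsup]
      exact Ordinal.le_iSup sq n.down
    · rw [hsup]
      exact ciSup_le fun n => le_ciSup (Ordinal.bddAbove_range _) (ULift.up n)

lemma exists_sliceBound {o : Ordinal.{u}} {τ : Cardinal.{u}} (hτ : τ.IsRegular) (hu : ℵ₀ < τ)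
    (ho : o = τ.ord) {ιY ιX : Type u} (hYc : #ιY < τ) (hXc : #ιX < τ)
    (bY : ιY → T o → Ordinal.{u}) (bX : ιX → T o → Ordinal.{u})
    (hbY : ∀ i t, bY i t < o) (hbX : ∀ i t, bX i t < o)
    {α : Ordinal.{u}} (hα : α < o) :
    ∃ β, α < β ∧ β < o ∧ (∀ i t, (t.1 ≤ α ∨ t.1 = o) → bY i t ≤ β) ∧
      (∀ i t, (t.1 ≤ α ∨ t.1 = o) → bX i t ≤ β) := by
  have hol : Order.IsSuccLimit o := ho ▸ Cardinal.isSuccLimit_ord hτ.aleph0_le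
  have hα1 : α + 1 < o := by rw [Ordinal.add_one_eq_succ]; exact hol.succ_lt hα
  set dec : Option ((α + 1).ToType) → T o := fun e =>
    Option.rec (topp o) (fun t => ⟨((Ordinal.ToType.mk (o := α + 1)).symm t).1,
      Set.mem_Iic.2 (le_of_lt (lt_of_lt_of_le ((Ordinal.ToType.mk (o := α + 1)).symm t).2 hα1.le))⟩) e
    with hdec
  have hsur : ∀ t : T o, (t.1 ≤ α ∨ t.1 = o) → ∃ e, dec e = t := by
    rintro t (ht | ht)
    · refine ⟨some (Ordinal.ToType.mk (o := α + 1) ⟨t.1, ?_⟩), ?_⟩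
      · rw [mem_Iio, Ordinal.add_one_eq_succ, Order.lt_succ_iff]; exact ht
      · apply Subtype.ext
        simp [hdec]
    · exact ⟨none, Subtype.ext (by simp only [hdec]; exact ht.symm)⟩
  set fB : (ιY ⊕ ιX) × Option ((α + 1).ToType) → Ordinal.{u} := fun z =>
    Sum.elim (fun iy => bY iy (dec z.2)) (fun ix => bX ix (dec z.2)) z.1 with hfB
  refine ⟨max (α + 1) (iSup fB), ?_, ?_, ?_, ?_⟩
  · calc α < α + 1 := by rw [Ordinal.add_one_eq_succ]; exact Order.lt_succ _
      _ ≤ _ := le_max_left _ _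
  · apply max_lt hα1
    rw [ho]
    apply Cardinal.iSup_lt_ord_of_isRegular hτ
    · rw [Cardinal.mk_prod]
      simp only [Cardinal.mk_sum, Cardinal.lift_id]
      apply Cardinal.mul_lt_of_lt hτ.aleph0_le
      · exact Cardinal.add_lt_of_lt hτ.aleph0_le hYc hXc
      · rw [Cardinal.mk_option, Cardinal.mk_toType]
        exact Cardinal.add_lt_of_lt hτ.aleph0_le (Cardinal.lt_ord.1 (ho ▸ hα1))
          (Cardinal.one_lt_aleph0.trans_le hτ.aleph0_le)
    · intro z
      rw [← ho]
      rcases z with ⟨iy | ix, e⟩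
      · exact hbY _ _
      · exact hbX _ _
  · intro i t ht
    obtain ⟨e, he⟩ := hsur t ht
    have h1 : bY i t = fB (Sum.inl i, e) := by simp only [hfB, Sum.elim_inl, he]
    rw [h1]
    exact le_trans (Ordinal.le_iSup fB _) (le_max_right _ _)
  · intro i t ht
    obtain ⟨e, he⟩ := hsur t ht
    have h1 : bX i t = fB (Sum.inr i, e) := by simp only [hfB, Sum.elim_inr, he]
    rw [h1]
    exact le_trans (Ordinal.le_iSup fB _) (le_max_right _ _)


end
end CpPf

open CpPf in
/-- Let `τ` be a regular uncountable cardinal and let `X`, `Y` be Tychonoff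
spaces each admitting a network of cardinality `< τ`. If `Cp (X × [0,τ])` is homeomorphic
to `Cp (Y × [0,τ])`, then there is a non-zero ordinal `λ < τ` with `Cp (X × [0,λ))`
homeomorphic to `Cp (Y × [0,λ))`. -/
theorem statement2 (τ : Cardinal.{u}) (hreg : τ.IsRegular) (hunc : ℵ₀ < τ)
    (X Y : Type u) [TopologicalSpace X] [TopologicalSpace Y] [T35Space X] [T35Space Y]
    (hX : ∃ N : Set (Set X), IsNetwork N ∧ #N < τ)
    (hY : ∃ N : Set (Set Y), IsNetwork N ∧ #N < τ)
    (h : Nonempty (Cp (X × Set.Iic τ.ord) ≃ₜ Cp (Y × Set.Iic τ.ord))) :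
    ∃ lam : Ordinal.{u}, 0 < lam ∧ lam < τ.ord ∧
      Nonempty (Cp (X × Set.Iio lam) ≃ₜ Cp (Y × Set.Iio lam)) := by
  obtain ⟨φ⟩ := h
  obtain ⟨NX, hNX, hNXc⟩ := hX
  obtain ⟨NY, hNY, hNYc⟩ := hY
  have hol : Order.IsSuccLimit (τ.ord) := Cardinal.isSuccLimit_ord hreg.aleph0_le
  obtain ⟨ιX, eX, hιX, hdX⟩ := exists_denseSub hNX
  obtain ⟨ιY, eY, hιY, hdY⟩ := exists_denseSub hNY
  -- supports of evaluation functionals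
  have hsY : ∀ (iy : ιY) (t : T τ.ord), ∃ β, β < τ.ord ∧
      IsSupp τ.ord (fun u : Cp (X × T τ.ord) => (φ u).1 (eY iy, t)) β := fun iy t =>
    exists_supp hNX hNXc hreg hunc rfl ((cont_eval ((eY iy, t) : Y × T τ.ord)).comp φ.continuous)
  have hsX : ∀ (ix : ιX) (t : T τ.ord), ∃ β, β < τ.ord ∧
      IsSupp τ.ord (fun v : Cp (Y × T τ.ord) => (φ.symm v).1 (eX ix, t)) β := fun ix t =>
    exists_supp hNY hNYc hreg hunc rfl
      ((cont_eval ((eX ix, t) : X × T τ.ord)).comp φ.symm.continuous)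
  choose bYf hbYlt hbY using hsY
  choose bXf hbXlt hbX using hsX
  -- the iteration
  have hstep := fun (α : Ordinal.{u}) (hα : α < τ.ord) =>
    exists_sliceBound hreg hunc rfl (lt_of_le_of_lt hιY hNYc) (lt_of_le_of_lt hιX hNXc)
      bYf bXf hbYlt hbXlt hα
  set nxt : Ordinal.{u} → Ordinal.{u} := fun α =>
    if hα : α < τ.ord then (hstep α hα).choose else 0 with hnxt
  have hnxt_gt : ∀ α (hα : α < τ.ord), α < nxt α := by
    intro α hα; simp only [hnxt]; rw [dif_pos hα]; exact (hstep α hα).choose_spec.1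
  have hnxt_lt : ∀ α (hα : α < τ.ord), nxt α < τ.ord := by
    intro α hα; simp only [hnxt]; rw [dif_pos hα]; exact (hstep α hα).choose_spec.2.1
  have hnxt_bY : ∀ α (hα : α < τ.ord) (iy : ιY) (t : T τ.ord),
      (t.1 ≤ α ∨ t.1 = τ.ord) → bYf iy t ≤ nxt α := by
    intro α hα iy t ht; simp only [hnxt]; rw [dif_pos hα]
    exact (hstep α hα).choose_spec.2.2.1 iy t ht
  have hnxt_bX : ∀ α (hα : α < τ.ord) (ix : ιX) (t : T τ.ord),
      (t.1 ≤ α ∨ t.1 = τ.ord) → bXf ix t ≤ nxt α := by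
    intro α hα ix t ht; simp only [hnxt]; rw [dif_pos hα]
    exact (hstep α hα).choose_spec.2.2.2 ix t ht
  set sq : ℕ → Ordinal.{u} := fun n => nxt^[n] 1 with hsq
  have hsq_lt : ∀ n, sq n < τ.ord := by
    intro n
    induction n with
    | zero => simpa [hsq] using Ordinal.one_lt_of_isSuccLimit hol
    | succ k ih =>
      simp only [hsq]; rw [Function.iterate_succ_apply']
      exact hnxt_lt _ (by simpa [hsq] using ih)
  have hsq_succ : ∀ n, sq (n + 1) = nxt (sq n) := by
    intro n; simp only [hsq]; rw [Function.iterate_succ_apply']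
  have hsq_mono : StrictMono sq := by
    apply strictMono_nat_of_lt_succ
    intro n
    rw [hsq_succ]
    exact hnxt_gt _ (hsq_lt n)
  set lam := iSup sq with hlam
  have hlam_lt : lam < τ.ord := by
    rw [hlam]
    apply Cardinal.iSup_lt_ord_lift_of_isRegular hreg (by simpa using hunc)
    exact hsq_lt
  have hsq_le : ∀ n, sq n ≤ lam := fun n => hlam ▸ Ordinal.le_iSup sq n
  have hlam_pos : 0 < lam :=
    lt_of_lt_of_le zero_lt_one (le_trans (le_of_eq (by simp [hsq])) (hsq_le 0))
  -- pointwise goodness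
  have hgoodY_pt : ∀ (iy : ιY) (t : T τ.ord), (t.1 < lam ∨ t.1 = τ.ord) →
      IsSupp τ.ord (fun u : Cp (X × T τ.ord) => (φ u).1 (eY iy, t)) lam := by
    intro iy t ht
    have hble : bYf iy t ≤ lam := by
      rcases ht with ht | ht
      · obtain ⟨n, hn⟩ := Ordinal.lt_iSup_iff.1 (hlam ▸ ht)
        calc bYf iy t ≤ nxt (sq n) := hnxt_bY (sq n) (hsq_lt n) iy t (Or.inl hn.le)
          _ = sq (n + 1) := (hsq_succ n).symm
          _ ≤ lam := hsq_le (n + 1)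
      · calc bYf iy t ≤ nxt (sq 0) := hnxt_bY (sq 0) (hsq_lt 0) iy t (Or.inr ht)
          _ = sq 1 := (hsq_succ 0).symm
          _ ≤ lam := hsq_le 1
    exact (hbY iy t).mono hble hlam_lt
  have hgoodX_pt : ∀ (ix : ιX) (t : T τ.ord), (t.1 < lam ∨ t.1 = τ.ord) →
      IsSupp τ.ord (fun v : Cp (Y × T τ.ord) => (φ.symm v).1 (eX ix, t)) lam := by
    intro ix t ht
    have hble : bXf ix t ≤ lam := by
      rcases ht with ht | ht
      · obtain ⟨n, hn⟩ := Ordinal.lt_iSup_iff.1 (hlam ▸ ht)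
        calc bXf ix t ≤ nxt (sq n) := hnxt_bX (sq n) (hsq_lt n) ix t (Or.inl hn.le)
          _ = sq (n + 1) := (hsq_succ n).symm
          _ ≤ lam := hsq_le (n + 1)
      · calc bXf ix t ≤ nxt (sq 0) := hnxt_bX (sq 0) (hsq_lt 0) ix t (Or.inr ht)
          _ = sq 1 := (hsq_succ 0).symm
          _ ≤ lam := hsq_le 1
    exact (hbX ix t).mono hble hlam_lt
  -- full goodness
  have hgoodY : ∀ (u : Cp (X × T τ.ord)) (y : Y) (t : T τ.ord), (t.1 ≤ lam ∨ t.1 = τ.ord) →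
      (φ (mC τ.ord X lam u)).1 (y, t) = (φ u).1 (y, t) := by
    intro u y t ht
    have hstep1 : ∀ (t' : T τ.ord), (t'.1 < lam ∨ t'.1 = τ.ord) → ∀ y' : Y,
        (φ (mC τ.ord X lam u)).1 (y', t') = (φ u).1 (y', t') := by
      intro t' ht' y'
      have heq : Set.EqOn (fun y'' => (φ (mC τ.ord X lam u)).1 (y'', t'))
          (fun y'' => (φ u).1 (y'', t')) (Set.range eY) := by
        rintro _ ⟨iy, rfl⟩
        exact hgoodY_pt iy t' ht' u
      have hfc : Continuous fun y'' => (φ (mC τ.ord X lam u)).1 (y'', t') :=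
        (φ _).2.comp (continuous_id.prodMk continuous_const)
      have hgc : Continuous fun y'' => (φ u).1 (y'', t') :=
        (φ u).2.comp (continuous_id.prodMk continuous_const)
      exact congrFun (Continuous.ext_on hdY hfc hgc heq) y'
    rcases ht with hle | hto
    · rcases lt_or_eq_of_le hle with hlt | heq2
      · exact hstep1 t (Or.inl hlt) y
      · have hteq : t = ⟨lam, Set.mem_Iic.2 hlam_lt.le⟩ := Subtype.ext heq2
        have hmem := mem_closure_of_iSup hlam_lt.le hsq_mono hlam
        have heqon : Set.EqOn (fun t' => (φ (mC τ.ord X lam u)).1 (y, t'))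
            (fun t' => (φ u).1 (y, t')) {t' : T τ.ord | t'.1 < lam} :=
          fun t' ht' => hstep1 t' (Or.inl ht') y
        have hcl := heqon.closure ((φ _).2.comp (continuous_const.prodMk continuous_id))
          ((φ u).2.comp (continuous_const.prodMk continuous_id))
        rw [hteq]
        exact hcl hmem
    · exact hstep1 t (Or.inr hto) y
  have hgoodX : ∀ (v : Cp (Y × T τ.ord)) (x : X) (t : T τ.ord), (t.1 ≤ lam ∨ t.1 = τ.ord) →
      (φ.symm (mC τ.ord Y lam v)).1 (x, t) = (φ.symm v).1 (x, t) := by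
    intro v x t ht
    have hstep1 : ∀ (t' : T τ.ord), (t'.1 < lam ∨ t'.1 = τ.ord) → ∀ x' : X,
        (φ.symm (mC τ.ord Y lam v)).1 (x', t') = (φ.symm v).1 (x', t') := by
      intro t' ht' x'
      have heq : Set.EqOn (fun x'' => (φ.symm (mC τ.ord Y lam v)).1 (x'', t'))
          (fun x'' => (φ.symm v).1 (x'', t')) (Set.range eX) := by
        rintro _ ⟨ix, rfl⟩
        exact hgoodX_pt ix t' ht' v
      have hfc : Continuous fun x'' => (φ.symm (mC τ.ord Y lam v)).1 (x'', t') :=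
        (φ.symm _).2.comp (continuous_id.prodMk continuous_const)
      have hgc : Continuous fun x'' => (φ.symm v).1 (x'', t') :=
        (φ.symm v).2.comp (continuous_id.prodMk continuous_const)
      exact congrFun (Continuous.ext_on hdX hfc hgc heq) x'
    rcases ht with hle | hto
    · rcases lt_or_eq_of_le hle with hlt | heq2
      · exact hstep1 t (Or.inl hlt) x
      · have hteq : t = ⟨lam, Set.mem_Iic.2 hlam_lt.le⟩ := Subtype.ext heq2
        have hmem := mem_closure_of_iSup hlam_lt.le hsq_mono hlam
        have heqon : Set.EqOn (fun t' => (φ.symm (mC τ.ord Y lam v)).1 (x, t'))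
            (fun t' => (φ.symm v).1 (x, t')) {t' : T τ.ord | t'.1 < lam} :=
          fun t' ht' => hstep1 t' (Or.inl ht') x
        have hcl := heqon.closure ((φ.symm _).2.comp (continuous_const.prodMk continuous_id))
          ((φ.symm v).2.comp (continuous_const.prodMk continuous_id))
        rw [hteq]
        exact hcl hmem
    · exact hstep1 t (Or.inr hto) x
  -- ordinal arithmetic for lam + 2
  have hplus : lam + 1 + 1 = lam + 2 := by rw [add_assoc]; norm_num
  have hLlt : lam + 2 < τ.ord := by
    rw [← hplus, Ordinal.add_one_eq_succ, Ordinal.add_one_eq_succ]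
    exact hol.succ_lt (hol.succ_lt hlam_lt)
  have hLpos : (0 : Ordinal.{u}) < lam + 2 :=
    lt_of_lt_of_le (by norm_num) (le_add_self : (2 : Ordinal.{u}) ≤ lam + 2)
  have hlam1lt : lam + 1 < lam + 2 := by
    rw [← hplus]
    rw [Ordinal.add_one_eq_succ (lam + 1)]
    exact Order.lt_succ _
  have hlamlt2 : lam < lam + 2 := by
    calc lam < lam + 1 := by rw [Ordinal.add_one_eq_succ]; exact Order.lt_succ _
      _ < lam + 2 := hlam1lt
  -- the retraction/embedding pair
  set iK : ↥(Set.Iio (lam + 2)) → T τ.ord := fun γ =>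
    ⟨if γ.1 ≤ lam then γ.1 else τ.ord, by
      split
      · exact Set.mem_Iic.2 (le_trans (by assumption) hlam_lt.le)
      · exact Set.self_mem_Iic⟩ with hiK
  set rK : T τ.ord → ↥(Set.Iio (lam + 2)) := fun t =>
    ⟨if t.1 ≤ lam then t.1 else lam + 1, by
      split
      · exact lt_of_le_of_lt (by assumption) hlamlt2
      · exact hlam1lt⟩ with hrK
  have hiKc : Continuous iK := by
    apply Continuous.subtype_mk
    refine Continuous.if ?_ continuous_subtype_val continuous_const
    intro a ha
    rw [(isClopen_le_sub (S := Set.Iio (lam + 2)) lam).frontier_eq] at ha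
    exact absurd ha (Set.notMem_empty a)
  have hrKc : Continuous rK := by
    apply Continuous.subtype_mk
    refine Continuous.if ?_ continuous_subtype_val continuous_const
    intro a ha
    rw [(isClopen_le_sub (S := Set.Iic τ.ord) lam).frontier_eq] at ha
    exact absurd ha (Set.notMem_empty a)
  have hri : ∀ γ, rK (iK γ) = γ := by
    intro γ
    apply Subtype.ext
    by_cases hγ : γ.1 ≤ lam
    · simp [hiK, hrK, hγ]
    · have hne : ¬ (τ.ord ≤ lam) := not_le.2 hlam_lt
      have hγeq : γ.1 = lam + 1 := by
        apply le_antisymm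
        · have h2 : γ.1 < lam + 1 + 1 := by rw [hplus]; exact γ.2
          rw [Ordinal.add_one_eq_succ (lam + 1), Order.lt_succ_iff] at h2
          exact h2
        · rw [Ordinal.add_one_eq_succ]
          exact Order.succ_le_of_lt (not_le.1 hγ)
      simp [hiK, hrK, hγ, hne, hγeq]
  have hir : ∀ t, iK (rK t) = cap τ.ord lam t := by
    intro t
    by_cases hT : t.1 ≤ lam
    · rw [cap_val_of_le hT]
      apply Subtype.ext
      simp [hiK, hrK, hT]
    · rw [cap_val_of_gt hT]
      have hne : ¬ (lam + 1 ≤ lam) := by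
        rw [Ordinal.add_one_eq_succ]
        exact not_le.2 (Order.lt_succ _)
      apply Subtype.ext
      simp [hiK, hrK, hT, hne, topp]
  -- the restriction and extension operators on Cp
  set RX : Cp (X × T τ.ord) → Cp (X × ↥(Set.Iio (lam + 2))) := fun v =>
    ⟨fun p => v.1 (p.1, iK p.2), v.2.comp (continuous_fst.prodMk (hiKc.comp continuous_snd))⟩
    with hRX
  set EXo : Cp (X × ↥(Set.Iio (lam + 2))) → Cp (X × T τ.ord) := fun w =>
    ⟨fun p => w.1 (p.1, rK p.2), w.2.comp (continuous_fst.prodMk (hrKc.comp continuous_snd))⟩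
    with hEXo
  set RY : Cp (Y × T τ.ord) → Cp (Y × ↥(Set.Iio (lam + 2))) := fun v =>
    ⟨fun p => v.1 (p.1, iK p.2), v.2.comp (continuous_fst.prodMk (hiKc.comp continuous_snd))⟩
    with hRY
  set EYo : Cp (Y × ↥(Set.Iio (lam + 2))) → Cp (Y × T τ.ord) := fun w =>
    ⟨fun p => w.1 (p.1, rK p.2), w.2.comp (continuous_fst.prodMk (hrKc.comp continuous_snd))⟩
    with hEYo
  have hREX : ∀ w, RX (EXo w) = w := by
    intro w
    apply Subtype.ext
    funext p
    show w.1 (p.1, rK (iK p.2)) = w.1 p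
    rw [hri]
  have hREY : ∀ w, RY (EYo w) = w := by
    intro w
    apply Subtype.ext
    funext p
    show w.1 (p.1, rK (iK p.2)) = w.1 p
    rw [hri]
  have hERX : ∀ v, EXo (RX v) = mC τ.ord X lam v := by
    intro v
    apply Subtype.ext
    funext p
    show v.1 (p.1, iK (rK p.2)) = (mC τ.ord X lam v).1 p
    rw [hir, mC_apply]
  have hERY : ∀ v, EYo (RY v) = mC τ.ord Y lam v := by
    intro v
    apply Subtype.ext
    funext p
    show v.1 (p.1, iK (rK p.2)) = (mC τ.ord Y lam v).1 p
    rw [hir, mC_apply]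
  -- the final homeomorphism
  set Φ : Cp (X × ↥(Set.Iio (lam + 2))) → Cp (Y × ↥(Set.Iio (lam + 2))) :=
    fun w => RY (φ (EXo w)) with hΦ
  set Ψ : Cp (Y × ↥(Set.Iio (lam + 2))) → Cp (X × ↥(Set.Iio (lam + 2))) :=
    fun w => RX (φ.symm (EYo w)) with hΨ
  have hiKcase : ∀ γ : ↥(Set.Iio (lam + 2)), (iK γ).1 ≤ lam ∨ (iK γ).1 = τ.ord := by
    intro γ
    by_cases hγ : γ.1 ≤ lam
    · left; simp [hiK, hγ]
    · right; simp [hiK, hγ]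
  have hleft : ∀ w, Ψ (Φ w) = w := by
    intro w
    simp only [hΦ, hΨ]
    rw [hERY]
    have h2 : RX (φ.symm (mC τ.ord Y lam (φ (EXo w)))) = RX (φ.symm (φ (EXo w))) := by
      apply Subtype.ext
      funext p
      show (φ.symm (mC τ.ord Y lam (φ (EXo w)))).1 (p.1, iK p.2) =
        (φ.symm (φ (EXo w))).1 (p.1, iK p.2)
      exact hgoodX (φ (EXo w)) p.1 (iK p.2) (hiKcase p.2)
    rw [h2, φ.symm_apply_apply, hREX]
  have hright : ∀ w, Φ (Ψ w) = w := by
    intro w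
    simp only [hΦ, hΨ]
    rw [hERX]
    have h2 : RY (φ (mC τ.ord X lam (φ.symm (EYo w)))) = RY (φ (φ.symm (EYo w))) := by
      apply Subtype.ext
      funext p
      show (φ (mC τ.ord X lam (φ.symm (EYo w)))).1 (p.1, iK p.2) =
        (φ (φ.symm (EYo w))).1 (p.1, iK p.2)
      exact hgoodY (φ.symm (EYo w)) p.1 (iK p.2) (hiKcase p.2)
    rw [h2, φ.apply_symm_apply, hREY]
  have hΦc : Continuous Φ := by
    apply cont_into
    intro p
    have hEc : Continuous EXo := by
      apply cont_into
      intro q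
      exact cont_eval ((q.1, rK q.2) : X × ↥(Set.Iio (lam + 2)))
    exact (cont_eval ((p.1, iK p.2) : Y × T τ.ord)).comp (φ.continuous.comp hEc)
  have hΨc : Continuous Ψ := by
    apply cont_into
    intro p
    have hEc : Continuous EYo := by
      apply cont_into
      intro q
      exact cont_eval ((q.1, rK q.2) : Y × ↥(Set.Iio (lam + 2)))
    exact (cont_eval ((p.1, iK p.2) : X × T τ.ord)).comp (φ.symm.continuous.comp hEc)
  exact ⟨lam + 2, hLpos, hLlt,
    ⟨Homeomorph.mk (Equiv.mk Φ Ψ hleft hright) hΦc hΨc⟩⟩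
end

section
/- Let X and Y be Tychonoff spaces each having a countable network. If C_p(X × [0,ω₁)) is homeomorphic to C_p(Y × [0,ω₁)), then there exists a non-zero countable ordinal λ such that C_p(X × [0,λ)) is homeomorphic to C_p(Y × [0,λ)). -/
open Cardinal Set

universe u

namespace S3

open Filter Topology

universe v w x

noncomputable section

abbrev O : Set Ordinal.{v} := Set.Iio (Cardinal.aleph 1).ord

lemma omega1_isLimit : Order.IsSuccLimit ((Cardinal.aleph 1).ord : Ordinal.{v}) :=
  Cardinal.isSuccLimit_ord (aleph0_le_aleph 1)

lemma lt_add_one' (a : Ordinal.{v}) : a < a + 1 := by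
  rw [Ordinal.add_one_eq_succ]; exact Order.lt_succ _

lemma succ_mem {a : Ordinal.{v}} (ha : a < (Cardinal.aleph 1).ord) :
    a + 1 < (Cardinal.aleph 1).ord :=
  (Ordinal.add_one_eq_succ a) ▸ omega1_isLimit.succ_lt ha

lemma nat_sup_lt (F : ℕ → Ordinal.{v}) (hF : ∀ n, F n < (Cardinal.aleph 1).ord) :
    (⨆ n, F n) < (Cardinal.aleph 1).ord := by
  refine Cardinal.iSup_lt_ord_lift_of_isRegular Cardinal.isRegular_aleph_one ?_ hF
  simpa using aleph0_lt_aleph_one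

lemma countable_Iio {o : Ordinal.{v}} (ho : o < (Cardinal.aleph 1).ord) :
    Countable ↥(Set.Iio o) := by
  have h1 : o.card ≤ ℵ₀ :=
    Order.lt_succ_iff.1 (by rw [Cardinal.succ_aleph0]; exact Cardinal.lt_ord.1 ho)
  have h2 : #↥(Set.Iio o) ≤ ℵ₀ := by
    rw [Ordinal.mk_Iio_ordinal]
    exact (Cardinal.lift_le.2 h1).trans (by simp)
  exact Cardinal.mk_le_aleph0_iff.1 h2

lemma exists_ub {ι : Sort*} [Countable ι] (f : ι → ↥(O.{v})) : ∃ b : ↥(O.{v}), ∀ i, f i ≤ b := by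
  cases isEmpty_or_nonempty ι
  · exact ⟨⟨0, omega1_isLimit.pos⟩, fun i => isEmptyElim i⟩
  · obtain ⟨g, hg⟩ := exists_surjective_nat ι
    set F : ℕ → Ordinal.{v} := fun n => (f (g n)).1 with hF
    have hFlt : ∀ n, F n < (Cardinal.aleph 1).ord := fun n => (f (g n)).2
    refine ⟨⟨_, nat_sup_lt F hFlt⟩, fun i => ?_⟩
    obtain ⟨n, rfl⟩ := hg i
    exact Subtype.coe_le_coe.1 (le_ciSup (Ordinal.bddAbove_range F) n)

lemma tendsto_sup {s : ℕ → ↥(O.{v})} (hmono : Monotone fun n => (s n).1) (l : ↥(O.{v}))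
    (hl : l.1 = ⨆ n, (s n).1) : Tendsto s atTop (𝓝 l) := by
  rw [Topology.IsInducing.subtypeVal.tendsto_nhds_iff]
  show Tendsto (fun n => (s n).1) atTop (𝓝 l.1)
  rw [hl]
  exact tendsto_atTop_ciSup hmono (Ordinal.bddAbove_range _)

lemma ev_const (g : ↥(O.{v}) → ℝ) (hg : Continuous g) :
    ∃ b : ↥(O.{v}), ∀ γ : ↥(O.{v}), b.1 ≤ γ.1 → g γ = g b := by
  have stepA : ∀ ε : ℝ, 0 < ε → ∃ b : ↥(O.{v}), ∀ γ δ : ↥(O.{v}),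
      b.1 ≤ γ.1 → b.1 ≤ δ.1 → |g γ - g δ| ≤ ε := by
    intro ε hε
    by_contra hcon
    push_neg at hcon
    choose Γ Δ h1 h2 h3 using hcon
    have hstep : ∀ b : ↥(O.{v}), (max (Γ b).1 (Δ b).1 + 1) ∈ O.{v} := fun b =>
      succ_mem (max_lt (Γ b).2 (Δ b).2)
    let s : ℕ → ↥(O.{v}) := fun n => Nat.rec ⟨0, omega1_isLimit.pos⟩
      (fun _ p => ⟨max (Γ p).1 (Δ p).1 + 1, hstep p⟩) n
    have hsucc : ∀ n, (s (n + 1)).1 = max (Γ (s n)).1 (Δ (s n)).1 + 1 := fun n => rfl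
    have hΓle : ∀ n, (s n).1 ≤ (Γ (s n)).1 := fun n => h1 (s n)
    have hΔle : ∀ n, (s n).1 ≤ (Δ (s n)).1 := fun n => h2 (s n)
    have hΓlt : ∀ n, (Γ (s n)).1 ≤ (s (n + 1)).1 := fun n => by
      rw [hsucc]; exact le_of_lt ((le_max_left _ _).trans_lt (lt_add_one' _))
    have hΔlt : ∀ n, (Δ (s n)).1 ≤ (s (n + 1)).1 := fun n => by
      rw [hsucc]; exact le_of_lt ((le_max_right _ _).trans_lt (lt_add_one' _))
    have hmono : Monotone fun n => (s n).1 :=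
      monotone_nat_of_le_succ fun n => (hΓle n).trans (hΓlt n)
    set l : ↥(O.{v}) := ⟨⨆ n, (s n).1, nat_sup_lt _ fun n => (s n).2⟩ with hldef
    have hslv : Tendsto (fun n => (s n).1) atTop (𝓝 l.1) := by
      rw [hldef]; exact tendsto_atTop_ciSup hmono (Ordinal.bddAbove_range _)
    have hsl1 : Tendsto (fun n => (s (n + 1)).1) atTop (𝓝 l.1) :=
      hslv.comp (tendsto_add_atTop_nat 1)
    have hΓt : Tendsto (fun n => Γ (s n)) atTop (𝓝 l) := by
      rw [Topology.IsInducing.subtypeVal.tendsto_nhds_iff]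
      exact tendsto_of_tendsto_of_tendsto_of_le_of_le hslv hsl1 hΓle hΓlt
    have hΔt : Tendsto (fun n => Δ (s n)) atTop (𝓝 l) := by
      rw [Topology.IsInducing.subtypeVal.tendsto_nhds_iff]
      exact tendsto_of_tendsto_of_tendsto_of_le_of_le hslv hsl1 hΔle hΔlt
    have hgt : Tendsto (fun n => |g (Γ (s n)) - g (Δ (s n))|) atTop (𝓝 0) := by
      have := ((hg.continuousAt.tendsto.comp hΓt).sub (hg.continuousAt.tendsto.comp hΔt)).abs
      simpa using this
    obtain ⟨n, hn⟩ := (hgt.eventually_lt_const hε).exists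
    exact absurd (h3 (s n)) (not_lt.2 hn.le)
  have hA : ∀ n : ℕ, ∃ b : ↥(O.{v}), ∀ γ δ : ↥(O.{v}),
      b.1 ≤ γ.1 → b.1 ≤ δ.1 → |g γ - g δ| ≤ 1 / (n + 1) := fun n =>
    stepA _ (by positivity)
  choose b hb using hA
  set B : ↥(O.{v}) := ⟨⨆ n, (b n).1, nat_sup_lt _ fun n => (b n).2⟩ with hBdef
  have hble : ∀ n, (b n).1 ≤ B.1 := fun n => le_ciSup (Ordinal.bddAbove_range _) n
  refine ⟨B, fun γ hγ => ?_⟩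
  refine eq_of_forall_dist_le fun ε hε => ?_
  obtain ⟨n, hn⟩ := exists_nat_one_div_lt hε
  rw [Real.dist_eq]
  exact le_trans (hb n γ B ((hble n).trans hγ) (hble n)) hn.le

variable {Z : Type*} [TopologicalSpace Z]

def Eset (Z : Type*) [TopologicalSpace Z] (b : ↥(O.{v})) : Set (Cp (Z × ↥(O.{v}))) :=
  {f | ∀ z : Z, ∀ γ : ↥(O.{v}), b.1 ≤ γ.1 → f.1 (z, γ) = f.1 (z, b)}

lemma Eset_mono {b c : ↥(O.{v})} (h : b.1 ≤ c.1) : Eset Z b ⊆ Eset Z c := by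
  intro f hf z γ hγ
  rw [hf z γ (le_trans h hγ), hf z c h]

lemma isClosed_Eset (b : ↥(O.{v})) : IsClosed (Eset Z b) := by
  have : Eset Z b = ⋂ (z : Z), ⋂ (γ : ↥(O.{v})), ⋂ (_ : b.1 ≤ γ.1),
      {f : Cp (Z × ↥(O.{v})) | f.1 (z, γ) = f.1 (z, b)} := by
    ext f; simp [Eset]
  rw [this]
  refine isClosed_iInter fun z => isClosed_iInter fun γ => isClosed_iInter fun _ => ?_
  exact isClosed_eq ((continuous_apply ((z, γ) : Z × ↥(O.{v}))).comp continuous_subtype_val)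
    ((continuous_apply ((z, b) : Z × ↥(O.{v}))).comp continuous_subtype_val)

lemma mem_Eset_total {D : Set Z} (hDc : D.Countable) (hDd : Dense D) (f : Cp (Z × ↥(O.{v}))) :
    ∃ b : ↥(O.{v}), f ∈ Eset Z b := by
  have hsec : ∀ x : Z, ∃ b : ↥(O.{v}), ∀ γ : ↥(O.{v}), b.1 ≤ γ.1 →
      f.1 (x, γ) = f.1 (x, b) := fun x =>
    ev_const (fun γ => f.1 (x, γ)) (f.2.comp (continuous_const.prodMk continuous_id))
  choose bf hbf using hsec
  have : Countable ↥D := hDc.to_subtype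
  obtain ⟨B, hB⟩ := exists_ub fun d : ↥D => bf d.1
  refine ⟨B, fun z γ hγ => ?_⟩
  have hcont1 : Continuous fun x : Z => f.1 (x, γ) :=
    f.2.comp (continuous_id.prodMk continuous_const)
  have hcont2 : Continuous fun x : Z => f.1 (x, B) :=
    f.2.comp (continuous_id.prodMk continuous_const)
  have hclosed : IsClosed {x : Z | f.1 (x, γ) = f.1 (x, B)} := isClosed_eq hcont1 hcont2
  have hsub : D ⊆ {x : Z | f.1 (x, γ) = f.1 (x, B)} := by
    intro x hx
    have hbB : (bf x).1 ≤ B.1 := Subtype.coe_le_coe.2 (hB ⟨x, hx⟩)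
    show f.1 (x, γ) = f.1 (x, B)
    rw [hbf x γ (hbB.trans hγ), hbf x B hbB]
  exact (hclosed.closure_subset_iff.2 hsub) (hDd z)

lemma dense_of_network {N : Set (Set Z)} (hN : IsNetwork N) (hNc : N.Countable) :
    ∃ D : Set Z, D.Countable ∧ Dense D := by
  cases isEmpty_or_nonempty Z
  · exact ⟨∅, countable_empty, fun x => isEmptyElim x⟩
  · classical
    have : Countable ↥N := hNc.to_subtype
    let p : ↥N → Z := fun s => if h : (s.1).Nonempty then h.choose else Classical.arbitrary Z
    refine ⟨Set.range p, countable_range p, fun x => ?_⟩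
    rw [mem_closure_iff]
    intro o ho hx
    obtain ⟨s, hsN, hxs, hso⟩ := hN x o ho hx
    have hne : s.Nonempty := ⟨x, hxs⟩
    refine ⟨p ⟨s, hsN⟩, hso ?_, mem_range_self _⟩
    show (if h : s.Nonempty then h.choose else Classical.arbitrary Z) ∈ s
    rw [dif_pos hne]
    exact hne.choose_spec

lemma cp_separable {W : Type*} [TopologicalSpace W] {N : Set (Set W)} (hN : IsNetwork N)
    (hNc : N.Countable) : ∃ D : Set (Cp W), D.Countable ∧ Dense D := by
  classical
  have hcN : Countable ↥N := hNc.to_subtype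
  let ι := List (↥N × ℚ × ℚ)
  let M : ι → Set (Cp W) := fun L =>
    {f | ∀ p ∈ L, ∀ w ∈ (p.1.1 : Set W), (p.2.1 : ℝ) < f.1 w ∧ f.1 w < (p.2.2 : ℝ)}
  let z : Cp W := ⟨fun _ => 0, continuous_const⟩
  let pick : ι → Cp W := fun L => if h : (M L).Nonempty then h.choose else z
  refine ⟨Set.range pick, countable_range _, fun f => ?_⟩
  rw [mem_closure_iff]
  intro U hU hfU
  obtain ⟨V, hV, hUV⟩ := isOpen_induced_iff.1 hU
  have hfV : f.1 ∈ V := by rw [← hUV] at hfU; exact hfU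
  obtain ⟨I, uu, hu, hIu⟩ := isOpen_pi_iff.1 hV f.1 hfV
  have hch : ∀ w : {x // x ∈ I}, ∃ t : ↥N × ℚ × ℚ, w.1 ∈ (t.1.1 : Set W) ∧
      (∀ x ∈ (t.1.1 : Set W), (t.2.1 : ℝ) < f.1 x ∧ f.1 x < (t.2.2 : ℝ)) ∧
      (∀ y : ℝ, (t.2.1 : ℝ) < y → y < (t.2.2 : ℝ) → y ∈ uu w.1) := by
    rintro ⟨w, hw⟩
    obtain ⟨houp, hfw⟩ := hu w hw
    obtain ⟨ε, hε, hball⟩ := Metric.isOpen_iff.1 houp _ hfw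
    obtain ⟨q₁, hq₁, hq₁'⟩ := exists_rat_btwn (show f.1 w - ε < f.1 w by linarith)
    obtain ⟨q₂, hq₂, hq₂'⟩ := exists_rat_btwn (show f.1 w < f.1 w + ε by linarith)
    have hpre : IsOpen (f.1 ⁻¹' Set.Ioo (q₁ : ℝ) (q₂ : ℝ)) := isOpen_Ioo.preimage f.2
    obtain ⟨s, hsN, hws, hsub⟩ := hN w _ hpre ⟨hq₁', hq₂⟩
    refine ⟨⟨⟨s, hsN⟩, q₁, q₂⟩, hws, fun x hx => hsub hx, fun y hy1 hy2 => hball ?_⟩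
    rw [Metric.mem_ball, Real.dist_eq, abs_lt]
    constructor <;> [linarith; linarith]
  choose t ht1 ht2 ht3 using hch
  let L : ι := I.attach.toList.map t
  have hfL : f ∈ M L := by
    intro p hp w hw
    obtain ⟨a, _, rfl⟩ := List.mem_map.1 hp
    exact ht2 a w hw
  have hML : M L ⊆ U := by
    intro g hg
    have hgV : g.1 ∈ V := by
      apply hIu
      intro w hw
      have hmem : t ⟨w, hw⟩ ∈ L :=
        List.mem_map.2 ⟨⟨w, hw⟩, by simp [Finset.mem_toList], rfl⟩
      have := hg (t ⟨w, hw⟩) hmem w (ht1 ⟨w, hw⟩)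
      exact ht3 ⟨w, hw⟩ _ this.1 this.2
    rw [← hUV]; exact hgV
  have hne : (M L).Nonempty := ⟨f, hfL⟩
  refine ⟨pick L, hML ?_, mem_range_self L⟩
  show (if h : (M L).Nonempty then h.choose else z) ∈ M L
  rw [dif_pos hne]; exact hne.choose_spec

lemma prod_network {Z W : Type*} [TopologicalSpace Z] [TopologicalSpace W] [Countable W]
    {N : Set (Set Z)} (hN : IsNetwork N) (hNc : N.Countable) :
    ∃ M : Set (Set (Z × W)), IsNetwork M ∧ M.Countable := by
  refine ⟨(fun p : Set Z × W => p.1 ×ˢ ({p.2} : Set W)) '' (N ×ˢ (univ : Set W)), ?_,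
    (hNc.prod countable_univ).image _⟩
  rintro ⟨z, w⟩ U hU hzw
  obtain ⟨V, V', hV, hV', hzV, hwV', hVV'⟩ := isOpen_prod_iff.1 hU z w hzw
  obtain ⟨s, hsN, hzs, hsV⟩ := hN z V hV hzV
  refine ⟨s ×ˢ ({w} : Set W), ⟨⟨s, w⟩, ⟨hsN, trivial⟩, rfl⟩, ⟨hzs, rfl⟩, ?_⟩
  rintro ⟨a, b⟩ ⟨ha, hb⟩
  exact hVV' ⟨hsV ha, by rw [mem_singleton_iff] at hb; rw [hb]; exact hwV'⟩

def homeoE (b : ↥(O.{v})) : ↥(Eset Z b) ≃ₜ Cp (Z × ↥(Set.Iio (b.1 + 1))) := by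
  have hb1 : b.1 + 1 < (Cardinal.aleph 1).ord := succ_mem b.2
  let incl : ↥(Set.Iio (b.1 + 1)) → ↥(O.{v}) := fun t => ⟨t.1, t.2.trans hb1⟩
  have hincl : Continuous incl := Continuous.subtype_mk continuous_subtype_val _
  let tr : (Z × ↥(O.{v})) → (Z × ↥(Set.Iio (b.1 + 1))) := fun p =>
    (p.1, ⟨min p.2.1 b.1, lt_of_le_of_lt (min_le_right _ _) (lt_add_one' b.1)⟩)
  have htr : Continuous tr := by
    refine continuous_fst.prodMk (Continuous.subtype_mk ?_ _)
    exact ((continuous_subtype_val.comp continuous_snd).min continuous_const)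
  refine Homeomorph.mk ⟨fun f => ⟨fun p => f.1.1 (p.1, incl p.2),
      f.1.2.comp (continuous_fst.prodMk (hincl.comp continuous_snd))⟩,
    fun g => ⟨⟨fun p => g.1 (tr p), g.2.comp htr⟩, ?_⟩, ?_, ?_⟩ ?_ ?_
  · intro z γ hγ
    show g.1 (tr (z, γ)) = g.1 (tr (z, b))
    have : tr (z, γ) = tr (z, b) := by
      simp only [tr, Prod.mk.injEq, true_and]
      exact Subtype.ext (by simp [min_eq_right hγ])
    rw [this]
  · intro f
    refine Subtype.ext (Subtype.ext (funext fun p => ?_))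
    show f.1.1 (p.1, incl (tr p).2) = f.1.1 p
    rcases le_total p.2.1 b.1 with hle | hle
    · have h1 : incl (tr p).2 = p.2 := Subtype.ext (min_eq_left hle)
      rw [h1]
    · have h1 : incl (tr p).2 = b := Subtype.ext (min_eq_right hle)
      rw [h1, f.2 p.1 p.2 hle]
  · intro g
    refine Subtype.ext (funext fun p => ?_)
    show g.1 (tr (p.1, incl p.2)) = g.1 p
    have hle : p.2.1 ≤ b.1 := by
      have h2 : p.2.1 < b.1 + 1 := p.2.2
      have h2' : p.2.1 < Order.succ b.1 := by
        rw [← Ordinal.add_one_eq_succ]; exact h2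
      exact Order.le_of_lt_succ h2'
    have h3 : tr (p.1, incl p.2) = p :=
      Prod.ext rfl (Subtype.ext (min_eq_left hle))
    rw [h3]
  · refine Continuous.subtype_mk (continuous_pi fun p => ?_) _
    exact (continuous_apply ((p.1, incl p.2) : Z × ↥(O.{v}))).comp
      (continuous_subtype_val.comp continuous_subtype_val)
  · refine Continuous.subtype_mk (Continuous.subtype_mk (continuous_pi fun p => ?_) _) _
    exact (continuous_apply (tr p)).comp continuous_subtype_val

lemma Eset_sep {N : Set (Set Z)} (hN : IsNetwork N) (hNc : N.Countable) (b : ↥(O.{v})) :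
    ∃ D : Set (Cp (Z × ↥(O.{v}))), D.Countable ∧ D ⊆ Eset Z b ∧ Eset Z b ⊆ closure D := by
  have hb1 : b.1 + 1 < (Cardinal.aleph 1).ord := succ_mem b.2
  haveI : Countable ↥(Set.Iio (b.1 + 1)) := countable_Iio hb1
  obtain ⟨M, hM, hMc⟩ := prod_network (W := ↥(Set.Iio (b.1 + 1))) hN hNc
  obtain ⟨D0, hD0c, hD0d⟩ := cp_separable hM hMc
  let e := homeoE (Z := Z) b
  let D := Subtype.val '' (⇑e.symm '' D0)
  refine ⟨D, (hD0c.image _).image _, ?_, ?_⟩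
  · rintro f ⟨g, ⟨d, _, rfl⟩, rfl⟩
    exact (e.symm d).2
  · intro f hf
    have hdense : Dense (⇑e.symm '' D0) := by
      rw [dense_iff_closure_eq]
      rw [← e.symm.image_closure, hD0d.closure_eq, image_univ]
      exact e.symm.surjective.range_eq
    rw [mem_closure_iff]
    intro U hU hfU
    have hUE : IsOpen (Subtype.val ⁻¹' U : Set ↥(Eset Z b)) := hU.preimage continuous_subtype_val
    have hfE : (⟨f, hf⟩ : ↥(Eset Z b)) ∈ Subtype.val ⁻¹' U := hfU
    obtain ⟨d', hd'U, hd'mem⟩ := mem_closure_iff.1 (hdense ⟨f, hf⟩) _ hUE hfE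
    exact ⟨d'.1, hd'U, mem_image_of_mem _ hd'mem⟩

lemma Eset_limit (s : ℕ → ↥(O.{v})) (hs : ∀ n, (s n).1 < (s (n + 1)).1) (l : ↥(O.{v}))
    (hl : l.1 = ⨆ n, (s n).1) :
    Eset Z l ⊆ closure (⋃ n, Eset Z (s n)) := by
  intro f hf
  have hmono : Monotone fun n => (s n).1 := monotone_nat_of_le_succ fun n => (hs n).le
  have hlt : ∀ n, (s n).1 < l.1 := fun n =>
    lt_of_lt_of_le (hs n) (hl ▸ le_ciSup (Ordinal.bddAbove_range _) (n + 1))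
  have htrmem : ∀ (n : ℕ) (p : Z × ↥(O.{v})), min p.2.1 (s n).1 ∈ O.{v} := fun n p =>
    Set.mem_Iio.2 (lt_of_le_of_lt (min_le_right _ _) (s n).2)
  let g : ℕ → Cp (Z × ↥(O.{v})) := fun n => ⟨fun p => f.1 (p.1, ⟨min p.2.1 (s n).1, htrmem n p⟩),
    f.2.comp (continuous_fst.prodMk (Continuous.subtype_mk
      ((continuous_subtype_val.comp continuous_snd).min continuous_const) _))⟩
  have hgmem : ∀ n, g n ∈ Eset Z (s n) := by
    intro n z γ hγ
    have : (⟨min γ.1 (s n).1, htrmem n (z, γ)⟩ : ↥(O.{v})) =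
        ⟨min (s n).1 (s n).1, htrmem n (z, s n)⟩ :=
      Subtype.ext (by
        show min γ.1 (s n).1 = min (s n).1 (s n).1
        rw [min_eq_right hγ, min_self])
    exact congrArg (fun q => f.1 (z, q)) this
  have hgt : Tendsto g atTop (𝓝 f) := by
    rw [Topology.IsEmbedding.subtypeVal.tendsto_nhds_iff]
    rw [tendsto_pi_nhds]
    intro p
    rcases lt_or_ge p.2.1 l.1 with hp | hp
    · have hex : ∃ m, p.2.1 < (s m).1 := by
        by_contra hcon
        push_neg at hcon
        have : l.1 ≤ p.2.1 := hl ▸ ciSup_le hcon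
        exact absurd hp (not_lt.2 this)
      obtain ⟨m, hm⟩ := hex
      apply tendsto_const_nhds.congr'
      filter_upwards [eventually_ge_atTop m] with n hn
      have hminq : (⟨min p.2.1 (s n).1, htrmem n p⟩ : ↥(O.{v})) = p.2 :=
        Subtype.ext (min_eq_left (le_of_lt (lt_of_lt_of_le hm (hmono hn))))
      show f.1 p = (g n).1 p
      show f.1 p = f.1 (p.1, ⟨min p.2.1 (s n).1, htrmem n p⟩)
      rw [hminq]
    · have hfp : f.1 p = f.1 (p.1, l) := hf p.1 p.2 hp
      have hsl : Tendsto s atTop (𝓝 l) := tendsto_sup hmono l hl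
      have h2 : Tendsto (fun n => ((p.1, s n) : Z × ↥(O.{v}))) atTop (𝓝 (p.1, l)) :=
        tendsto_const_nhds.prodMk_nhds hsl
      have h3 := (f.2.continuousAt (x := (p.1, l))).tendsto.comp h2
      rw [show (𝓝 (f.1 p)) = (𝓝 (f.1 (p.1, l))) by rw [hfp]]
      apply h3.congr
      intro n
      have hminq : (⟨min p.2.1 (s n).1, htrmem n p⟩ : ↥(O.{v})) = s n :=
        Subtype.ext (min_eq_right (le_trans (hlt n).le hp))
      show f.1 (p.1, s n) = f.1 (p.1, ⟨min p.2.1 (s n).1, htrmem n p⟩)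
      rw [hminq]
  exact mem_closure_of_tendsto hgt
    (Eventually.of_forall fun n => subset_iUnion (fun n => Eset Z (s n)) n (hgmem n))

lemma lift_omega1 : Ordinal.lift.{w, v} (Cardinal.aleph 1).ord = (Cardinal.aleph 1).ord := by
  rw [Cardinal.lift_ord, Cardinal.lift_aleph, Ordinal.lift_one]

lemma lift_lt_omega1 {a : Ordinal.{v}} (ha : a < (Cardinal.aleph 1).ord) :
    Ordinal.lift.{w, v} a < Ordinal.lift.{v, w} (Cardinal.aleph 1).ord := by
  rw [lift_omega1]
  have h := Ordinal.lift_lt.{w, v}.2 ha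
  rwa [lift_omega1] at h

lemma exists_transfer (a : ↥(O.{v})) :
    ∃ b : ↥(O.{w}), Ordinal.lift.{v, w} b.1 = Ordinal.lift.{w, v} a.1 := by
  obtain ⟨b, hb⟩ := Ordinal.mem_range_lift_of_le (lift_lt_omega1 a.2).le
  refine ⟨⟨b, Ordinal.lift_lt.1 ?_⟩, hb⟩
  rw [hb, lift_omega1]
  have h := Ordinal.lift_lt.{w, v}.2 a.2
  rwa [lift_omega1] at h

lemma lift_natSup (f : ℕ → Ordinal.{v}) :
    Ordinal.lift.{w, v} (⨆ n, f n) = ⨆ n, Ordinal.lift.{w, v} (f n) := by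
  apply le_antisymm
  · have h1 : (⨆ n, Ordinal.lift.{w, v} (f n)) ≤ Ordinal.lift.{w, v} (⨆ n, f n) :=
      ciSup_le fun n => Ordinal.lift_le.2 (le_ciSup (Ordinal.bddAbove_range _) n)
    obtain ⟨c, hc⟩ := Ordinal.mem_range_lift_of_le h1
    have h2 : ∀ n, f n ≤ c := fun n => Ordinal.lift_le.1 (by
      rw [hc]
      exact le_ciSup (Ordinal.bddAbove_range _) n)
    calc Ordinal.lift.{w, v} (⨆ n, f n) ≤ Ordinal.lift.{w, v} c :=
          Ordinal.lift_le.2 (ciSup_le h2)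
      _ = _ := hc
  · exact ciSup_le fun n => Ordinal.lift_le.2 (le_ciSup (Ordinal.bddAbove_range _) n)

lemma transfer_trans {a : Ordinal.{v}} {b : Ordinal.{w}} {c : Ordinal.{x}}
    (h1 : Ordinal.lift.{v, w} b = Ordinal.lift.{w, v} a)
    (h2 : Ordinal.lift.{v, x} c = Ordinal.lift.{x, v} a) :
    Ordinal.lift.{w, x} c = Ordinal.lift.{x, w} b := by
  have h1' := congrArg (Ordinal.lift.{x}) h1
  have h2' := congrArg (Ordinal.lift.{w}) h2
  rw [Ordinal.lift_lift, Ordinal.lift_lift] at h1' h2'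
  have : Ordinal.lift.{v} (Ordinal.lift.{w, x} c) = Ordinal.lift.{v} (Ordinal.lift.{x, w} b) := by
    rw [Ordinal.lift_lift, Ordinal.lift_lift]
    exact h2'.trans h1'.symm
  exact Ordinal.lift_inj.1 this

lemma transfer_lt {a : Ordinal.{v}} {b : Ordinal.{w}} (h : Ordinal.lift.{w, v} a = Ordinal.lift.{v, w} b)
    (t : Ordinal.{v}) (ht : t < a) :
    ∃ y : Ordinal.{w}, Ordinal.lift.{v, w} y = Ordinal.lift.{w, v} t ∧ y < b := by
  have h1 : Ordinal.lift.{w, v} t ≤ Ordinal.lift.{v, w} b := by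
    rw [← h]; exact (Ordinal.lift_lt.2 ht).le
  obtain ⟨y, hy⟩ := Ordinal.mem_range_lift_of_le h1
  refine ⟨y, hy, Ordinal.lift_lt.1 ?_⟩
  rw [hy, ← h]
  exact Ordinal.lift_lt.2 ht

noncomputable def tmap {a : Ordinal.{v}} {b : Ordinal.{w}}
    (h : Ordinal.lift.{w, v} a = Ordinal.lift.{v, w} b) : ↥(Set.Iio a) → ↥(Set.Iio b) :=
  fun t => ⟨(transfer_lt h t.1 t.2).choose, (transfer_lt h t.1 t.2).choose_spec.2⟩

lemma tmap_spec {a : Ordinal.{v}} {b : Ordinal.{w}}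
    (h : Ordinal.lift.{w, v} a = Ordinal.lift.{v, w} b) (t : ↥(Set.Iio a)) :
    Ordinal.lift.{v, w} (tmap h t).1 = Ordinal.lift.{w, v} t.1 :=
  (transfer_lt h t.1 t.2).choose_spec.1

noncomputable def iioOrderIso {a : Ordinal.{v}} {b : Ordinal.{w}}
    (h : Ordinal.lift.{w, v} a = Ordinal.lift.{v, w} b) : ↥(Set.Iio a) ≃o ↥(Set.Iio b) where
  toFun := tmap h
  invFun := tmap h.symm
  left_inv t := by
    apply Subtype.ext
    apply Ordinal.lift_inj.1
    rw [tmap_spec h.symm, tmap_spec h]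
  right_inv t := by
    apply Subtype.ext
    apply Ordinal.lift_inj.1
    rw [tmap_spec h, tmap_spec h.symm]
  map_rel_iff' := by
    intro t t'
    show tmap h t ≤ tmap h t' ↔ t ≤ t'
    rw [← Subtype.coe_le_coe, ← Subtype.coe_le_coe, ← Ordinal.lift_le.{v},
      tmap_spec h, tmap_spec h, Ordinal.lift_le]

def iioHomeo {a : Ordinal.{v}} {b : Ordinal.{w}}
    (h : Ordinal.lift.{w, v} a = Ordinal.lift.{v, w} b) : ↥(Set.Iio a) ≃ₜ ↥(Set.Iio b) :=
  (iioOrderIso h).toHomeomorph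

def cpCongr {W W' : Type*} [TopologicalSpace W] [TopologicalSpace W'] (e : W ≃ₜ W') :
    Cp W ≃ₜ Cp W' := by
  refine Homeomorph.mk ⟨fun f => ⟨f.1 ∘ ⇑e.symm, f.2.comp e.symm.continuous⟩,
    fun g => ⟨g.1 ∘ ⇑e, g.2.comp e.continuous⟩, ?_, ?_⟩ ?_ ?_
  · intro f
    refine Subtype.ext (funext fun p => ?_)
    show f.1 (e.symm (e p)) = f.1 p
    rw [e.symm_apply_apply]
  · intro g
    refine Subtype.ext (funext fun p => ?_)
    show g.1 (e (e.symm p)) = g.1 p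
    rw [e.apply_symm_apply]
  · refine Continuous.subtype_mk ?_ _
    refine continuous_pi fun p => ?_
    exact (continuous_apply (e.symm p)).comp continuous_subtype_val
  · refine Continuous.subtype_mk ?_ _
    refine continuous_pi fun p => ?_
    exact (continuous_apply (e p)).comp continuous_subtype_val
lemma lift_succ_eq {a : Ordinal.{v}} {b : Ordinal.{w}}
    (h : Ordinal.lift.{w, v} a = Ordinal.lift.{v, w} b) :
    Ordinal.lift.{w, v} (a + 1) = Ordinal.lift.{v, w} (b + 1) := by
  rw [Ordinal.add_one_eq_succ, Ordinal.add_one_eq_succ, Ordinal.lift_succ, Ordinal.lift_succ, h]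

lemma key {X : Type*} {Y : Type*} [TopologicalSpace X] [TopologicalSpace Y]
    {NX : Set (Set X)} (hNX : IsNetwork NX) (hNXc : NX.Countable)
    {NY : Set (Set Y)} (hNY : IsNetwork NY) (hNYc : NY.Countable)
    (φ : Cp (X × ↥(O.{v})) ≃ₜ Cp (Y × ↥(O.{w}))) :
    ∃ (a : ↥(O.{v})) (b : ↥(O.{w})), Ordinal.lift.{v, w} b.1 = Ordinal.lift.{w, v} a.1 ∧
      Nonempty (↥(Eset X a) ≃ₜ ↥(Eset Y b)) := by
  classical
  obtain ⟨DX, hDXc, hDXd⟩ := dense_of_network hNX hNXc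
  obtain ⟨DY, hDYc, hDYd⟩ := dense_of_network hNY hNYc
  have bndX : ∀ b : ↥(O.{v}), ∃ c : ↥(O.{w}), ⇑φ '' Eset X b ⊆ Eset Y c := by
    intro b
    obtain ⟨D, hDc, hDE, hDcl⟩ := Eset_sep hNX hNXc b
    haveI : Countable ↥D := hDc.to_subtype
    have hmem : ∀ d : ↥D, ∃ c : ↥(O.{w}), φ d.1 ∈ Eset Y c := fun d =>
      mem_Eset_total hDYc hDYd (φ d.1)
    choose cd hcd using hmem
    obtain ⟨c, hc⟩ := exists_ub cd
    refine ⟨c, ?_⟩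
    have h1 : ⇑φ '' Eset X b ⊆ ⇑φ '' closure D := image_mono hDcl
    have h2 : ⇑φ '' closure D ⊆ closure (⇑φ '' D) :=
      image_closure_subset_closure_image φ.continuous
    have h3 : ⇑φ '' D ⊆ Eset Y c := by
      rintro _ ⟨d, hd, rfl⟩
      exact Eset_mono (Subtype.coe_le_coe.2 (hc ⟨d, hd⟩)) (hcd ⟨d, hd⟩)
    have h4 : closure (⇑φ '' D) ⊆ Eset Y c := by
      rw [← (isClosed_Eset (Z := Y) c).closure_eq]
      exact closure_mono h3
    exact (h1.trans h2).trans h4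
  have bndY : ∀ b : ↥(O.{w}), ∃ c : ↥(O.{v}), ⇑φ.symm '' Eset Y b ⊆ Eset X c := by
    intro b
    obtain ⟨D, hDc, hDE, hDcl⟩ := Eset_sep hNY hNYc b
    haveI : Countable ↥D := hDc.to_subtype
    have hmem : ∀ d : ↥D, ∃ c : ↥(O.{v}), φ.symm d.1 ∈ Eset X c := fun d =>
      mem_Eset_total hDXc hDXd (φ.symm d.1)
    choose cd hcd using hmem
    obtain ⟨c, hc⟩ := exists_ub cd
    refine ⟨c, ?_⟩
    have h1 : ⇑φ.symm '' Eset Y b ⊆ ⇑φ.symm '' closure D := image_mono hDcl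
    have h2 : ⇑φ.symm '' closure D ⊆ closure (⇑φ.symm '' D) :=
      image_closure_subset_closure_image φ.symm.continuous
    have h3 : ⇑φ.symm '' D ⊆ Eset X c := by
      rintro _ ⟨d, hd, rfl⟩
      exact Eset_mono (Subtype.coe_le_coe.2 (hc ⟨d, hd⟩)) (hcd ⟨d, hd⟩)
    have h4 : closure (⇑φ.symm '' D) ⊆ Eset X c := by
      rw [← (isClosed_Eset (Z := X) c).closure_eq]
      exact closure_mono h3
    exact (h1.trans h2).trans h4
  choose FX hFX using bndX
  choose FY hFY using bndY
  choose T21 hT21 using fun a : ↥(O.{w}) => exists_transfer.{w, v} a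
  choose T12 hT12 using fun a : ↥(O.{v}) => exists_transfer.{v, w} a
  let F : ↥(O.{v}) → ↥(O.{v}) := fun b =>
    ⟨max (max (T21 (FX b)).1 (FY (T12 b)).1) (b.1 + 1),
      max_lt (max_lt (T21 (FX b)).2 (FY (T12 b)).2) (succ_mem b.2)⟩
  let s : ℕ → ↥(O.{v}) := fun n => Nat.rec ⟨0, omega1_isLimit.pos⟩ (fun _ p => F p) n
  have hssucc : ∀ n, (s (n + 1)).1 =
      max (max (T21 (FX (s n))).1 (FY (T12 (s n))).1) ((s n).1 + 1) := fun n => rfl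
  have hs : ∀ n, (s n).1 < (s (n + 1)).1 := fun n => by
    rw [hssucc]
    exact lt_of_lt_of_le (lt_add_one' _) (le_max_right _ _)
  have hmono : Monotone fun n => (s n).1 := monotone_nat_of_le_succ fun n => (hs n).le
  let l : ↥(O.{v}) := ⟨⨆ n, (s n).1, nat_sup_lt _ fun n => (s n).2⟩
  have hlv : l.1 = ⨆ n, (s n).1 := rfl
  have hsnl : ∀ n, (s n).1 ≤ l.1 := fun n => le_ciSup (Ordinal.bddAbove_range _) n
  let s' : ℕ → ↥(O.{w}) := fun n => T12 (s n)
  have hs' : ∀ n, (s' n).1 < (s' (n + 1)).1 := fun n => by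
    have h := Ordinal.lift_lt.{w, v}.2 (hs n)
    rw [← hT12 (s n), ← hT12 (s (n + 1))] at h
    exact Ordinal.lift_lt.1 h
  obtain ⟨l2, hl2⟩ := exists_transfer.{v, w} l
  have hl2sup : l2.1 = ⨆ n, (s' n).1 := by
    have h1 : Ordinal.lift.{v, w} l2.1 = Ordinal.lift.{v, w} (⨆ n, (s' n).1) := by
      rw [lift_natSup, hl2, hlv, lift_natSup]
      congr 1
      funext n
      rw [hT12 (s n)]
    exact Ordinal.lift_inj.1 h1
  have hFXle : ∀ n, (FX (s n)).1 ≤ l2.1 := fun n => by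
    have h1 : (T21 (FX (s n))).1 ≤ l.1 := by
      refine le_trans ?_ (hsnl (n + 1))
      rw [hssucc]
      exact (le_max_left _ _).trans (le_max_left _ _)
    have h2 := Ordinal.lift_le.{w, v}.2 h1
    rw [hT21 (FX (s n)), ← hl2] at h2
    exact Ordinal.lift_le.1 h2
  have hFYle : ∀ n, (FY (s' n)).1 ≤ l.1 := fun n => by
    refine le_trans ?_ (hsnl (n + 1))
    rw [hssucc]
    exact (le_max_right _ _).trans (le_max_left _ _)
  have himg : ⇑φ '' Eset X l ⊆ Eset Y l2 := by
    have hsub := Eset_limit (Z := X) s hs l hlv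
    have h1 : ⇑φ '' Eset X l ⊆ ⇑φ '' closure (⋃ n, Eset X (s n)) := image_mono hsub
    have h2 : ⇑φ '' closure (⋃ n, Eset X (s n)) ⊆ closure (⇑φ '' ⋃ n, Eset X (s n)) :=
      image_closure_subset_closure_image φ.continuous
    have h3 : ⇑φ '' (⋃ n, Eset X (s n)) ⊆ Eset Y l2 := by
      rw [image_iUnion]
      exact iUnion_subset fun n => (hFX (s n)).trans (Eset_mono (hFXle n))
    have h4 : closure (⇑φ '' ⋃ n, Eset X (s n)) ⊆ Eset Y l2 := by
      rw [← (isClosed_Eset (Z := Y) l2).closure_eq]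
      exact closure_mono h3
    exact (h1.trans h2).trans h4
  have hpre : ⇑φ.symm '' Eset Y l2 ⊆ Eset X l := by
    have hsub := Eset_limit (Z := Y) s' hs' l2 hl2sup
    have h1 : ⇑φ.symm '' Eset Y l2 ⊆ ⇑φ.symm '' closure (⋃ n, Eset Y (s' n)) :=
      image_mono hsub
    have h2 : ⇑φ.symm '' closure (⋃ n, Eset Y (s' n)) ⊆
        closure (⇑φ.symm '' ⋃ n, Eset Y (s' n)) :=
      image_closure_subset_closure_image φ.symm.continuous
    have h3 : ⇑φ.symm '' (⋃ n, Eset Y (s' n)) ⊆ Eset X l := by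
      rw [image_iUnion]
      exact iUnion_subset fun n => (hFY (s' n)).trans (Eset_mono (hFYle n))
    have h4 : closure (⇑φ.symm '' ⋃ n, Eset Y (s' n)) ⊆ Eset X l := by
      rw [← (isClosed_Eset (Z := X) l).closure_eq]
      exact closure_mono h3
    exact (h1.trans h2).trans h4
  have heq : ⇑φ '' Eset X l = Eset Y l2 := by
    refine subset_antisymm himg fun e he => ?_
    exact ⟨φ.symm e, hpre (mem_image_of_mem _ he), φ.apply_symm_apply e⟩
  exact ⟨l, l2, hl2, ⟨(φ.image (Eset X l)).trans (Homeomorph.setCongr heq)⟩⟩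

end

end S3

/-- Let `X`, `Y` be Tychonoff spaces with countable networks. If
`Cp (X × [0,ω₁))` is homeomorphic to `Cp (Y × [0,ω₁))`, then there is a non-zero
countable ordinal `λ` such that `Cp (X × [0,λ))` is homeomorphic to `Cp (Y × [0,λ))`. -/
theorem statement3 (X Y : Type u) [TopologicalSpace X] [TopologicalSpace Y]
    [T35Space X] [T35Space Y]
    (hX : ∃ N : Set (Set X), IsNetwork N ∧ N.Countable)
    (hY : ∃ N : Set (Set Y), IsNetwork N ∧ N.Countable)
    (h : Nonempty (Cp (X × Set.Iio (Cardinal.aleph 1).ord) ≃ₜ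
          Cp (Y × Set.Iio (Cardinal.aleph 1).ord))) :
    ∃ lam : Ordinal.{u}, 0 < lam ∧ lam < (Cardinal.aleph 1).ord ∧
      Nonempty (Cp (X × Set.Iio lam) ≃ₜ Cp (Y × Set.Iio lam)) := by
  obtain ⟨φ⟩ := h
  obtain ⟨NX, hNX, hNXc⟩ := hX
  obtain ⟨NY, hNY, hNYc⟩ := hY
  obtain ⟨a, b, hab, ⟨ψ⟩⟩ := S3.key hNX hNXc hNY hNYc φ
  obtain ⟨a0, ha0⟩ := S3.exists_transfer.{_, u} a
  have hb0 := S3.transfer_trans hab ha0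
  have hXiio := S3.lift_succ_eq ha0
  have hYiio := S3.lift_succ_eq hb0.symm
  refine ⟨a0.1 + 1, lt_of_le_of_lt zero_le (S3.lt_add_one' _),
    S3.succ_mem a0.2, ?_⟩
  have e1 : Cp (X × ↥(Set.Iio (a0.1 + 1))) ≃ₜ Cp (X × ↥(Set.Iio (a.1 + 1))) :=
    S3.cpCongr ((Homeomorph.refl X).prodCongr (S3.iioHomeo hXiio))
  have e2 : Cp (Y × ↥(Set.Iio (b.1 + 1))) ≃ₜ Cp (Y × ↥(Set.Iio (a0.1 + 1))) :=
    S3.cpCongr ((Homeomorph.refl Y).prodCongr (S3.iioHomeo hYiio))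
  exact ⟨e1.trans ((S3.homeoE a).symm.trans (ψ.trans ((S3.homeoE b).trans e2)))⟩
end

section
/- Let X and Y be Tychonoff spaces each having a countable network, and let τ be an infinite cardinal. If C_p(X × A(τ)) is homeomorphic to C_p(Y × A(τ)), then C_p(X × A(ω)) is homeomorphic to C_p(Y × A(ω)). -/
open Cardinal Set Filter Topology OnePoint

universe u

namespace S4

open scoped Classical
set_option linter.unusedSectionVars false
set_option linter.unusedTactic false
set_option maxHeartbeats 1000000

variable {Z D E' : Type u} [TopologicalSpace Z] [TopologicalSpace D] [TopologicalSpace E']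

/-- membership in nhds of ∞ for discrete base -/
lemma mem_nhds_infty_discrete [DiscreteTopology D] {V : Set (OnePoint D)} :
    V ∈ 𝓝 (∞ : OnePoint D) ↔ ∞ ∈ V ∧ {d : D | (d : OnePoint D) ∉ V}.Finite := by
  rw [OnePoint.nhds_infty_eq, Filter.coclosedCompact_eq_cocompact, cocompact_eq_cofinite,
    Filter.mem_sup, Filter.mem_map, Filter.mem_cofinite, Filter.mem_pure]
  constructor
  · rintro ⟨h1, h2⟩
    exact ⟨h2, h1⟩
  · rintro ⟨h1, h2⟩
    exact ⟨h2, h1⟩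

/-- retraction of `OnePoint D` collapsing the complement of `S` to `∞` -/
noncomputable def pim (S : Set D) : OnePoint D → OnePoint D :=
  fun a => a.elim ∞ (fun d => if d ∈ S then (d : OnePoint D) else ∞)

@[simp] lemma pim_infty (S : Set D) : pim S (∞ : OnePoint D) = ∞ := rfl

lemma pim_coe_mem (S : Set D) {d : D} (hd : d ∈ S) : pim S (d : OnePoint D) = d := by
  simp [pim, hd]

lemma pim_coe_not_mem (S : Set D) {d : D} (hd : d ∉ S) : pim S (d : OnePoint D) = ∞ := by
  simp [pim, hd]

lemma continuous_pim [DiscreteTopology D] (S : Set D) : Continuous (pim S) := by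
  rw [OnePoint.continuous_iff_from_discrete]
  intro V hV
  rw [pim_infty] at hV
  rcases mem_nhds_infty_discrete.1 hV with ⟨hinf, hfin⟩
  rw [Filter.mem_map, Filter.mem_cofinite]
  have hsub : ((fun d : D => pim S (d : OnePoint D)) ⁻¹' V)ᶜ ⊆ {d : D | (d : OnePoint D) ∉ V} := by
    intro d hd
    simp only [mem_compl_iff, mem_preimage] at hd
    by_cases hdS : d ∈ S
    · rw [pim_coe_mem S hdS] at hd; exact hd
    · rw [pim_coe_not_mem S hdS] at hd; exact absurd hinf hd
  exact hfin.subset hsub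

/-- composition operator on Cp -/
def compCp {W Z' : Type u} [TopologicalSpace W] [TopologicalSpace Z'] (q : W → Z')
    (hq : Continuous q) : Cp Z' → Cp W :=
  fun f => ⟨f.1 ∘ q, f.2.comp hq⟩

lemma continuous_compCp {W Z' : Type u} [TopologicalSpace W] [TopologicalSpace Z'] (q : W → Z')
    (hq : Continuous q) : Continuous (compCp q hq) := by
  apply Continuous.subtype_mk
  apply continuous_pi
  intro w
  exact (continuous_apply (q w)).comp continuous_subtype_val

def ESet (Z D : Type u) [TopologicalSpace Z] [TopologicalSpace D] (S : Set D) :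
    Set (Cp (Z × OnePoint D)) :=
  {f | ∀ d : D, d ∉ S → ∀ z : Z, f.1 (z, (d : OnePoint D)) = f.1 (z, ∞)}

lemma ESet_mono {S T : Set D} (h : S ⊆ T) : ESet Z D S ⊆ ESet Z D T :=
  fun f hf d hd z => hf d (fun hdS => hd (h hdS)) z

lemma isClosed_ESet (S : Set D) : IsClosed (ESet Z D S) := by
  have : ESet Z D S =
      ⋂ (d : D) (_ : d ∉ S) (z : Z),
        {f : Cp (Z × OnePoint D) | f.1 (z, (d : OnePoint D)) = f.1 (z, ∞)} := by
    ext f; simp [ESet]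
  rw [this]
  refine isClosed_iInter fun d => isClosed_iInter fun _ => isClosed_iInter fun z => ?_
  exact isClosed_eq ((continuous_apply (z, (d : OnePoint D))).comp continuous_subtype_val)
    ((continuous_apply (z, (∞ : OnePoint D))).comp continuous_subtype_val)

/-- the truncation retraction on Cp -/
noncomputable def rS [DiscreteTopology D] (S : Set D) : Cp (Z × OnePoint D) → Cp (Z × OnePoint D) :=
  compCp (Prod.map id (pim S)) (continuous_id.prodMap (continuous_pim S))

lemma continuous_rS [DiscreteTopology D] (S : Set D) : Continuous (rS (Z := Z) S) :=
  continuous_compCp _ _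

lemma rS_mem_ESet [DiscreteTopology D] (S : Set D) (f : Cp (Z × OnePoint D)) :
    rS S f ∈ ESet Z D S := by
  intro d hd z
  show f.1 (z, pim S (d : OnePoint D)) = f.1 (z, pim S ∞)
  rw [pim_coe_not_mem S hd, pim_infty]

lemma rS_eq_self [DiscreteTopology D] {S : Set D} {f : Cp (Z × OnePoint D)}
    (hf : f ∈ ESet Z D S) : rS S f = f := by
  apply Subtype.ext
  funext p
  rcases p with ⟨z, a⟩
  induction a using OnePoint.rec with
  | infty => rfl
  | coe d =>
    show f.1 (z, pim S (d : OnePoint D)) = f.1 (z, (d : OnePoint D))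
    by_cases hd : d ∈ S
    · rw [pim_coe_mem S hd]
    · rw [pim_coe_not_mem S hd, hf d hd z]

lemma tendsto_trunc [DiscreteTopology D] (S : ℕ → Set D) (hmono : Monotone S)
    (f : Cp (Z × OnePoint D)) (hf : f ∈ ESet Z D (⋃ n, S n)) :
    Tendsto (fun n => rS (S n) f) atTop (𝓝 f) := by
  rw [tendsto_subtype_rng, tendsto_pi_nhds]
  rintro ⟨z, a⟩
  induction a using OnePoint.rec with
  | infty => exact tendsto_const_nhds
  | coe d =>
    by_cases hd : d ∈ ⋃ n, S n
    · rcases mem_iUnion.1 hd with ⟨n₀, hn₀⟩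
      apply tendsto_const_nhds.congr'
      filter_upwards [eventually_ge_atTop n₀] with n hn
      show f.1 (z, (d : OnePoint D)) = f.1 (z, pim (S n) (d : OnePoint D))
      rw [pim_coe_mem (S n) (hmono hn hn₀)]
    · have : ∀ n, (rS (S n) f).1 (z, (d : OnePoint D)) = f.1 (z, (d : OnePoint D)) := by
        intro n
        show f.1 (z, pim (S n) (d : OnePoint D)) = f.1 (z, (d : OnePoint D))
        rw [pim_coe_not_mem (S n) (fun hmem => hd (mem_iUnion.2 ⟨n, hmem⟩)),
          hf d hd z]
      simp only [this]
      exact tendsto_const_nhds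


lemma support_countable [DiscreteTopology D] {N : Set (Set Z)} (hN : IsNetwork N)
    (hNc : N.Countable) (g : Cp (Z × OnePoint D)) :
    {d : D | ∃ z : Z, g.1 (z, (d : OnePoint D)) ≠ g.1 (z, ∞)}.Countable := by
  set h : Z × OnePoint D → ℝ := fun p => g.1 p - g.1 (p.1, ∞) with hh
  have hcont : Continuous h :=
    g.2.sub (g.2.comp (continuous_fst.prodMk continuous_const))
  -- the level sets
  have key : ∀ n : ℕ, {d : D | ∃ z : Z, 1 / ((n : ℝ) + 1) ≤ |h (z, (d : OnePoint D))|}.Countable := by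
    intro n
    set ε : ℝ := 1 / ((n : ℝ) + 1) with hε
    have hεpos : 0 < ε := by positivity
    -- choice of finite sets for network elements
    have hFF : ∀ M : Set Z, ∃ F : Set D, F.Finite ∧
        ((∃ F' : Set D, F'.Finite ∧ ∀ z ∈ M, ∀ d : D, d ∉ F' → |h (z, (d : OnePoint D))| < ε) →
          ∀ z ∈ M, ∀ d : D, d ∉ F → |h (z, (d : OnePoint D))| < ε) := by
      intro M
      by_cases hex : ∃ F' : Set D, F'.Finite ∧ ∀ z ∈ M, ∀ d : D, d ∉ F' →
          |h (z, (d : OnePoint D))| < ε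
      · exact ⟨hex.choose, hex.choose_spec.1, fun _ => hex.choose_spec.2⟩
      · exact ⟨∅, finite_empty, fun hc => absurd hc hex⟩
    choose FF hFFfin hFFgood using hFF
    have hsub : {d : D | ∃ z : Z, ε ≤ |h (z, (d : OnePoint D))|} ⊆ ⋃ M ∈ N, FF M := by
      rintro d ⟨z, hz⟩
      have hV : {p : Z × OnePoint D | |h p| < ε} ∈ 𝓝 (z, (∞ : OnePoint D)) := by
        apply IsOpen.mem_nhds
        · exact isOpen_lt (continuous_abs.comp hcont) continuous_const
        · show |h (z, ∞)| < ε
          simp [hh, hεpos]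
      rcases mem_nhds_prod_iff.1 hV with ⟨U, hU, W, hW, hUW⟩
      rcases mem_nhds_infty_discrete.1 hW with ⟨_, hWfin⟩
      rcases mem_nhds_iff.1 hU with ⟨O, hOU, hOopen, hzO⟩
      rcases hN z O hOopen hzO with ⟨M, hMN, hzM, hMO⟩
      have hgood : ∀ z' ∈ M, ∀ d' : D, d' ∉ {d : D | (d : OnePoint D) ∉ W} →
          |h (z', (d' : OnePoint D))| < ε := by
        intro z' hz' d' hd'
        simp only [mem_setOf_eq, not_not] at hd'
        exact hUW ⟨hOU (hMO hz'), hd'⟩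
      have := hFFgood M ⟨_, hWfin, hgood⟩ z hzM d
      rw [mem_iUnion₂]
      refine ⟨M, hMN, ?_⟩
      by_contra hdF
      exact absurd hz (not_le.2 (this hdF))
    exact (hNc.biUnion fun M _ => (hFFfin M).countable).mono hsub
  -- union over n
  have : {d : D | ∃ z : Z, g.1 (z, (d : OnePoint D)) ≠ g.1 (z, ∞)} ⊆
      ⋃ n : ℕ, {d : D | ∃ z : Z, 1 / ((n : ℝ) + 1) ≤ |h (z, (d : OnePoint D))|} := by
    rintro d ⟨z, hz⟩
    have hpos : 0 < |h (z, (d : OnePoint D))| := by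
      simp only [hh, abs_pos]
      exact sub_ne_zero_of_ne hz
    rcases exists_nat_one_div_lt hpos with ⟨n, hn⟩
    exact mem_iUnion.2 ⟨n, z, hn.le⟩
  exact (countable_iUnion key).mono this


def deco (S : Set D) : Option ↥S → OnePoint D := fun o => o.elim ∞ (fun s => ((s : D) : OnePoint D))

noncomputable def code (S : Set D) : OnePoint D → Option ↥S :=
  fun a => a.elim none (fun d => if h : d ∈ S then Option.some ⟨d, h⟩ else none)

lemma code_coe_mem (S : Set D) {d : D} (h : d ∈ S) :
    code S (d : OnePoint D) = Option.some ⟨d, h⟩ := by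
  simp [code, h]

lemma code_coe_not_mem (S : Set D) {d : D} (h : d ∉ S) : code S (d : OnePoint D) = none := by
  simp [code, h]

lemma apply_deco_code {S : Set D} {f : Cp (Z × OnePoint D)} (hf : f ∈ ESet Z D S)
    (z : Z) (a : OnePoint D) : f.1 (z, deco S (code S a)) = f.1 (z, a) := by
  induction a using OnePoint.rec with
  | infty => rfl
  | coe d =>
    by_cases h : d ∈ S
    · rw [code_coe_mem S h]; rfl
    · rw [code_coe_not_mem S h]
      exact (hf d h z).symm

lemma ESet_separable {N : Set (Set Z)} (hN : IsNetwork N) (hNc : N.Countable)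
    (S : Set D) (hS : S.Countable) :
    ∃ Q : Set (Cp (Z × OnePoint D)), Q.Countable ∧ ESet Z D S ⊆ closure Q := by
  haveI := hNc.to_subtype
  haveI := hS.to_subtype
  set cell : Finset (↥N × Option ↥S × ℚ × ℚ) → Set (Cp (Z × OnePoint D)) := fun t =>
    {g | g ∈ ESet Z D S ∧ ∀ m ∈ t, ∀ z ∈ (m.1 : Set Z),
      g.1 (z, deco S m.2.1) ∈ Ioo ((m.2.2.1 : ℝ)) ((m.2.2.2 : ℝ))} with hcell
  have hpick : ∀ t, ∃ g : Cp (Z × OnePoint D), (cell t).Nonempty → g ∈ cell t := by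
    intro t
    by_cases hx : (cell t).Nonempty
    · exact ⟨hx.choose, fun _ => hx.choose_spec⟩
    · exact ⟨⟨fun _ => 0, continuous_const⟩, fun hc => absurd hc hx⟩
  choose pick hpickmem using hpick
  refine ⟨Set.range pick, countable_range pick, ?_⟩
  rintro ⟨fv, fc⟩ hf
  rw [mem_closure_iff_nhds]
  intro U hU
  rw [nhds_subtype_eq_comap, Filter.mem_comap] at hU
  rcases hU with ⟨V, hV, hVU⟩
  rw [nhds_pi, Filter.mem_pi] at hV
  rcases hV with ⟨I, hIfin, tt, htt, hIV⟩
  have hdata : ∀ p : Z × OnePoint D, p ∈ hIfin.toFinset → ∃ (q r : ℚ) (M : Set Z),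
      M ∈ N ∧ p.1 ∈ M ∧ (∀ z' ∈ M, fv (z', deco S (code S p.2)) ∈ Ioo (q : ℝ) (r : ℝ)) ∧
      Ioo (q : ℝ) (r : ℝ) ⊆ tt p := by
    intro p _
    rcases Metric.mem_nhds_iff.1 (htt p) with ⟨ε, hεpos, hball⟩
    rcases exists_rat_btwn (show fv p - ε < fv p by linarith) with ⟨q, hq1, hq2⟩
    rcases exists_rat_btwn (show fv p < fv p + ε by linarith) with ⟨r, hr1, hr2⟩
    have hIoo : Ioo (q : ℝ) (r : ℝ) ⊆ tt p := by
      intro x hx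
      apply hball
      rw [Metric.mem_ball, Real.dist_eq, abs_lt]
      exact ⟨by linarith [hx.1], by linarith [hx.2]⟩
    have hcont2 : Continuous (fun z' : Z => fv (z', deco S (code S p.2))) :=
      fc.comp (continuous_id.prodMk continuous_const)
    have hOopen : IsOpen ((fun z' : Z => fv (z', deco S (code S p.2))) ⁻¹' Ioo (q : ℝ) (r : ℝ)) :=
      isOpen_Ioo.preimage hcont2
    have hzmem : p.1 ∈ ((fun z' : Z => fv (z', deco S (code S p.2))) ⁻¹' Ioo (q : ℝ) (r : ℝ)) := by
      rw [mem_preimage]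
      have heq : fv (p.1, deco S (code S p.2)) = fv (p.1, p.2) :=
        apply_deco_code (f := ⟨fv, fc⟩) hf p.1 p.2
      rw [heq]
      exact ⟨hq2, hr1⟩
    rcases hN p.1 _ hOopen hzmem with ⟨M, hMN, hzM, hMsub⟩
    exact ⟨q, r, M, hMN, hzM, fun z' hz' => hMsub hz', hIoo⟩
  choose q r M hMN hzM hMval hIoosub using hdata
  set F : {p // p ∈ hIfin.toFinset} → (↥N × Option ↥S × ℚ × ℚ) :=
    fun pp => (⟨M pp.1 pp.2, hMN pp.1 pp.2⟩, code S pp.1.2, q pp.1 pp.2, r pp.1 pp.2) with hF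
  set t₀ := hIfin.toFinset.attach.image F with ht₀
  have hfcell : (⟨fv, fc⟩ : Cp (Z × OnePoint D)) ∈ cell t₀ := by
    refine ⟨hf, ?_⟩
    intro m hm z hz
    rcases Finset.mem_image.1 hm with ⟨pp, _, rfl⟩
    exact hMval pp.1 pp.2 z hz
  have hg : pick t₀ ∈ cell t₀ := hpickmem t₀ ⟨_, hfcell⟩
  refine ⟨pick t₀, ?_, ⟨t₀, rfl⟩⟩
  apply hVU
  show (pick t₀).1 ∈ V
  apply hIV
  intro p hp
  have hp' : p ∈ hIfin.toFinset := hIfin.mem_toFinset.2 hp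
  have hcond := hg.2 (F ⟨p, hp'⟩) (Finset.mem_image_of_mem F (Finset.mem_attach _ ⟨p, hp'⟩))
    p.1 (hzM p hp')
  have heq : (pick t₀).1 (p.1, deco S (code S p.2)) = (pick t₀).1 (p.1, p.2) :=
    apply_deco_code hg.1 p.1 p.2
  apply hIoosub p hp'
  rw [← heq]
  exact hcond


def jmap (S : Set D) (β : E' ≃ ↥S) : OnePoint E' → OnePoint D :=
  fun a => a.elim ∞ (fun e => (((β e : ↥S) : D) : OnePoint D))

noncomputable def pmap (S : Set D) (β : E' ≃ ↥S) : OnePoint D → OnePoint E' :=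
  fun a => a.elim ∞ (fun d => if h : d ∈ S then ((β.symm ⟨d, h⟩ : E') : OnePoint E') else ∞)

@[simp] lemma jmap_infty (S : Set D) (β : E' ≃ ↥S) : jmap S β ∞ = ∞ := rfl
@[simp] lemma pmap_infty (S : Set D) (β : E' ≃ ↥S) : pmap S β ∞ = ∞ := rfl

lemma jmap_coe (S : Set D) (β : E' ≃ ↥S) (e : E') :
    jmap S β (e : OnePoint E') = (((β e : ↥S) : D) : OnePoint D) := rfl

lemma pmap_coe_mem (S : Set D) (β : E' ≃ ↥S) {d : D} (h : d ∈ S) :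
    pmap S β (d : OnePoint D) = ((β.symm ⟨d, h⟩ : E') : OnePoint E') := by
  simp [pmap, h]

lemma pmap_coe_not_mem (S : Set D) (β : E' ≃ ↥S) {d : D} (h : d ∉ S) :
    pmap S β (d : OnePoint D) = ∞ := by
  simp [pmap, h]

lemma continuous_jmap [DiscreteTopology E'] [DiscreteTopology D] (S : Set D) (β : E' ≃ ↥S) :
    Continuous (jmap S β) := by
  rw [OnePoint.continuous_iff_from_discrete]
  intro V hV
  rw [jmap_infty] at hV
  rcases mem_nhds_infty_discrete.1 hV with ⟨hinf, hfin⟩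
  rw [Filter.mem_map, Filter.mem_cofinite]
  have hinj : Function.Injective (fun e : E' => ((β e : ↥S) : D)) := by
    intro a b hab
    exact β.injective (Subtype.ext hab)
  have : ((fun e : E' => jmap S β (e : OnePoint E')) ⁻¹' V)ᶜ ⊆
      (fun e : E' => ((β e : ↥S) : D)) ⁻¹' {d : D | (d : OnePoint D) ∉ V} := fun e he => he
  exact (hfin.preimage hinj.injOn).subset this

lemma continuous_pmap [DiscreteTopology E'] [DiscreteTopology D] (S : Set D) (β : E' ≃ ↥S) :
    Continuous (pmap S β) := by
  rw [OnePoint.continuous_iff_from_discrete]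
  intro V hV
  rw [pmap_infty] at hV
  rcases mem_nhds_infty_discrete.1 hV with ⟨hinf, hfin⟩
  rw [Filter.mem_map, Filter.mem_cofinite]
  have hsub : ((fun d : D => pmap S β (d : OnePoint D)) ⁻¹' V)ᶜ ⊆
      (fun e : E' => ((β e : ↥S) : D)) '' {e : E' | (e : OnePoint E') ∉ V} := by
    intro d hd
    simp only [mem_compl_iff, mem_preimage] at hd
    by_cases h : d ∈ S
    · rw [pmap_coe_mem S β h] at hd
      refine ⟨β.symm ⟨d, h⟩, hd, ?_⟩
      simp
    · rw [pmap_coe_not_mem S β h] at hd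
      exact absurd hinf hd
  exact (hfin.image _).subset hsub

lemma pmap_jmap (S : Set D) (β : E' ≃ ↥S) (a : OnePoint E') : pmap S β (jmap S β a) = a := by
  induction a using OnePoint.rec with
  | infty => rfl
  | coe e =>
    rw [jmap_coe, pmap_coe_mem S β (β e).2]
    congr 1
    have : (⟨((β e : ↥S) : D), (β e).2⟩ : ↥S) = β e := rfl
    rw [this, Equiv.symm_apply_apply]

lemma jmap_pmap {S : Set D} {β : E' ≃ ↥S} {f : Cp (Z × OnePoint D)} (hf : f ∈ ESet Z D S)
    (z : Z) (a : OnePoint D) : f.1 (z, jmap S β (pmap S β a)) = f.1 (z, a) := by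
  induction a using OnePoint.rec with
  | infty => rfl
  | coe d =>
    by_cases h : d ∈ S
    · rw [pmap_coe_mem S β h, jmap_coe]
      congr 2
      rw [Equiv.apply_symm_apply]
    · rw [pmap_coe_not_mem S β h]
      exact (hf d h z).symm

noncomputable def toE [DiscreteTopology E'] [DiscreteTopology D] (S : Set D) (β : E' ≃ ↥S) :
    Cp (Z × OnePoint E') → ↥(ESet Z D S) := fun g =>
  ⟨compCp (Prod.map id (pmap S β)) (continuous_id.prodMap (continuous_pmap S β)) g, by
    intro d hd z
    show g.1 (z, pmap S β (d : OnePoint D)) = g.1 (z, pmap S β ∞)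
    rw [pmap_coe_not_mem S β hd, pmap_infty]⟩

noncomputable def fromE [DiscreteTopology E'] [DiscreteTopology D] (S : Set D) (β : E' ≃ ↥S) :
    ↥(ESet Z D S) → Cp (Z × OnePoint E') := fun f =>
  compCp (Prod.map id (jmap S β)) (continuous_id.prodMap (continuous_jmap S β)) f.1

lemma continuous_toE [DiscreteTopology E'] [DiscreteTopology D] (S : Set D) (β : E' ≃ ↥S) :
    Continuous (toE (Z := Z) S β) :=
  (continuous_compCp _ _).subtype_mk _

lemma continuous_fromE [DiscreteTopology E'] [DiscreteTopology D] (S : Set D) (β : E' ≃ ↥S) :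
    Continuous (fromE (Z := Z) S β) :=
  (continuous_compCp _ _).comp continuous_subtype_val

noncomputable def homeoESet [DiscreteTopology E'] [DiscreteTopology D]
    (S : Set D) (β : E' ≃ ↥S) : Cp (Z × OnePoint E') ≃ₜ ↥(ESet Z D S) where
  toFun := toE S β
  invFun := fromE S β
  left_inv g := by
    apply Subtype.ext
    funext p
    exact congrArg g.1 (congrArg (Prod.mk p.1) (pmap_jmap S β p.2))
  right_inv f := by
    apply Subtype.ext
    apply Subtype.ext
    funext p
    exact jmap_pmap f.2 p.1 p.2
  continuous_toFun := continuous_toE S β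
  continuous_invFun := continuous_fromE S β


/-- one closing-off step -/
lemma step_lemma {X Y : Type u} [TopologicalSpace X] [TopologicalSpace Y] [DiscreteTopology D]
    {NX : Set (Set X)} (hNX : IsNetwork NX) (hNXc : NX.Countable)
    {NY : Set (Set Y)} (hNY : IsNetwork NY) (hNYc : NY.Countable)
    (ψ : Cp (X × OnePoint D) → Cp (Y × OnePoint D)) (hψ : Continuous ψ)
    (S : Set D) (hS : S.Countable) :
    ∃ T : Set D, T.Countable ∧ ψ '' ESet X D S ⊆ ESet Y D T := by
  obtain ⟨Q, hQc, hQd⟩ := ESet_separable hNX hNXc S hS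
  set T := ⋃ q ∈ Q, {d : D | ∃ y : Y, (ψ q).1 (y, (d : OnePoint D)) ≠ (ψ q).1 (y, ∞)} with hT
  have hTc : T.Countable := hQc.biUnion fun q _ => support_countable hNY hNYc (ψ q)
  refine ⟨T, hTc, ?_⟩
  have h1 : ψ '' ESet X D S ⊆ ψ '' closure Q := Set.image_mono hQd
  have h2 : ψ '' closure Q ⊆ closure (ψ '' Q) := image_closure_subset_closure_image hψ
  have h3 : ψ '' Q ⊆ ESet Y D T := by
    rintro _ ⟨q, hq, rfl⟩
    intro d hd y
    by_contra hne
    exact hd (mem_biUnion hq ⟨y, hne⟩)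
  have h4 : closure (ψ '' Q) ⊆ ESet Y D T := by
    rw [← (isClosed_ESet (Z := Y) T).closure_eq]
    exact closure_mono h3
  exact (h1.trans h2).trans h4

/-- absorption along an increasing sequence of index sets -/
lemma absorb {X Y : Type u} [TopologicalSpace X] [TopologicalSpace Y] [DiscreteTopology D]
    (ψ : Cp (X × OnePoint D) → Cp (Y × OnePoint D)) (hψ : Continuous ψ)
    (S : ℕ → Set D) (hmono : Monotone S)
    (hstep : ∀ n, ψ '' ESet X D (S n) ⊆ ESet Y D (S (n + 1))) :
    ψ '' ESet X D (⋃ n, S n) ⊆ ESet Y D (⋃ n, S n) := by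
  rintro _ ⟨f, hf, rfl⟩
  have tend := tendsto_trunc S hmono f hf
  refine (isClosed_ESet _).mem_of_tendsto ((hψ.tendsto f).comp tend)
    (Filter.Eventually.of_forall fun n => ?_)
  exact ESet_mono (subset_iUnion S (n + 1))
    (hstep n ⟨rS (S n) f, rS_mem_ESet (S n) f, rfl⟩)

end S4

/-- Let `X`, `Y` be Tychonoff spaces with countable networks and let `τ` be an
infinite cardinal. Here `A(τ)` is realized as the one-point compactification `OnePoint D`
of a discrete space `D` of cardinality `τ`, and `A(ω)` as `OnePoint E` for a countably
infinite discrete space `E`. If `Cp (X × A(τ))` is homeomorphic to `Cp (Y × A(τ))`, then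
`Cp (X × A(ω))` is homeomorphic to `Cp (Y × A(ω))`. -/
theorem statement4 (X Y : Type u) [TopologicalSpace X] [TopologicalSpace Y]
    [T35Space X] [T35Space Y]
    (hX : ∃ N : Set (Set X), IsNetwork N ∧ N.Countable)
    (hY : ∃ N : Set (Set Y), IsNetwork N ∧ N.Countable)
    (τ : Cardinal.{u}) (hτ : ℵ₀ ≤ τ)
    (D : Type u) [TopologicalSpace D] [DiscreteTopology D] (hD : #D = τ)
    (E : Type u) [TopologicalSpace E] [DiscreteTopology E] (hE : #E = ℵ₀)
    (h : Nonempty (Cp (X × OnePoint D) ≃ₜ Cp (Y × OnePoint D))) :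
    Nonempty (Cp (X × OnePoint E) ≃ₜ Cp (Y × OnePoint E)) := by
  classical
  obtain ⟨NX, hNX, hNXc⟩ := hX
  obtain ⟨NY, hNY, hNYc⟩ := hY
  obtain ⟨φ⟩ := h
  haveI : Infinite D := Cardinal.infinite_iff.mpr (hD ▸ hτ)
  -- the combined closing-off step
  have stepex : ∀ S : Set D, S.Countable → ∃ T : Set D, S ⊆ T ∧ T.Countable ∧
      (⇑φ '' S4.ESet X D S ⊆ S4.ESet Y D T) ∧ (⇑φ.symm '' S4.ESet Y D S ⊆ S4.ESet X D T) := by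
    intro S hS
    obtain ⟨T1, hT1c, hT1⟩ := S4.step_lemma hNX hNXc hNY hNYc (⇑φ) φ.continuous S hS
    obtain ⟨T2, hT2c, hT2⟩ := S4.step_lemma hNY hNYc hNX hNXc (⇑φ.symm) φ.symm.continuous S hS
    refine ⟨S ∪ T1 ∪ T2, subset_union_of_subset_left subset_union_left _, (hS.union hT1c).union hT2c,
      ?_, ?_⟩
    · exact hT1.trans (S4.ESet_mono (subset_union_of_subset_left subset_union_right _))
    · exact hT2.trans (S4.ESet_mono subset_union_right)
  -- iterate
  let step' : {S : Set D // S.Countable} → {S : Set D // S.Countable} := fun S =>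
    ⟨(stepex S.1 S.2).choose, (stepex S.1 S.2).choose_spec.2.1⟩
  let S0 : {S : Set D // S.Countable} := ⟨Set.range (Infinite.natEmbedding D), countable_range _⟩
  let seq : ℕ → {S : Set D // S.Countable} := fun n => step'^[n] S0
  have hseq_succ : ∀ n, seq (n + 1) = step' (seq n) := fun n =>
    Function.iterate_succ_apply' step' n S0
  have hsub : ∀ n, (seq n).1 ⊆ (seq (n + 1)).1 := by
    intro n
    rw [hseq_succ n]
    exact (stepex (seq n).1 (seq n).2).choose_spec.1
  have hmono : Monotone (fun n => (seq n).1) := monotone_nat_of_le_succ hsub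
  have hfwd : ∀ n, ⇑φ '' S4.ESet X D (seq n).1 ⊆ S4.ESet Y D (seq (n + 1)).1 := by
    intro n
    rw [hseq_succ n]
    exact (stepex (seq n).1 (seq n).2).choose_spec.2.2.1
  have hbwd : ∀ n, ⇑φ.symm '' S4.ESet Y D (seq n).1 ⊆ S4.ESet X D (seq (n + 1)).1 := by
    intro n
    rw [hseq_succ n]
    exact (stepex (seq n).1 (seq n).2).choose_spec.2.2.2
  set T : Set D := ⋃ n, (seq n).1 with hTdef
  have hTc : T.Countable := countable_iUnion fun n => (seq n).2
  -- the key identity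
  have key : ⇑φ '' S4.ESet X D T = S4.ESet Y D T := by
    apply Set.Subset.antisymm
    · exact S4.absorb (⇑φ) φ.continuous _ hmono hfwd
    · intro g hg
      have : φ.symm g ∈ S4.ESet X D T := S4.absorb (⇑φ.symm) φ.symm.continuous _ hmono hbwd
        ⟨g, hg, rfl⟩
      exact ⟨φ.symm g, this, φ.apply_symm_apply g⟩
  -- T is countably infinite
  haveI hTco : Countable ↥T := hTc.to_subtype
  have hTinf : T.Infinite := by
    have h0 : (seq 0).1 = Set.range (Infinite.natEmbedding D) := rfl
    have hinf0 : (seq 0).1.Infinite := by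
      rw [h0]
      exact Set.infinite_range_of_injective (Infinite.natEmbedding D).injective
    exact hinf0.mono (Set.subset_iUnion (fun n => (seq n).1) 0)
  haveI : Infinite ↥T := Set.infinite_coe_iff.mpr hTinf
  have hTcard : #(↥T) = ℵ₀ :=
    le_antisymm (Cardinal.mk_le_aleph0_iff.mpr hTco) (Cardinal.aleph0_le_mk _)
  obtain ⟨β⟩ : Nonempty (E ≃ ↥T) := Cardinal.eq.1 (hE.trans hTcard.symm)
  exact ⟨(S4.homeoESet (Z := X) T β).trans
    (((φ.image (S4.ESet X D T)).trans (Homeomorph.setCongr key)).trans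
      (S4.homeoESet (Z := Y) T β).symm)⟩
end

section
/- Let τ be an infinite cardinal, let κ > τ be a cardinal, and let X and Y be Tychonoff spaces each admitting a network of cardinality at most τ. If C_p(X × A(κ)) is homeomorphic to C_p(Y × A(κ)), then C_p(X × A(τ)) is homeomorphic to C_p(Y × A(τ)). -/
open Cardinal Set

universe u

section
open OnePoint
set_option linter.unusedSectionVars false
set_option linter.unusedVariables false

namespace S5

variable {D : Type u} [TopologicalSpace D] [DiscreteTopology D]

open Classical in
/-- the retraction of `OnePoint D` collapsing everything outside `S` to `∞`. -/
noncomputable def retr (S : Set D) : OnePoint D → OnePoint D := fun t =>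
  Option.bind t (fun d => if d ∈ S then (OnePoint.some d) else ∞)

@[simp] lemma retr_infty (S : Set D) : retr S ∞ = ∞ := rfl

lemma retr_coe_mem (S : Set D) {d : D} (hd : d ∈ S) : retr S (OnePoint.some d) = OnePoint.some d := by
  simp [retr, OnePoint.some, hd]; rfl

lemma retr_coe_not_mem (S : Set D) {d : D} (hd : d ∉ S) : retr S (OnePoint.some d) = ∞ := by
  simp [retr, OnePoint.some, hd]

lemma continuous_retr (S : Set D) : Continuous (retr S) := by
  rw [OnePoint.continuous_iff, retr_infty]
  constructor
  · rw [Filter.coclosedCompact_eq_cocompact, Filter.cocompact_eq_cofinite]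
    intro U hU
    have hinf : (∞ : OnePoint D) ∈ U := by
      rw [OnePoint.nhds_infty_eq] at hU
      exact Filter.mem_sup.mp hU |>.2
    have hU1 : {d : D | OnePoint.some d ∈ U}ᶜ.Finite := by
      rw [OnePoint.nhds_infty_eq] at hU
      have := (Filter.mem_sup.mp hU).1
      rw [Filter.mem_map, Filter.coclosedCompact_eq_cocompact, Filter.cocompact_eq_cofinite,
        Filter.mem_cofinite] at this
      exact this
    rw [Filter.mem_map, Filter.mem_cofinite]
    refine Set.Finite.subset hU1 ?_
    intro d hd
    simp only [mem_compl_iff, mem_preimage, mem_setOf_eq] at hd ⊢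
    intro hcon
    apply hd
    by_cases hmem : d ∈ S
    · rw [retr_coe_mem S hmem]; exact hcon
    · rw [retr_coe_not_mem S hmem]; exact hinf
  · exact continuous_of_discreteTopology


open Classical in
/-- collapse onto the subtype -/
noncomputable def clps (S : Set D) : OnePoint D → OnePoint ↥S := fun t =>
  Option.bind t (fun d => if h : d ∈ S then OnePoint.some (⟨d, h⟩ : ↥S) else ∞)

/-- inclusion of `OnePoint ↥S` into `OnePoint D` -/
def incl (S : Set D) : OnePoint ↥S → OnePoint D := OnePoint.map Subtype.val

@[simp] lemma clps_infty (S : Set D) : clps S ∞ = ∞ := rfl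
@[simp] lemma incl_infty (S : Set D) : incl S ∞ = ∞ := rfl
@[simp] lemma incl_coe (S : Set D) (w : ↥S) :
    incl S (OnePoint.some w) = OnePoint.some (w : D) := rfl

lemma clps_coe_mem (S : Set D) {d : D} (hd : d ∈ S) :
    clps S (OnePoint.some d) = OnePoint.some (⟨d, hd⟩ : ↥S) := by
  simp [clps, OnePoint.some, hd]; rfl

lemma clps_coe_not_mem (S : Set D) {d : D} (hd : d ∉ S) :
    clps S (OnePoint.some d) = ∞ := by
  simp [clps, OnePoint.some, hd]

lemma incl_clps (S : Set D) (t : OnePoint D) : incl S (clps S t) = retr S t := by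
  induction t using OnePoint.rec with
  | infty => simp
  | coe d =>
    by_cases hd : d ∈ S
    · rw [clps_coe_mem S hd, retr_coe_mem S hd]; rfl
    · rw [clps_coe_not_mem S hd, retr_coe_not_mem S hd]; rfl

lemma clps_incl (S : Set D) (w : OnePoint ↥S) : clps S (incl S w) = w := by
  induction w using OnePoint.rec with
  | infty => simp
  | coe d => rw [incl_coe, clps_coe_mem S d.2]

lemma continuous_incl (S : Set D) : Continuous (incl S) := by
  refine OnePoint.continuous_map continuous_of_discreteTopology ?_
  rw [Filter.coclosedCompact_eq_cocompact, Filter.cocompact_eq_cofinite,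
    Filter.coclosedCompact_eq_cocompact, Filter.cocompact_eq_cofinite]
  exact Subtype.val_injective.tendsto_cofinite

lemma continuous_clps (S : Set D) : Continuous (clps S) := by
  rw [OnePoint.continuous_iff, clps_infty]
  constructor
  · rw [Filter.coclosedCompact_eq_cocompact, Filter.cocompact_eq_cofinite]
    intro U hU
    have hinf : (∞ : OnePoint ↥S) ∈ U := by
      rw [OnePoint.nhds_infty_eq] at hU
      exact Filter.mem_sup.mp hU |>.2
    have hU1 : {w : ↥S | OnePoint.some w ∈ U}ᶜ.Finite := by
      rw [OnePoint.nhds_infty_eq] at hU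
      have := (Filter.mem_sup.mp hU).1
      rw [Filter.mem_map, Filter.coclosedCompact_eq_cocompact, Filter.cocompact_eq_cofinite,
        Filter.mem_cofinite] at this
      exact this
    rw [Filter.mem_map, Filter.mem_cofinite]
    refine Set.Finite.subset (Set.Finite.image Subtype.val hU1) ?_
    intro d hd
    simp only [mem_compl_iff, mem_preimage, mem_setOf_eq] at hd
    by_cases hmem : d ∈ S
    · refine ⟨⟨d, hmem⟩, ?_, rfl⟩
      simp only [mem_compl_iff, mem_setOf_eq]
      intro hcon
      exact hd (by rw [clps_coe_mem S hmem]; exact hcon)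
    · exact absurd (by rw [clps_coe_not_mem S hmem]; exact hinf) hd
  · exact continuous_of_discreteTopology

variable {X : Type u} [TopologicalSpace X]

lemma continuous_eval {Z : Type*} [TopologicalSpace Z] (z : Z) :
    Continuous fun f : Cp Z => f.1 z :=
  (continuous_apply z).comp continuous_subtype_val

/-- functions whose "support" is inside `S`. -/
def CS (X : Type u) [TopologicalSpace X] (S : Set D) : Set (Cp (X × OnePoint D)) :=
  {f | ∀ d : D, d ∉ S → ∀ x : X, f.1 (x, OnePoint.some d) = f.1 (x, ∞)}

lemma CS_mono (X : Type u) [TopologicalSpace X] {S S' : Set D} (h : S ⊆ S') :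
    CS X S ⊆ CS X S' := fun f hf d hd x => hf d (fun hds => hd (h hds)) x

lemma isClosed_CS (X : Type u) [TopologicalSpace X] (S : Set D) : IsClosed (CS X S) := by
  have : CS X S = ⋂ (d : D) (_ : d ∉ S) (x : X),
      {f : Cp (X × OnePoint D) | f.1 (x, OnePoint.some d) = f.1 (x, ∞)} := by
    ext f; simp [CS]
  rw [this]
  exact isClosed_iInter fun d => isClosed_iInter fun hd => isClosed_iInter fun x =>
    isClosed_eq (continuous_eval _) (continuous_eval _)

/-- The canonical homeomorphism between `Cp (X × OnePoint ↥S)` and the set of functions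
on `X × OnePoint D` supported inside `S`. -/
noncomputable def homeoCS (S : Set D) : Cp (X × OnePoint ↥S) ≃ₜ ↥(CS X S) where
  toFun g := ⟨⟨fun p => g.1 (p.1, clps S p.2),
      g.2.comp (continuous_fst.prodMk ((continuous_clps S).comp continuous_snd))⟩,
    fun d hd x => by simp only [clps_coe_not_mem S hd, clps_infty]⟩
  invFun f := ⟨fun p => f.1.1 (p.1, incl S p.2),
      f.1.2.comp (continuous_fst.prodMk ((continuous_incl S).comp continuous_snd))⟩
  left_inv g := by
    ext p
    simp only [clps_incl]
  right_inv f := by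
    ext p
    obtain ⟨x, t⟩ := p
    simp only [incl_clps]
    induction t using OnePoint.rec with
    | infty => rfl
    | coe d =>
      by_cases hd : d ∈ S
      · rw [retr_coe_mem S hd]
      · rw [retr_coe_not_mem S hd]
        exact (f.2 d hd x).symm
  continuous_toFun := by
    refine Continuous.subtype_mk (Continuous.subtype_mk ?_ _) _
    exact continuous_pi fun p => continuous_eval (p.1, clps S p.2)
  continuous_invFun := by
    refine Continuous.subtype_mk ?_ _
    exact continuous_pi fun p => (continuous_eval (p.1, incl S p.2)).comp continuous_subtype_val


/-- If a basic-open-determining finite agreement is possible within `A`, then `f ∈ closure A`. -/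
lemma mem_closure_of_finite_agree {Z : Type u} [TopologicalSpace Z] {A : Set (Cp Z)} {f : Cp Z}
    (hyp : ∀ I : Finset Z, ∃ g ∈ A, ∀ z ∈ I, g.1 z = f.1 z) : f ∈ closure A := by
  rw [mem_closure_iff]
  intro O hO hfO
  rcases isOpen_induced_iff.mp hO with ⟨t, ht, rfl⟩
  rcases isOpen_pi_iff.mp ht f.1 hfO with ⟨I, u, hu, hsub⟩
  rcases hyp I with ⟨g, hgA, hg⟩
  refine ⟨g, ?_, hgA⟩
  apply hsub
  intro z hz
  rw [hg z hz]
  exact (hu z hz).2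

/-- A space with a small network has a small dense subset in `Cp`. -/
lemma dense_small {Z : Type u} [TopologicalSpace Z] {τ : Cardinal.{u}} (hτ : ℵ₀ ≤ τ)
    {N : Set (Set Z)} (hN : IsNetwork N) (hNc : #N ≤ τ) :
    ∃ T : Set (Cp Z), Dense T ∧ #T ≤ τ := by
  classical
  set ι := List (↥N × ℚ × ℚ) with hι
  set A : ι → Set (Cp Z) := fun l =>
    {f | ∀ e ∈ l, ∀ x ∈ (e.1 : Set Z), f.1 x ∈ Ioo ((e.2.1 : ℝ)) ((e.2.2 : ℝ))} with hA
  have hzero : Continuous (fun _ : Z => (0 : ℝ)) := continuous_const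
  set g : ι → Cp Z := fun l =>
    if h : (A l).Nonempty then h.choose else ⟨fun _ => 0, hzero⟩ with hg
  have hgmem : ∀ l, (A l).Nonempty → g l ∈ A l := by
    intro l hl
    simp only [hg, dif_pos hl]
    exact hl.choose_spec
  refine ⟨Set.range g, ?_, ?_⟩
  · rw [dense_iff_inter_open]
    intro O hO ⟨f, hfO⟩
    rcases isOpen_induced_iff.mp hO with ⟨t, ht, rfl⟩
    rcases isOpen_pi_iff.mp ht f.1 hfO with ⟨I, u, hu, hsub⟩
    have key : ∀ x ∈ I, ∃ (s : Set Z) (q1 q2 : ℚ), s ∈ N ∧ x ∈ s ∧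
        (∀ y ∈ s, f.1 y ∈ Ioo ((q1 : ℝ)) ((q2 : ℝ))) ∧ Ioo ((q1:ℝ)) ((q2:ℝ)) ⊆ u x := by
      intro x hx
      obtain ⟨ho, hm⟩ := hu x hx
      obtain ⟨ε, hε, hball⟩ := Metric.isOpen_iff.mp ho _ hm
      rw [Real.ball_eq_Ioo] at hball
      obtain ⟨q1, hq1a, hq1b⟩ := exists_rat_btwn (show f.1 x - ε < f.1 x by linarith)
      obtain ⟨q2, hq2a, hq2b⟩ := exists_rat_btwn (show f.1 x < f.1 x + ε by linarith)
      have hIoo : Ioo ((q1:ℝ)) ((q2:ℝ)) ⊆ u x := by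
        refine Subset.trans ?_ hball
        exact Ioo_subset_Ioo (le_of_lt hq1a) (le_of_lt hq2b)
      have hpre : IsOpen (f.1 ⁻¹' (Ioo ((q1:ℝ)) ((q2:ℝ)))) := isOpen_Ioo.preimage f.2
      have hxpre : x ∈ f.1 ⁻¹' (Ioo ((q1:ℝ)) ((q2:ℝ))) := ⟨hq1b, hq2a⟩
      obtain ⟨s, hsN, hxs, hssub⟩ := hN x _ hpre hxpre
      exact ⟨s, q1, q2, hsN, hxs, fun y hy => hssub hy, hIoo⟩
    choose! s q1 q2 h1 h2 h3 h4 using key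
    set l : ι := I.attach.toList.map
      (fun x => (⟨s x.1, h1 x.1 x.2⟩, q1 x.1, q2 x.1)) with hl
    have hfA : f ∈ A l := by
      intro e he x hx
      rcases List.mem_map.mp he with ⟨⟨z, hz⟩, _, rfl⟩
      exact h3 z hz x hx
    have hne : (A l).Nonempty := ⟨f, hfA⟩
    refine ⟨g l, ?_, ⟨l, rfl⟩⟩
    show (g l).1 ∈ t
    apply hsub
    intro z hz
    have hel : ((⟨s z, h1 z hz⟩ : ↥N), q1 z, q2 z) ∈ l := by
      rw [hl]
      exact List.mem_map.mpr ⟨⟨z, hz⟩, by simp, rfl⟩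
    have := hgmem l hne _ hel z (h2 z hz)
    exact h4 z hz this
  · refine le_trans mk_range_le ?_
    refine le_trans (Cardinal.mk_list_le_max _) ?_
    rw [max_le_iff]
    refine ⟨hτ, ?_⟩
    rw [Cardinal.mk_prod]
    have h2 : Cardinal.lift.{u} #(ℚ × ℚ) = ℵ₀ := by
      rw [Cardinal.mk_prod]
      simp [Cardinal.aleph0_mul_aleph0]
    rw [h2, Cardinal.lift_uzero]
    calc #(↥N) * ℵ₀ ≤ τ * τ := mul_le_mul' hNc hτ
    _ = τ := Cardinal.mul_eq_self hτ


/-- the "support" of a continuous function on `Z × OnePoint D`. -/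
def supp {Z : Type u} [TopologicalSpace Z] {D : Type u} [TopologicalSpace D]
    (f : Cp (Z × OnePoint D)) : Set D :=
  {d : D | ∃ x : Z, f.1 (x, OnePoint.some d) ≠ f.1 (x, ∞)}

lemma mem_CS_supp {Z : Type u} [TopologicalSpace Z] {D : Type u} [TopologicalSpace D]
    [DiscreteTopology D] (f : Cp (Z × OnePoint D)) : f ∈ CS Z (supp f) := by
  intro d hd x
  by_contra hne
  exact hd ⟨x, hne⟩

/-- KEY LEMMA: if `Z` has a network of size at most `τ` (infinite), then every continuous
function on `Z × OnePoint D` has support of size at most `τ`. -/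
lemma supp_small {Z : Type u} [TopologicalSpace Z] {D : Type u} [TopologicalSpace D]
    [DiscreteTopology D] {τ : Cardinal.{u}} (hτ : ℵ₀ ≤ τ)
    {N : Set (Set Z)} (hN : IsNetwork N) (hNc : #N ≤ τ)
    (f : Cp (Z × OnePoint D)) : #(supp f) ≤ τ := by
  classical
  have key : ∀ d : ↥(supp f), ∃ (s : Set Z) (q : ℚ), s ∈ N ∧ 0 < q ∧ s.Nonempty ∧
      ∀ y ∈ s, (q : ℝ) < |f.1 (y, OnePoint.some (d : D)) - f.1 (y, ∞)| := by
    rintro ⟨d, x, hx⟩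
    have hpos : 0 < |f.1 (x, OnePoint.some d) - f.1 (x, ∞)| := by
      rw [abs_pos, sub_ne_zero]; exact hx
    obtain ⟨q, hq0, hq1⟩ := exists_rat_btwn hpos
    have hq0' : (0 : ℚ) < q := by exact_mod_cast hq0
    have hcont : Continuous fun y : Z => |f.1 (y, OnePoint.some d) - f.1 (y, ∞)| := by
      apply Continuous.abs
      apply Continuous.sub
      · exact f.2.comp (continuous_id.prodMk continuous_const)
      · exact f.2.comp (continuous_id.prodMk continuous_const)
    have hopen : IsOpen {y : Z | (q:ℝ) < |f.1 (y, OnePoint.some d) - f.1 (y, ∞)|} :=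
      isOpen_lt continuous_const hcont
    obtain ⟨s, hsN, hxs, hsub⟩ := hN x _ hopen hq1
    exact ⟨s, q, hsN, hq0', ⟨x, hxs⟩, fun y hy => hsub hy⟩
  choose s q h1 h0 h2 h3 using key
  set φ : ↥(supp f) → ↥N × ℚ := fun d => (⟨s d, h1 d⟩, q d) with hφ
  have hfib : ∀ p : ↥N × ℚ, {d : ↥(supp f) | φ d = p}.Finite := by
    intro p
    rcases Set.eq_empty_or_nonempty {d : ↥(supp f) | φ d = p} with he | ⟨d₀, hd₀⟩
    · rw [he]; exact finite_empty
    obtain ⟨x, hxs⟩ := h2 d₀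
    have hq0 : (0 : ℝ) < (q d₀ : ℝ) := by exact_mod_cast h0 d₀
    have hGopen : IsOpen {t : OnePoint D | |f.1 (x, t) - f.1 (x, ∞)| < (q d₀ : ℝ)} := by
      apply isOpen_lt _ continuous_const
      apply Continuous.abs
      exact (f.2.comp (continuous_const.prodMk continuous_id)).sub continuous_const
    have hGinf : (∞ : OnePoint D) ∈ {t : OnePoint D | |f.1 (x, t) - f.1 (x, ∞)| < (q d₀ : ℝ)} := by
      simp [hq0]
    have hbad : ({e : D | |f.1 (x, OnePoint.some e) - f.1 (x, ∞)| < (q d₀ : ℝ)}ᶜ).Finite := by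
      have := (OnePoint.isOpen_iff_of_mem' hGinf).mp hGopen
      exact this.1.finite_of_discrete
    have hmap : ∀ d ∈ {d : ↥(supp f) | φ d = p}, (d : D) ∈
        {e : D | |f.1 (x, OnePoint.some e) - f.1 (x, ∞)| < (q d₀ : ℝ)}ᶜ := by
      intro d hd
      have heq : φ d = φ d₀ := by rw [hd, hd₀]
      have hs : s d = s d₀ := congrArg (fun r => (r.1 : Set Z)) heq
      have hq : q d = q d₀ := congrArg Prod.snd heq
      have hxd : x ∈ s d := by rw [hs]; exact hxs
      have := h3 d x hxd
      rw [hq] at this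
      simp only [mem_compl_iff, mem_setOf_eq, not_lt]
      exact le_of_lt this
    have : {d : ↥(supp f) | φ d = p} ⊆ Subtype.val ⁻¹'
        (Subtype.val '' {d : ↥(supp f) | φ d = p}) := subset_preimage_image _ _
    refine Set.Finite.preimage (Subtype.val_injective.injOn) ?_ |>.subset this
    exact hbad.subset (by rintro e ⟨d, hd, rfl⟩; exact hmap d hd)
  have hcard : #(↥(supp f)) ≤ #(↥N × ℚ) * ℵ₀ := by
    have e := (Equiv.sigmaFiberEquiv φ).symm
    have h1' : #(↥(supp f)) = Cardinal.sum fun p : ↥N × ℚ => #{d : ↥(supp f) // φ d = p} := by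
      rw [← Cardinal.mk_sigma]
      exact Cardinal.mk_congr (Equiv.sigmaFiberEquiv φ).symm
    rw [h1']
    calc Cardinal.sum (fun p : ↥N × ℚ => #{d : ↥(supp f) // φ d = p})
        ≤ Cardinal.sum (fun _ : ↥N × ℚ => ℵ₀) := by
          apply Cardinal.sum_le_sum
          intro p
          have : {d : ↥(supp f) | φ d = p}.Finite := hfib p
          have := this.lt_aleph0
          exact le_of_lt this
      _ = #(↥N × ℚ) * ℵ₀ := by rw [Cardinal.sum_const']
  refine hcard.trans ?_
  rw [Cardinal.mk_prod, Cardinal.lift_uzero]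
  have : Cardinal.lift.{u} #ℚ = ℵ₀ := by simp
  rw [this]
  calc #(↥N) * ℵ₀ * ℵ₀ ≤ τ * τ * τ := by
        exact mul_le_mul' (mul_le_mul' hNc hτ) hτ
    _ = τ := by rw [Cardinal.mul_eq_self hτ, Cardinal.mul_eq_self hτ]


/-- product of a network with the singletons of any space is a network. -/
lemma isNetwork_prod_singletons {Z W : Type u} [TopologicalSpace Z] [TopologicalSpace W]
    {N : Set (Set Z)} (hN : IsNetwork N) :
    IsNetwork (Set.range fun p : ↥N × W => (p.1 : Set Z) ×ˢ ({p.2} : Set W)) := by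
  rintro ⟨x, w⟩ U hU hxU
  obtain ⟨u, v, hu, hv, hxu, hwv, huv⟩ := isOpen_prod_iff.mp hU x w hxU
  obtain ⟨s, hsN, hxs, hsub⟩ := hN x u hu hxu
  refine ⟨s ×ˢ {w}, ⟨(⟨s, hsN⟩, w), rfl⟩, ⟨hxs, rfl⟩, ?_⟩
  rintro ⟨y, w'⟩ ⟨hy, hw'⟩
  rcases hw' with rfl
  exact huv ⟨hsub hy, hwv⟩

/-- there is a small subset of `CS X S` whose closure contains `CS X S`. -/
lemma CS_closure_small {X : Type u} [TopologicalSpace X] {D : Type u} [TopologicalSpace D]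
    [DiscreteTopology D] {τ : Cardinal.{u}} (hτ : ℵ₀ ≤ τ)
    {N : Set (Set X)} (hN : IsNetwork N) (hNc : #N ≤ τ) (S : Set D) (hS : #S ≤ τ) :
    ∃ T : Set (Cp (X × OnePoint D)), #T ≤ τ ∧ T ⊆ CS X S ∧ CS X S ⊆ closure T := by
  -- network for X × OnePoint ↥S
  set M := Set.range fun p : ↥N × OnePoint ↥S => (p.1 : Set X) ×ˢ ({p.2} : Set (OnePoint ↥S))
  have hM : IsNetwork M := isNetwork_prod_singletons hN
  have hMc : #M ≤ τ := by
    refine le_trans mk_range_le ?_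
    rw [Cardinal.mk_prod, Cardinal.lift_id, Cardinal.lift_id]
    have hOP : #(OnePoint ↥S) ≤ τ := by
      have : #(OnePoint ↥S) = #(↥S) + 1 := Cardinal.mk_option
      rw [this]
      calc #(↥S) + 1 ≤ τ + τ := add_le_add hS (le_trans (le_of_lt Cardinal.one_lt_aleph0) hτ)
        _ = τ := Cardinal.add_eq_self hτ
    calc #(↥N) * #(OnePoint ↥S) ≤ τ * τ := mul_le_mul' hNc hOP
      _ = τ := Cardinal.mul_eq_self hτ
  obtain ⟨T', hT'd, hT'c⟩ := dense_small hτ hM hMc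
  set Φ := homeoCS (X := X) S
  refine ⟨Subtype.val '' (Φ '' T'), ?_, ?_, ?_⟩
  · exact le_trans mk_image_le (le_trans mk_image_le hT'c)
  · rintro f ⟨g, _, rfl⟩
    exact g.2
  · intro f hf
    have hd : Dense (Φ '' T') := by
      rw [dense_iff_closure_eq, ← Φ.image_closure, hT'd.closure_eq, image_univ,
        Φ.surjective.range_eq]
    have : (⟨f, hf⟩ : ↥(CS X S)) ∈ closure (Φ '' T') := hd _
    rwa [closure_subtype] at this

/-- One step of the closing-off argument. -/
lemma step {X Y : Type u} [TopologicalSpace X] [TopologicalSpace Y] {D : Type u}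
    [TopologicalSpace D] [DiscreteTopology D] {τ : Cardinal.{u}} (hτ : ℵ₀ ≤ τ)
    {NX : Set (Set X)} (hNX : IsNetwork NX) (hNXc : #NX ≤ τ)
    {NY : Set (Set Y)} (hNY : IsNetwork NY) (hNYc : #NY ≤ τ)
    (h : Cp (X × OnePoint D) ≃ₜ Cp (Y × OnePoint D))
    (S : Set D) (hS : #S ≤ τ) :
    ∃ S' : Set D, #S' ≤ τ ∧ h '' (CS X S) ⊆ CS Y S' := by
  obtain ⟨T, hTc, hTsub, hTcl⟩ := CS_closure_small hτ hNX hNXc S hS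
  refine ⟨⋃ t : ↥T, supp (h t.1), ?_, ?_⟩
  · refine le_trans Cardinal.mk_iUnion_le_sum_mk ?_
    have h1 : ∀ t : ↥T, #(supp (h t.1)) ≤ τ := fun t => supp_small hτ hNY hNYc (h t.1)
    calc Cardinal.sum (fun t : ↥T => #(supp (h t.1)))
        ≤ Cardinal.sum (fun _ : ↥T => τ) := Cardinal.sum_le_sum _ _ h1
      _ = #(↥T) * τ := Cardinal.sum_const' _ _
      _ ≤ τ * τ := mul_le_mul' hTc le_rfl
      _ = τ := Cardinal.mul_eq_self hτ
  · have himg : h '' T ⊆ CS Y (⋃ t : ↥T, supp (h t.1)) := by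
      rintro _ ⟨t, ht, rfl⟩
      exact CS_mono Y (le_iSup (fun t : ↥T => supp (h t.1)) ⟨t, ht⟩) (mem_CS_supp (h t))
    rintro _ ⟨f, hf, rfl⟩
    have h1 : f ∈ closure T := hTcl hf
    have h2 : h f ∈ closure (h '' T) := by
      rw [← h.image_closure]
      exact ⟨f, h1, rfl⟩
    exact closure_minimal himg (isClosed_CS Y _) h2

/-- approximation: a function supported in a monotone union is in the closure of the union of
the small-support sets. -/
lemma mem_closure_iUnion_CS {X : Type u} [TopologicalSpace X] {D : Type u} [TopologicalSpace D]
    [DiscreteTopology D] (Q : ℕ → Set D) (hmono : Monotone Q)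
    {f : Cp (X × OnePoint D)} (hf : f ∈ CS X (⋃ n, Q n)) :
    f ∈ closure (⋃ n, CS X (Q n)) := by
  classical
  apply mem_closure_of_finite_agree
  intro I
  -- the relevant finitely many coordinates in D that lie in the union
  set K : Set D := {d : D | (∃ x : X, (x, OnePoint.some d) ∈ I) ∧ d ∈ ⋃ n, Q n} with hK
  have hKfin : K.Finite := by
    have h1 : K ⊆ OnePoint.some ⁻¹' ((fun p : X × OnePoint D => p.2) '' (I : Set (X × OnePoint D))) := by
      rintro d ⟨⟨x, hx⟩, _⟩
      exact ⟨(x, OnePoint.some d), hx, rfl⟩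
    refine Set.Finite.subset ?_ h1
    exact Set.Finite.preimage (OnePoint.coe_injective.injOn)
      ((I : Set (X × OnePoint D)).toFinite.image _)
  have hch : ∀ d ∈ K, ∃ n, d ∈ Q n := by
    rintro d ⟨_, hd⟩
    exact mem_iUnion.mp hd
  choose! nf hnf using hch
  set n : ℕ := hKfin.toFinset.sup nf with hn
  have hKQ : ∀ d ∈ K, d ∈ Q n := by
    intro d hd
    refine hmono (Finset.le_sup (hKfin.mem_toFinset.mpr hd)) (hnf d hd)
  set g : Cp (X × OnePoint D) := ⟨fun p => f.1 (p.1, retr (Q n) p.2),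
    f.2.comp (continuous_fst.prodMk ((continuous_retr (Q n)).comp continuous_snd))⟩ with hg
  refine ⟨g, mem_iUnion.mpr ⟨n, ?_⟩, ?_⟩
  · intro d hd x
    show f.1 (x, retr (Q n) (OnePoint.some d)) = f.1 (x, retr (Q n) ∞)
    rw [retr_coe_not_mem _ hd, retr_infty]
  · rintro ⟨x, t⟩ hz
    induction t using OnePoint.rec with
    | infty => rfl
    | coe d =>
      show f.1 (x, retr (Q n) (OnePoint.some d)) = f.1 (x, OnePoint.some d)
      by_cases hd : d ∈ Q n
      · rw [retr_coe_mem _ hd]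
      · rw [retr_coe_not_mem _ hd]
        by_cases hd2 : d ∈ ⋃ m, Q m
        · exact absurd (hKQ d ⟨⟨x, hz⟩, hd2⟩) hd
        · exact (hf d hd2 x).symm

/-- a homeomorphism of base spaces induces a homeomorphism of `Cp` spaces. -/
def cpCongr {Z W : Type u} [TopologicalSpace Z] [TopologicalSpace W] (e : Z ≃ₜ W) :
    Cp Z ≃ₜ Cp W where
  toFun f := ⟨f.1 ∘ e.symm, f.2.comp e.symm.continuous⟩
  invFun g := ⟨g.1 ∘ e, g.2.comp e.continuous⟩
  left_inv f := by ext z; simp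
  right_inv g := by ext w; simp
  continuous_toFun := by
    refine Continuous.subtype_mk ?_ _
    exact continuous_pi fun w => continuous_eval (e.symm w)
  continuous_invFun := by
    refine Continuous.subtype_mk ?_ _
    exact continuous_pi fun z => continuous_eval (e z)

end S5

end

open OnePoint S5 in
/-- Let `τ` be an infinite cardinal, `κ > τ` a cardinal, and let `X`, `Y` be
Tychonoff spaces admitting networks of cardinality at most `τ`. Here `A(κ)` is realized
as the one-point compactification `OnePoint D` of a discrete space `D` of cardinality `κ`,
and `A(τ)` as `OnePoint E` for a discrete space `E` of cardinality `τ`. If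
`Cp (X × A(κ))` is homeomorphic to `Cp (Y × A(κ))`, then `Cp (X × A(τ))` is homeomorphic
to `Cp (Y × A(τ))`. -/
theorem statement5 (τ κ : Cardinal.{u}) (hτ : ℵ₀ ≤ τ) (hκ : τ < κ)
    (X Y : Type u) [TopologicalSpace X] [TopologicalSpace Y] [T35Space X] [T35Space Y]
    (hX : ∃ N : Set (Set X), IsNetwork N ∧ #N ≤ τ)
    (hY : ∃ N : Set (Set Y), IsNetwork N ∧ #N ≤ τ)
    (D : Type u) [TopologicalSpace D] [DiscreteTopology D] (hD : #D = κ)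
    (E : Type u) [TopologicalSpace E] [DiscreteTopology E] (hE : #E = τ)
    (h : Nonempty (Cp (X × OnePoint D) ≃ₜ Cp (Y × OnePoint D))) :
    Nonempty (Cp (X × OnePoint E) ≃ₜ Cp (Y × OnePoint E)) := by
  classical
  obtain ⟨NX, hNX, hNXc⟩ := hX
  obtain ⟨NY, hNY, hNYc⟩ := hY
  obtain ⟨h0⟩ := h
  -- a subset of D of size exactly τ
  have hτD : τ ≤ #D := by rw [hD]; exact le_of_lt hκ
  obtain ⟨P, hPcard⟩ := Cardinal.le_mk_iff_exists_set.mp hτD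
  have hPτ : #P ≤ τ := le_of_eq hPcard
  -- the one-step operators
  choose! FXY hF1 hF2 using fun (S : Set D) (hS : #S ≤ τ) =>
    step hτ hNX hNXc hNY hNYc h0 S hS
  choose! FYX hG1 hG2 using fun (S : Set D) (hS : #S ≤ τ) =>
    step hτ hNY hNYc hNX hNXc h0.symm S hS
  -- the recursion
  set F : Set D × Set D → Set D × Set D :=
    fun p => (p.1 ∪ FYX p.2, p.2 ∪ FXY (p.1 ∪ FYX p.2)) with hF
  set Q : ℕ → Set D × Set D := fun n => F^[n] (P, P ∪ FXY P) with hQ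
  have hQ0 : Q 0 = (P, P ∪ FXY P) := rfl
  have hQsucc : ∀ n, Q (n + 1) = F (Q n) := fun n => Function.iterate_succ_apply' F n _
  have hunion : ∀ {A B : Set D}, #A ≤ τ → #B ≤ τ → #(A ∪ B : Set D) ≤ τ := by
    intro A B hA hB
    calc #(A ∪ B : Set D) ≤ #A + #B := Cardinal.mk_union_le A B
      _ ≤ τ + τ := add_le_add hA hB
      _ = τ := Cardinal.add_eq_self hτ
  have hcards : ∀ n, #(Q n).1 ≤ τ ∧ #(Q n).2 ≤ τ := by
    intro n
    induction n with
    | zero =>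
      rw [hQ0]
      exact ⟨hPτ, hunion hPτ (hF1 P hPτ)⟩
    | succ n ih =>
      rw [hQsucc n, hF]
      refine ⟨hunion ih.1 (hG1 _ ih.2), hunion ih.2 (hF1 _ (hunion ih.1 (hG1 _ ih.2)))⟩
  have hmon1 : Monotone fun n => (Q n).1 := by
    apply monotone_nat_of_le_succ
    intro n
    rw [hQsucc n, hF]
    exact subset_union_left
  have hmon2 : Monotone fun n => (Q n).2 := by
    apply monotone_nat_of_le_succ
    intro n
    rw [hQsucc n, hF]
    exact subset_union_left
  have hXY : ∀ n, h0 '' CS X (Q n).1 ⊆ CS Y (Q n).2 := by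
    intro n
    cases n with
    | zero =>
      rw [hQ0]
      exact (hF2 P hPτ).trans (CS_mono Y subset_union_right)
    | succ n =>
      rw [hQsucc n, hF]
      exact (hF2 _ (hunion (hcards n).1 (hG1 _ (hcards n).2))).trans
        (CS_mono Y subset_union_right)
  have hYX : ∀ n, h0.symm '' CS Y (Q n).2 ⊆ CS X (Q (n + 1)).1 := by
    intro n
    rw [hQsucc n, hF]
    exact (hG2 _ (hcards n).2).trans (CS_mono X subset_union_right)
  set Sw : Set D := ⋃ n, (Q n).1 with hSw
  set Sw' : Set D := ⋃ n, (Q n).2 with hSw'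
  have hsmall : ∀ (R : ℕ → Set D), (∀ n, #(R n) ≤ τ) → #(⋃ n, R n) ≤ τ := by
    intro R hR
    have h1 := Cardinal.mk_iUnion_le_sum_mk_lift (ι := ℕ) (f := R)
    rw [Cardinal.lift_uzero] at h1
    refine h1.trans ?_
    calc Cardinal.sum (fun n : ℕ => #(R n)) ≤ Cardinal.sum (fun _ : ℕ => τ) :=
          Cardinal.sum_le_sum _ _ hR
      _ = Cardinal.lift.{u} #ℕ * Cardinal.lift.{0} τ := Cardinal.sum_const ℕ τ
      _ = ℵ₀ * τ := by rw [Cardinal.mk_nat, Cardinal.lift_aleph0, Cardinal.lift_uzero]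
      _ ≤ τ * τ := mul_le_mul' hτ le_rfl
      _ = τ := Cardinal.mul_eq_self hτ
  have hSwcard : #Sw = τ := by
    refine le_antisymm (hsmall _ fun n => (hcards n).1) ?_
    rw [← hPcard]
    refine Cardinal.mk_le_mk_of_subset ?_
    have h4 := subset_iUnion (fun n => (Q n).1) 0
    rw [hQ0] at h4
    exact h4
  have hSwcard' : #Sw' = τ := by
    refine le_antisymm (hsmall _ fun n => (hcards n).2) ?_
    rw [← hPcard]
    refine Cardinal.mk_le_mk_of_subset ?_
    refine subset_trans ?_ (subset_iUnion (fun n => (Q n).2) 0)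
    rw [hQ0]
    exact subset_union_left
  -- the key image identity
  have himage : h0 '' CS X Sw = CS Y Sw' := by
    apply Subset.antisymm
    · rintro _ ⟨f, hf, rfl⟩
      have h1 : f ∈ closure (⋃ n, CS X (Q n).1) := mem_closure_iUnion_CS _ hmon1 hf
      have h2 : h0 f ∈ closure (h0 '' ⋃ n, CS X (Q n).1) := by
        rw [← h0.image_closure]
        exact ⟨f, h1, rfl⟩
      refine closure_minimal ?_ (isClosed_CS Y Sw') h2
      rw [image_iUnion]
      exact iUnion_subset fun n => (hXY n).trans
        (CS_mono Y (subset_iUnion (fun n => (Q n).2) n))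
    · intro y hy
      have h1 : y ∈ closure (⋃ n, CS Y (Q n).2) := mem_closure_iUnion_CS _ hmon2 hy
      have h2 : h0.symm y ∈ closure (h0.symm '' ⋃ n, CS Y (Q n).2) := by
        rw [← h0.symm.image_closure]
        exact ⟨y, h1, rfl⟩
      have h3 : h0.symm y ∈ CS X Sw := by
        refine closure_minimal ?_ (isClosed_CS X Sw) h2
        rw [image_iUnion]
        exact iUnion_subset fun n => (hYX n).trans
          (CS_mono X (subset_iUnion (fun n => (Q n).1) (n + 1)))
      exact ⟨h0.symm y, h3, h0.apply_symm_apply y⟩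
  -- build the homeomorphisms
  obtain ⟨eq1⟩ : Nonempty (E ≃ ↥Sw) := by
    rw [← Cardinal.eq, hE, hSwcard]
  obtain ⟨eq2⟩ : Nonempty (E ≃ ↥Sw') := by
    rw [← Cardinal.eq, hE, hSwcard']
  have he1 : E ≃ₜ ↥Sw := ⟨eq1, continuous_of_discreteTopology, continuous_of_discreteTopology⟩
  have he2 : E ≃ₜ ↥Sw' := ⟨eq2, continuous_of_discreteTopology, continuous_of_discreteTopology⟩
  have hb1 : X × OnePoint E ≃ₜ X × OnePoint ↥Sw :=
    (Homeomorph.refl X).prodCongr he1.onePointCongr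
  have hb2 : Y × OnePoint E ≃ₜ Y × OnePoint ↥Sw' :=
    (Homeomorph.refl Y).prodCongr he2.onePointCongr
  exact ⟨(cpCongr hb1).trans ((homeoCS Sw).trans ((h0.image (CS X Sw)).trans
    ((Homeomorph.setCongr himage).trans ((homeoCS Sw').symm.trans (cpCongr hb2.symm)))))⟩
end
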